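/- arXiv:2305.09549 — 6 statements merged into one kernel-verified Lean document; each statement's English description precedes it below -/
import Mathlib

section
/- On a cycle, any preference profile with at most two classes of agents admits a stable arrangement. -/
open Finset

/-- The cycle graph (round table) on `Fin n`: seat `i` is adjacent to seat `i±1 (mod n)`. -/
def cycleG (n : ℕ) : SimpleGraph (Fin n) where
  Adj i j := i ≠ j ∧ (((i : ℕ) + 1) % n = (j : ℕ) ∨ ((j : ℕ) + 1) % n = (i : ℕ))
  symm := ⟨fun i j h => ⟨h.1.symm, h.2.symm⟩⟩
  loopless := ⟨fun i h => h.1 rfl⟩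

instance (n : ℕ) : DecidableRel (cycleG n).Adj := fun _ _ =>
  inferInstanceAs (Decidable (_ ∧ _))

/-- The path graph on `Fin n`: seat `i` is adjacent to seat `i±1`. -/
def pathG (n : ℕ) : SimpleGraph (Fin n) where
  Adj i j := i ≠ j ∧ ((i : ℕ) + 1 = (j : ℕ) ∨ (j : ℕ) + 1 = (i : ℕ))
  symm := ⟨fun i j h => ⟨h.1.symm, h.2.symm⟩⟩
  loopless := ⟨fun i h => h.1 rfl⟩

instance (n : ℕ) : DecidableRel (pathG n).Adj := fun _ _ =>
  inferInstanceAs (Decidable (_ ∧ _))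

/-- Utility of agent `a` under the arrangement `π` (a bijection from agents to seats):
the sum of `a`'s preferences towards the agents seated at neighboring seats. -/
def utility {A V : Type} [Fintype V] [DecidableEq V]
    (G : SimpleGraph V) [DecidableRel G.Adj]
    (p : A → A → ℝ) (π : A ≃ V) (a : A) : ℝ :=
  ∑ v ∈ G.neighborFinset (π a), p a (π.symm v)

/-- The arrangement obtained from `π` by swapping the seats of agents `a` and `b`. -/
def swapArr {A V : Type} [DecidableEq A] (π : A ≃ V) (a b : A) : A ≃ V :=
  (Equiv.swap a b).trans π

/-- Agent `a` envies agent `b`: `a`'s utility strictly increases when they swap seats. -/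
def envies {A V : Type} [DecidableEq A] [Fintype V] [DecidableEq V]
    (G : SimpleGraph V) [DecidableRel G.Adj]
    (p : A → A → ℝ) (π : A ≃ V) (a b : A) : Prop :=
  utility G p π a < utility G p (swapArr π a b) a

/-- `(a, b)` is a blocking pair: both agents strictly gain by exchanging seats. -/
def blocking {A V : Type} [DecidableEq A] [Fintype V] [DecidableEq V]
    (G : SimpleGraph V) [DecidableRel G.Adj]
    (p : A → A → ℝ) (π : A ≃ V) (a b : A) : Prop :=
  a ≠ b ∧ envies G p π a b ∧ envies G p π b a

/-- An arrangement is stable if it admits no blocking pair. -/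
def stable {A V : Type} [DecidableEq A] [Fintype V] [DecidableEq V]
    (G : SimpleGraph V) [DecidableRel G.Adj]
    (p : A → A → ℝ) (π : A ≃ V) : Prop :=
  ∀ a b, ¬ blocking G p π a b

/-- An arrangement is envy-free if no agent envies another. -/
def envyFree {A V : Type} [DecidableEq A] [Fintype V] [DecidableEq V]
    (G : SimpleGraph V) [DecidableRel G.Adj]
    (p : A → A → ℝ) (π : A ≃ V) : Prop :=
  ∀ a b, a ≠ b → ¬ envies G p π a b

/-- The profile `p` has (at most) `k` classes of pairwise indistinguishable agents. -/
def hasClasses {A : Type} (k : ℕ) (p : A → A → ℝ) : Prop :=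
  ∃ (c : A → Fin k) (q : Fin k → Fin k → ℝ),
    ∀ a b : A, a ≠ b → p a b = q (c a) (c b)

/-- The profile `p` is `k`-valued: all (off-diagonal) entries come from a set of at
most `k` reals. -/
def kValued {A : Type} (k : ℕ) (p : A → A → ℝ) : Prop :=
  ∃ Γ : Finset ℝ, Γ.card ≤ k ∧ ∀ a b : A, a ≠ b → p a b ∈ Γ

/-- Utilitarian social welfare: the sum of all agents' utilities. -/
def welfare {A V : Type} [Fintype A] [Fintype V] [DecidableEq V]
    (G : SimpleGraph V) [DecidableRel G.Adj]
    (p : A → A → ℝ) (π : A ≃ V) : ℝ :=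
  ∑ a : A, utility G p π a

/-! ### Auxiliary material for the proof -/

section AuxArith
variable {n : ℕ} [NeZero n]

lemma val_one3 (hn : 3 ≤ n) : ((1 : Fin n) : ℕ) = 1 := by
  obtain ⟨m, rfl⟩ : ∃ m, n = m + 3 := ⟨n - 3, by omega⟩
  exact Fin.val_one _

lemma val_add_one3 (hn : 3 ≤ n) (v : Fin n) :
    ((v + 1 : Fin n) : ℕ) = if (v : ℕ) + 1 = n then 0 else (v : ℕ) + 1 := by
  rw [Fin.val_add, val_one3 hn]
  split_ifs with h
  · rw [h, Nat.mod_self]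
  · exact Nat.mod_eq_of_lt (by have := v.isLt; omega)

lemma add_one_ne (hn : 3 ≤ n) (v : Fin n) : v + 1 ≠ v := by
  intro hc; have h := congrArg Fin.val hc
  rw [val_add_one3 hn] at h; have := v.isLt; split_ifs at h <;> omega

lemma add_two_ne (hn : 3 ≤ n) (v : Fin n) : v + 1 + 1 ≠ v := by
  intro hc; have h := congrArg Fin.val hc
  rw [val_add_one3 hn, val_add_one3 hn] at h; have := v.isLt; split_ifs at h <;> omega

lemma sub_one_ne (hn : 3 ≤ n) (v : Fin n) : v - 1 ≠ v := fun hc =>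
  add_one_ne hn (v - 1) (by rw [sub_add_cancel, hc])

lemma sub_ne_add (hn : 3 ≤ n) (v : Fin n) : v - 1 ≠ v + 1 := by
  intro hc
  have h2 : v = v + 1 + 1 := by rw [← hc, sub_add_cancel]
  exact add_two_ne hn v h2.symm

lemma adj_iff (hn : 3 ≤ n) (v w : Fin n) :
    (cycleG n).Adj v w ↔ (w = v + 1 ∨ w = v - 1) := by
  have hval : ∀ x y : Fin n, ((x : ℕ) + 1) % n = (y : ℕ) ↔ y = x + 1 := by
    intro x y
    have hm : ((x : ℕ) + 1) % n = if (x : ℕ) + 1 = n then 0 else (x : ℕ) + 1 := by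
      split_ifs with h
      · rw [h, Nat.mod_self]
      · exact Nat.mod_eq_of_lt (by have := x.isLt; omega)
    rw [Fin.ext_iff, val_add_one3 hn, hm]
    exact eq_comm
  constructor
  · rintro ⟨hne, h | h⟩
    · exact Or.inl ((hval v w).mp h)
    · refine Or.inr ?_
      have := (hval w v).mp h
      rw [this, add_sub_cancel_right]
  · rintro (h | h)
    · exact ⟨fun he => add_one_ne hn v (by rw [← h, ← he]), Or.inl ((hval v w).mpr h)⟩
    · refine ⟨fun he => sub_one_ne hn v (by rw [← h, ← he]), Or.inr ((hval w v).mpr ?_)⟩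
      rw [h, sub_add_cancel]

lemma nbhd (hn : 3 ≤ n) (v : Fin n) :
    (cycleG n).neighborFinset v = {v - 1, v + 1} := by
  ext w
  rw [SimpleGraph.mem_neighborFinset, adj_iff hn, Finset.mem_insert, Finset.mem_singleton]
  tauto

end AuxArith

noncomputable def Fq (r : Fin 2 → ℝ) (x y : Fin 2) : ℝ := if x = 0 then r y else 0

section AuxKey
variable {n : ℕ} [NeZero n]

lemma key (hn : 3 ≤ n) (r : Fin 2 → ℝ) (g g' : Fin n → Fin 2) (s t : Fin n)
    (hst : s ≠ t) (hs : g s = 0) (ht : g t = 1)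
    (hg' : ∀ v, g' v = if v = s then 1 else if v = t then 0 else g v) :
    ((∑ v : Fin n, (Fq r (g' v) (g' (v+1)) + Fq r (g' (v+1)) (g' v)))
      - ∑ v : Fin n, (Fq r (g v) (g (v+1)) + Fq r (g (v+1)) (g v)))
    = 2 * ((r (g' (t-1)) + r (g' (t+1))) - (r (g (s-1)) + r (g (s+1)))) := by
  classical
  have fin2 : ∀ x : Fin 2, x = 0 ∨ x = 1 := by decide
  have hrestrict :
      ((∑ v : Fin n, (Fq r (g' v) (g' (v+1)) + Fq r (g' (v+1)) (g' v)))
        - ∑ v : Fin n, (Fq r (g v) (g (v+1)) + Fq r (g (v+1)) (g v)))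
      = ∑ v ∈ ({s-1, s, t-1, t} : Finset (Fin n)),
          ((Fq r (g' v) (g' (v+1)) + Fq r (g' (v+1)) (g' v))
            - (Fq r (g v) (g (v+1)) + Fq r (g (v+1)) (g v))) := by
    rw [← Finset.sum_sub_distrib]
    refine (Finset.sum_subset (Finset.subset_univ _) ?_).symm
    intro v _ hv
    simp only [Finset.mem_insert, Finset.mem_singleton, not_or] at hv
    obtain ⟨h1, h2, h3, h4⟩ := hv
    have e1 : g' v = g v := by rw [hg', if_neg h2, if_neg h4]
    have e2 : g' (v+1) = g (v+1) := by
      rw [hg', if_neg, if_neg]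
      · intro hc; exact h3 (by rw [← hc, add_sub_cancel_right])
      · intro hc; exact h1 (by rw [← hc, add_sub_cancel_right])
    rw [e1, e2, sub_self]
  rw [hrestrict]
  by_cases hadj1 : t = s + 1
  · subst hadj1
    have da : s - 1 ≠ s := sub_one_ne hn s
    have db : s - 1 ≠ s + 1 := sub_ne_add hn s
    have dc : s + 1 ≠ s := add_one_ne hn s
    have hset : ({s-1, s, s+1-1, s+1} : Finset (Fin n)) = {s-1, s, s+1} := by
      rw [add_sub_cancel_right, Finset.insert_idem]
    rw [hset]
    rw [Finset.sum_insert (by simp [da, db]), Finset.sum_insert (by simp [dc.symm]),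
        Finset.sum_singleton]
    have v1 : g' (s-1) = g (s-1) := by rw [hg', if_neg da, if_neg db]
    have v2 : g' (s-1+1) = 1 := by rw [sub_add_cancel, hg', if_pos rfl]
    have v3 : g' s = 1 := by rw [hg', if_pos rfl]
    have v4 : g' (s+1) = 0 := by rw [hg', if_neg dc, if_pos rfl]
    have v5 : g' (s+1+1) = g (s+1+1) := by
      rw [hg', if_neg (add_two_ne hn s), if_neg (fun hc => add_one_ne hn (s+1) hc)]
    have v6 : g (s+1) = 1 := ht
    have v7 : g (s-1+1) = 0 := by rw [sub_add_cancel]; exact hs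
    have v8 : g' (s+1-1) = 1 := by rw [add_sub_cancel_right]; exact v3
    rw [v1, v2, v3, v4, v5, v6, v7, v8, hs]
    rcases fin2 (g (s-1)) with hA | hA <;> rcases fin2 (g (s+1+1)) with hD | hD <;>
      rw [hA, hD] <;> norm_num [Fq] <;> ring
  · by_cases hadj2 : t = s - 1
    · subst hadj2
      have da : s - 1 - 1 ≠ s - 1 := sub_one_ne hn (s-1)
      have db : s - 1 ≠ s := sub_one_ne hn s
      have dc : s - 1 - 1 ≠ s := by
        intro hc
        exact add_two_ne hn (s-1-1) (by rw [sub_add_cancel, sub_add_cancel]; exact hc.symm)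
      have hset : ({s-1, s, s-1-1, s-1} : Finset (Fin n)) = {s-1-1, s-1, s} := by
        ext x; simp only [Finset.mem_insert, Finset.mem_singleton]; tauto
      rw [hset]
      rw [Finset.sum_insert (by simp [da, dc]), Finset.sum_insert (by simp [db]),
          Finset.sum_singleton]
      have v1 : g' (s-1-1) = g (s-1-1) := by rw [hg', if_neg dc, if_neg da]
      have v2 : g' (s-1-1+1) = 0 := by
        rw [sub_add_cancel, hg', if_neg db, if_pos rfl]
      have v3 : g' (s-1) = 0 := by rw [hg', if_neg db, if_pos rfl]
      have v4 : g' (s-1+1) = 1 := by rw [sub_add_cancel, hg', if_pos rfl]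
      have v5 : g' s = 1 := by rw [hg', if_pos rfl]
      have v6 : g' (s+1) = g (s+1) := by
        rw [hg', if_neg (add_one_ne hn s), if_neg (fun hc => sub_ne_add hn s hc.symm)]
      have v7 : g (s-1-1+1) = 1 := by rw [sub_add_cancel]; exact ht
      have v8 : g (s-1+1) = 0 := by rw [sub_add_cancel]; exact hs
      rw [v1, v2, v3, v4, v5, v6, v7, v8, hs, ht]
      rcases fin2 (g (s-1-1)) with hC | hC <;> rcases fin2 (g (s+1)) with hB | hB <;>
        rw [hC, hB] <;> norm_num [Fq] <;> ring
    · have hts1 : t - 1 ≠ s := fun hc => hadj1 (by rw [← hc, sub_add_cancel])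
      have hts2 : t + 1 ≠ s := fun hc => hadj2 (by rw [← hc, add_sub_cancel_right])
      have d1 : s - 1 ≠ s := sub_one_ne hn s
      have d2 : s - 1 ≠ t - 1 := fun hc => hst (by rw [← sub_add_cancel s 1, hc, sub_add_cancel])
      have d3 : s - 1 ≠ t := fun hc => hadj2 hc.symm
      have d4 : s ≠ t - 1 := fun hc => hts1 hc.symm
      have d5 : t - 1 ≠ t := sub_one_ne hn t
      rw [Finset.sum_insert (by simp [d1, d2, d3]), Finset.sum_insert (by simp [hst, d4]),
          Finset.sum_insert (by simp [d5]), Finset.sum_singleton]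
      have v1 : g' (s-1) = g (s-1) := by rw [hg', if_neg d1, if_neg d3]
      have v2 : g' (s-1+1) = 1 := by rw [sub_add_cancel, hg', if_pos rfl]
      have v3 : g' s = 1 := by rw [hg', if_pos rfl]
      have v4 : g' (s+1) = g (s+1) := by
        rw [hg', if_neg (add_one_ne hn s), if_neg (fun hc => hadj1 (hc.symm))]
      have v5 : g' (t-1) = g (t-1) := by rw [hg', if_neg hts1, if_neg (sub_one_ne hn t)]
      have v6 : g' (t-1+1) = 0 := by rw [sub_add_cancel, hg', if_neg hst.symm, if_pos rfl]
      have v7 : g' t = 0 := by rw [hg', if_neg hst.symm, if_pos rfl]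
      have v8 : g' (t+1) = g (t+1) := by
        rw [hg', if_neg hts2, if_neg (add_one_ne hn t)]
      have w1 : g (s-1+1) = 0 := by rw [sub_add_cancel]; exact hs
      have w2 : g (t-1+1) = 1 := by rw [sub_add_cancel]; exact ht
      rw [v1, v2, v3, v4, v5, v6, v7, v8, w1, w2, hs, ht]
      rcases fin2 (g (s-1)) with hA | hA <;> rcases fin2 (g (s+1)) with hB | hB <;>
        rcases fin2 (g (t-1)) with hC | hC <;> rcases fin2 (g (t+1)) with hD | hD <;>
        rw [hA, hB, hC, hD] <;> norm_num [Fq] <;> ring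

end AuxKey

lemma swapArr_apply_fst {A V : Type} [DecidableEq A] (π : A ≃ V) (a b : A) :
    swapArr π a b a = π b := by
  simp [swapArr, Equiv.swap_apply_left]

lemma swapArr_symm_apply {A V : Type} [DecidableEq A] (π : A ≃ V) (a b : A) (v : V) :
    (swapArr π a b).symm v = Equiv.swap a b (π.symm v) := by
  simp [swapArr]

lemma util2 (p : Fin 2 → Fin 2 → ℝ) (ρ : Fin 2 ≃ Fin 2) (a b : Fin 2) (hab : a ≠ b) :
    utility (cycleG 2) p ρ a = p a b := by
  have hN : (cycleG 2).neighborFinset (ρ a) = {ρ b} := by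
    ext w
    rw [SimpleGraph.mem_neighborFinset, Finset.mem_singleton]
    have h2 : ∀ x y z : Fin 2, x ≠ y → ((cycleG 2).Adj x z ↔ z = y) := by decide
    exact h2 (ρ a) (ρ b) w (fun h => hab (ρ.injective h))
  rw [utility, hN, Finset.sum_singleton, Equiv.symm_apply_apply]

section AuxMain
variable {n : ℕ} [NeZero n]

lemma utility_eq (hn : 3 ≤ n) (p : Fin n → Fin n → ℝ) (π : Fin n ≃ Fin n) (a : Fin n) :
    utility (cycleG n) p π a = p a (π.symm (π a - 1)) + p a (π.symm (π a + 1)) := by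
  rw [utility, nbhd hn, Finset.sum_pair (sub_ne_add hn (π a))]

lemma utility_swap (hn : 3 ≤ n) (p : Fin n → Fin n → ℝ) (π : Fin n ≃ Fin n) (a b : Fin n) :
    utility (cycleG n) p (swapArr π a b) a
      = p a (Equiv.swap a b (π.symm (π b - 1))) + p a (Equiv.swap a b (π.symm (π b + 1))) := by
  rw [utility_eq hn, swapArr_apply_fst, swapArr_symm_apply, swapArr_symm_apply]

lemma symm_nbr_ne (hn : 3 ≤ n) (π : Fin n ≃ Fin n) (a : Fin n) :
    π.symm (π a - 1) ≠ a ∧ π.symm (π a + 1) ≠ a := by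
  constructor
  · intro hc
    apply sub_one_ne hn (π a)
    conv_rhs => rw [← hc, Equiv.apply_symm_apply]
  · intro hc
    apply add_one_ne hn (π a)
    conv_rhs => rw [← hc, Equiv.apply_symm_apply]

lemma main3 (hn : 3 ≤ n) (p : Fin n → Fin n → ℝ) (c : Fin n → Fin 2)
    (q : Fin 2 → Fin 2 → ℝ) (hp : ∀ a b : Fin n, a ≠ b → p a b = q (c a) (c b)) :
    ∃ π : Fin n ≃ Fin n, stable (cycleG n) p π := by
  classical
  have fin2 : ∀ x : Fin 2, x = 0 ∨ x = 1 := by decide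
  set r : Fin 2 → ℝ := q 0 with hr
  set Φ : (Fin n ≃ Fin n) → ℝ := fun π =>
    ∑ v : Fin n, (Fq r (c (π.symm v)) (c (π.symm (v+1)))
      + Fq r (c (π.symm (v+1))) (c (π.symm v))) with hΦ
  obtain ⟨π, hmax⟩ := Finite.exists_max Φ
  refine ⟨π, ?_⟩
  have hU : ∀ x : Fin n, utility (cycleG n) p π x
      = q (c x) (c (π.symm (π x - 1))) + q (c x) (c (π.symm (π x + 1))) := by
    intro x
    rw [utility_eq hn, hp _ _ (symm_nbr_ne hn π x).1.symm, hp _ _ (symm_nbr_ne hn π x).2.symm]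
  have hswapne : ∀ x y : Fin n, x ≠ y →
      (Equiv.swap x y (π.symm (π y - 1)) ≠ x ∧ Equiv.swap x y (π.symm (π y + 1)) ≠ x) := by
    intro x y _
    constructor
    · intro hc
      have h2 := congrArg (Equiv.swap x y) hc
      rw [Equiv.swap_apply_self, Equiv.swap_apply_left] at h2
      exact (symm_nbr_ne hn π y).1 h2
    · intro hc
      have h2 := congrArg (Equiv.swap x y) hc
      rw [Equiv.swap_apply_self, Equiv.swap_apply_left] at h2
      exact (symm_nbr_ne hn π y).2 h2
  -- a class-0 agent never envies a class-1 agent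
  have noenvy : ∀ a b : Fin n, a ≠ b → c a = 0 → c b = 1 →
      ¬ envies (cycleG n) p π a b := by
    intro a b hab ha hb henv
    have hst : π a ≠ π b := fun h => hab (π.injective h)
    have hgs : (fun v => c (π.symm v)) (π a) = 0 := by
      simp only [Equiv.symm_apply_apply]; exact ha
    have hgt : (fun v => c (π.symm v)) (π b) = 1 := by
      simp only [Equiv.symm_apply_apply]; exact hb
    have hg' : ∀ v, (fun v => c ((swapArr π a b).symm v)) v
        = if v = π a then 1 else if v = π b then 0 else (fun v => c (π.symm v)) v := by
      intro v
      simp only [swapArr_symm_apply]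
      by_cases h1 : v = π a
      · subst h1
        rw [if_pos rfl, Equiv.symm_apply_apply, Equiv.swap_apply_left]
        exact hb
      · rw [if_neg h1]
        by_cases h2 : v = π b
        · subst h2
          rw [if_pos rfl, Equiv.symm_apply_apply, Equiv.swap_apply_right]
          exact ha
        · rw [if_neg h2, Equiv.swap_apply_of_ne_of_ne]
          · intro hc; exact h1 (by rw [← hc, Equiv.apply_symm_apply])
          · intro hc; exact h2 (by rw [← hc, Equiv.apply_symm_apply])
    have hkey : Φ (swapArr π a b) - Φ π
        = 2 * ((r (c ((swapArr π a b).symm (π b - 1))) + r (c ((swapArr π a b).symm (π b + 1))))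
          - (r (c (π.symm (π a - 1))) + r (c (π.symm (π a + 1))))) := by
      have := key hn r (fun v => c (π.symm v)) (fun v => c ((swapArr π a b).symm v))
        (π a) (π b) hst hgs hgt hg'
      exact this
    have hu1 : utility (cycleG n) p π a
        = r (c (π.symm (π a - 1))) + r (c (π.symm (π a + 1))) := by
      rw [hU a, ha, ← hr]
    have hu2 : utility (cycleG n) p (swapArr π a b) a
        = r (c ((swapArr π a b).symm (π b - 1))) + r (c ((swapArr π a b).symm (π b + 1))) := by
      rw [utility_swap hn, hp _ _ (hswapne a b hab).1.symm, hp _ _ (hswapne a b hab).2.symm,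
        ha, ← hr, ← swapArr_symm_apply, ← swapArr_symm_apply]
    have henv' : utility (cycleG n) p π a < utility (cycleG n) p (swapArr π a b) a := henv
    rw [hu1, hu2] at henv'
    have := hmax (swapArr π a b)
    linarith
  -- same-class pairs never block
  have sameclass : ∀ a b : Fin n, a ≠ b → c a = c b → ¬ blocking (cycleG n) p π a b := by
    intro a b hab hcc hblock
    obtain ⟨-, hea, heb⟩ := hblock
    have hswapc : ∀ z : Fin n, c (Equiv.swap a b z) = c z := by
      intro z
      rcases eq_or_ne z a with rfl | h1
      · rw [Equiv.swap_apply_left]; exact hcc.symm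
      · rcases eq_or_ne z b with rfl | h2
        · rw [Equiv.swap_apply_right]; exact hcc
        · rw [Equiv.swap_apply_of_ne_of_ne h1 h2]
    have hswapc' : ∀ z : Fin n, c (Equiv.swap b a z) = c z := by
      intro z; rw [Equiv.swap_comm]; exact hswapc z
    have e1 : utility (cycleG n) p (swapArr π a b) a = utility (cycleG n) p π b := by
      rw [utility_swap hn, hp _ _ (hswapne a b hab).1.symm, hp _ _ (hswapne a b hab).2.symm,
        hswapc, hswapc, hcc, hU b]
    have e2 : utility (cycleG n) p (swapArr π b a) b = utility (cycleG n) p π a := by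
      rw [utility_swap hn, hp _ _ (hswapne b a hab.symm).1.symm,
        hp _ _ (hswapne b a hab.symm).2.symm, hswapc', hswapc', hcc.symm, hU a]
    have hea' : utility (cycleG n) p π a < utility (cycleG n) p (swapArr π a b) a := hea
    have heb' : utility (cycleG n) p π b < utility (cycleG n) p (swapArr π b a) b := heb
    rw [e1] at hea'
    rw [e2] at heb'
    linarith
  -- conclude
  rintro a b hblock
  obtain ⟨hab, hea, heb⟩ := hblock
  rcases fin2 (c a) with ha | ha <;> rcases fin2 (c b) with hb | hb
  · exact sameclass a b hab (ha.trans hb.symm) ⟨hab, hea, heb⟩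
  · exact noenvy a b hab ha hb hea
  · exact noenvy b a hab.symm hb ha heb
  · exact sameclass a b hab (ha.trans hb.symm) ⟨hab, hea, heb⟩

end AuxMain

/-- on a cycle, any profile with at most two agent classes admits a
stable arrangement. -/
theorem two_class_cycle_stable (n : ℕ) (p : Fin n → Fin n → ℝ)
    (hcl : hasClasses 2 p) :
    ∃ π : Fin n ≃ Fin n, stable (cycleG n) p π := by
  obtain ⟨c, q, hp⟩ := hcl
  rcases Nat.lt_or_ge n 3 with h | h
  · interval_cases n
    · exact ⟨Equiv.refl _, fun a _ _ => a.elim0⟩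
    · refine ⟨Equiv.refl _, ?_⟩
      rintro a b ⟨hab, -, -⟩
      exact hab (Subsingleton.elim a b)
    · refine ⟨Equiv.refl _, ?_⟩
      rintro a b ⟨hab, hea, -⟩
      have hea' : utility (cycleG 2) p (Equiv.refl _) a
          < utility (cycleG 2) p (swapArr (Equiv.refl _) a b) a := hea
      rw [util2 p _ a b hab, util2 p _ a b hab] at hea'
      exact lt_irrefl _ hea'
  · haveI : NeZero n := ⟨by omega⟩
    exact main3 h p c q hp
end

section
/- For every n ≥ 4, there exists a three-class, three-valued, non-negative preference profile on n agents such that every arrangement on a cycle of length n is unstable (i.e., every arrangement admits a blocking pair). -/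
open Finset

open scoped Fin.CommRing Fin.NatCast

namespace Unstable3

variable {n : ℕ}

lemma cast_ne [NeZero n] (hn : 4 ≤ n) {k : ℕ} (hk : 0 < k) (hkn : k < n) :
    ((k : ℕ) : Fin n) ≠ 0 := by
  intro h
  rw [Fin.natCast_eq_zero] at h
  exact absurd (Nat.le_of_dvd hk h) (by omega)

lemma one_ne [NeZero n] (hn : 4 ≤ n) : (1 : Fin n) ≠ 0 := by
  have := cast_ne hn (k := 1) (by omega) (by omega)
  simpa using this

lemma two_ne [NeZero n] (hn : 4 ≤ n) : (1 : Fin n) + 1 ≠ 0 := by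
  have := cast_ne hn (k := 2) (by omega) (by omega)
  rw [show ((2:ℕ) : Fin n) = 1 + 1 by push_cast; ring] at this
  exact this

lemma three_ne [NeZero n] (hn : 4 ≤ n) : (1 : Fin n) + 1 + 1 ≠ 0 := by
  have := cast_ne hn (k := 3) (by omega) (by omega)
  rw [show ((3:ℕ) : Fin n) = 1 + 1 + 1 by push_cast; ring] at this
  exact this

lemma d_ne [NeZero n] (hn : 4 ≤ n) {d : Fin n} (hd : d = 1 ∨ d = -1) : d ≠ 0 := by
  rcases hd with rfl | rfl
  · exact one_ne hn
  · exact neg_ne_zero.mpr (one_ne hn)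

lemma dd_ne [NeZero n] (hn : 4 ≤ n) {d : Fin n} (hd : d = 1 ∨ d = -1) : d + d ≠ 0 := by
  rcases hd with rfl | rfl
  · exact two_ne hn
  · have : (-1 : Fin n) + -1 = -(1 + 1) := by ring
    rw [this]; exact neg_ne_zero.mpr (two_ne hn)

lemma ddd_ne [NeZero n] (hn : 4 ≤ n) {d : Fin n} (hd : d = 1 ∨ d = -1) : d + d + d ≠ 0 := by
  rcases hd with rfl | rfl
  · exact three_ne hn
  · have : (-1 : Fin n) + -1 + -1 = -(1 + 1 + 1) := by ring
    rw [this]; exact neg_ne_zero.mpr (three_ne hn)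

lemma val_add_one [NeZero n] (hn : 4 ≤ n) (v : Fin n) :
    (v + 1).val = (v.val + 1) % n := by
  rw [Fin.val_add, Fin.val_one' n, Nat.mod_eq_of_lt (show 1 < n by omega)]

lemma adj_iff [NeZero n] (hn : 4 ≤ n) (v w : Fin n) :
    (cycleG n).Adj v w ↔ (w = v + 1 ∨ w = v - 1) := by
  have hv1 : (v + 1).val = (v.val + 1) % n := val_add_one hn v
  constructor
  · rintro ⟨hne, h | h⟩
    · left; apply Fin.ext; rw [hv1, h]
    · right
      have : v = w + 1 := by
        apply Fin.ext
        rw [val_add_one hn w, h]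
      rw [this]; ring
  · rintro (rfl | rfl)
    · refine ⟨?_, Or.inl hv1.symm⟩
      intro h
      exact one_ne hn (by linear_combination -h)
    · refine ⟨?_, Or.inr ?_⟩
      · intro h
        exact one_ne hn (by linear_combination h)
      · have : v - 1 + 1 = v := by ring
        rw [← val_add_one hn (v - 1), this]

lemma nbr [NeZero n] (hn : 4 ≤ n) {d : Fin n} (hd : d = 1 ∨ d = -1) (v : Fin n) :
    (cycleG n).neighborFinset v = {v + d, v - d} := by
  ext w
  rw [SimpleGraph.mem_neighborFinset, adj_iff hn, Finset.mem_insert, Finset.mem_singleton]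
  rcases hd with rfl | rfl
  · rfl
  · constructor
    · rintro (h | h)
      · right; rw [h]; ring
      · left; rw [h]; ring
    · rintro (h | h)
      · right; rw [h]; ring
      · left; rw [h]; ring

lemma util [NeZero n] (hn : 4 ≤ n) (p : Fin n → Fin n → ℝ) (π : Fin n ≃ Fin n)
    {d : Fin n} (hd : d = 1 ∨ d = -1) (a : Fin n) :
    utility (cycleG n) p π a = p a (π.symm (π a + d)) + p a (π.symm (π a - d)) := by
  rw [utility, nbr hn hd, Finset.sum_pair]
  intro h
  exact dd_ne hn hd (by linear_combination h)

lemma swapArr_apply (π : Fin n ≃ Fin n) (a b : Fin n) :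
    (swapArr π a b) a = π b := by
  simp [swapArr]

lemma swapArr_symm (π : Fin n ≃ Fin n) (a b v : Fin n) :
    (swapArr π a b).symm v = Equiv.swap a b (π.symm v) := by
  simp [swapArr]

lemma util_swap [NeZero n] (hn : 4 ≤ n) (p : Fin n → Fin n → ℝ) (π : Fin n ≃ Fin n)
    {d : Fin n} (hd : d = 1 ∨ d = -1) (a b : Fin n) :
    utility (cycleG n) p (swapArr π a b) a =
      p a (Equiv.swap a b (π.symm (π b + d))) + p a (Equiv.swap a b (π.symm (π b - d))) := by
  rw [util hn p (swapArr π a b) hd a, swapArr_apply, swapArr_symm, swapArr_symm]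

/-- The profile: 0 = Alice, 1 = Bob, others = Friends. -/
def pref (n : ℕ) [NeZero n] : Fin n → Fin n → ℝ := fun i j =>
  if i = 0 then (if j = 1 then 0 else 1)
  else if i = 1 then (if j = 0 then 1 else 0)
  else if j = 0 then 0 else if j = 1 then 2 else 1

lemma pref_alice_bob (n : ℕ) [NeZero n] : pref n 0 1 = 0 := by
  simp [pref]

lemma pref_alice (n : ℕ) [NeZero n] {j : Fin n} (hj : j ≠ 1) : pref n 0 j = 1 := by
  simp [pref, hj]

lemma pref_bob_alice (n : ℕ) [NeZero n] (h10 : (1 : Fin n) ≠ 0) : pref n 1 0 = 1 := by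
  simp [pref, h10]

lemma pref_bob (n : ℕ) [NeZero n] (h10 : (1 : Fin n) ≠ 0) {j : Fin n} (hj : j ≠ 0) :
    pref n 1 j = 0 := by
  simp [pref, h10, hj]

lemma pref_friend_alice (n : ℕ) [NeZero n] {i : Fin n} (hi0 : i ≠ 0) (hi1 : i ≠ 1) :
    pref n i 0 = 0 := by
  simp [pref, hi0, hi1]

lemma pref_friend_bob (n : ℕ) [NeZero n] (h10 : (1 : Fin n) ≠ 0) {i : Fin n}
    (hi0 : i ≠ 0) (hi1 : i ≠ 1) : pref n i 1 = 2 := by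
  simp [pref, hi0, hi1, h10]

lemma pref_friend (n : ℕ) [NeZero n] {i j : Fin n} (hi0 : i ≠ 0) (hi1 : i ≠ 1)
    (hj0 : j ≠ 0) (hj1 : j ≠ 1) : pref n i j = 1 := by
  simp [pref, hi0, hi1, hj0, hj1]

lemma pref_nonneg (n : ℕ) [NeZero n] (i j : Fin n) : 0 ≤ pref n i j := by
  unfold pref; split_ifs <;> norm_num

lemma caseA [NeZero n] (hn : 4 ≤ n) (π : Fin n ≃ Fin n) {d : Fin n} (hd : d = 1 ∨ d = -1)
    (hB : π.symm (π 0 + d) = 1) : ¬ stable (cycleG n) (pref n) π := by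
  have h01 : (0 : Fin n) ≠ 1 := (one_ne hn).symm
  intro hst
  set s := π 0 with hs
  set g := π.symm (s - d) with hgdef
  set x := π.symm (s - d - d) with hxdef
  have hpg : π g = s - d := π.apply_symm_apply _
  have hp1 : π 1 = s + d := by rw [← hB]; exact π.apply_symm_apply _
  have hsymm_s : π.symm s = 0 := π.symm_apply_apply 0
  have hg0 : g ≠ 0 := by
    intro h; apply_fun π at h
    rw [hpg, ← hs] at h
    exact d_ne hn hd (by linear_combination -h)
  have hg1 : g ≠ 1 := by
    intro h; apply_fun π at h
    rw [hpg, hp1] at h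
    exact dd_ne hn hd (by linear_combination -h)
  have hx0 : x ≠ 0 := by
    intro h; apply_fun π at h
    rw [π.apply_symm_apply, ← hs] at h
    exact dd_ne hn hd (by linear_combination -h)
  have hx1 : x ≠ 1 := by
    intro h; apply_fun π at h
    rw [π.apply_symm_apply, hp1] at h
    exact ddd_ne hn hd (by linear_combination -h)
  have hxg : x ≠ g := by
    intro h; apply_fun π at h
    rw [π.apply_symm_apply, hpg] at h
    exact d_ne hn hd (by linear_combination -h)
  apply hst 0 g
  refine ⟨Ne.symm hg0, ?_, ?_⟩
  · -- Alice envies g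
    rw [envies, util hn _ _ hd, util_swap hn _ _ hd]
    rw [← hs, hB, hpg]
    have e1 : s - d + d = s := by ring
    rw [e1, hsymm_s, ← hxdef, ← hgdef]
    rw [Equiv.swap_apply_left, Equiv.swap_apply_of_ne_of_ne hx0 hxg,
      pref_alice_bob, pref_alice n hg1, pref_alice n hx1]
    norm_num
  · -- g envies Alice
    rw [envies, util hn _ _ hd, util_swap hn _ _ hd]
    rw [hpg, ← hs]
    have e1 : s - d + d = s := by ring
    rw [e1, hsymm_s, hB, ← hxdef, ← hgdef]
    rw [Equiv.swap_apply_of_ne_of_ne (Ne.symm hg1) (Ne.symm h01), Equiv.swap_apply_left,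
      pref_friend_alice n hg0 hg1, pref_friend n hg0 hg1 hx0 hx1,
      pref_friend_bob n (Ne.symm h01) hg0 hg1]
    norm_num

lemma caseB [NeZero n] (hn : 4 ≤ n) (π : Fin n ≃ Fin n)
    (h1 : π.symm (π 0 + 1) ≠ 1) (h2 : π.symm (π 0 - 1) ≠ 1) :
    ¬ stable (cycleG n) (pref n) π := by
  have h01 : (0 : Fin n) ≠ 1 := (one_ne hn).symm
  have hd : (1 : Fin n) = 1 ∨ (1 : Fin n) = -1 := Or.inl rfl
  intro hst
  set s := π 0 with hs
  set t := π 1 with ht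
  set f := π.symm (s + 1) with hfdef
  have hpf : π f = s + 1 := π.apply_symm_apply _
  have hsymm_s : π.symm s = 0 := π.symm_apply_apply 0
  have hsymm_t : π.symm t = 1 := π.symm_apply_apply 1
  have hts : t ≠ s := by
    intro h; rw [hs, ht] at h; exact h01 (π.injective h).symm
  have hf0 : f ≠ 0 := by
    intro h; apply_fun π at h
    rw [hpf, ← hs] at h
    exact one_ne hn (by linear_combination h)
  have hf1 : f ≠ 1 := h1
  have hq1 : π.symm (t + 1) ≠ 0 := by
    intro h; apply_fun π at h
    rw [π.apply_symm_apply, ← hs] at h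
    have : s - 1 = t := by linear_combination -h
    exact h2 (by rw [this, hsymm_t])
  have hq2 : π.symm (t - 1) ≠ 0 := by
    intro h; apply_fun π at h
    rw [π.apply_symm_apply, ← hs] at h
    have : s + 1 = t := by linear_combination -h
    exact h1 (by rw [hfdef, this, hsymm_t])
  have hq1' : π.symm (t + 1) ≠ 1 := by
    intro h; apply_fun π at h
    rw [π.apply_symm_apply, ← ht] at h
    exact one_ne hn (by linear_combination h)
  have hq2' : π.symm (t - 1) ≠ 1 := by
    intro h; apply_fun π at h
    rw [π.apply_symm_apply, ← ht] at h
    exact one_ne hn (by linear_combination -h)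
  apply hst 1 f
  refine ⟨Ne.symm hf1, ?_, ?_⟩
  · -- Bob envies f
    rw [envies, util hn _ _ hd, util_swap hn _ _ hd]
    rw [← ht, hpf]
    have e1 : s + 1 - 1 = s := by ring
    rw [e1, hsymm_s]
    rw [Equiv.swap_apply_of_ne_of_ne h01 (Ne.symm hf0)]
    rw [pref_bob n (one_ne hn) hq1, pref_bob n (one_ne hn) hq2,
      pref_bob_alice n (one_ne hn)]
    have := pref_nonneg n 1 (Equiv.swap 1 f (π.symm (s + 1 + 1)))
    linarith
  · -- f envies Bob
    rw [envies, util hn _ _ hd, util_swap hn _ _ hd]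
    rw [hpf, ← ht]
    have e1 : s + 1 - 1 = s := by ring
    rw [e1, hsymm_s]
    rw [pref_friend_alice n hf0 hf1]
    by_cases hcase : t = s + 1 + 1
    · -- f is adjacent to Bob
      have ex : π.symm (s + 1 + 1) = 1 := by rw [← hcase, hsymm_t]
      rw [ex]
      have e2 : t - 1 = s + 1 := by rw [hcase]; ring
      rw [e2, ← hfdef, Equiv.swap_apply_left]
      have hy0 : π.symm (t + 1) ≠ f := by
        intro h; apply_fun π at h
        rw [π.apply_symm_apply, hpf, hcase] at h
        exact two_ne hn (by linear_combination h)
      rw [Equiv.swap_apply_of_ne_of_ne hy0 hq1',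
        pref_friend_bob n (one_ne hn) hf0 hf1, pref_friend n hf0 hf1 hq1 hq1']
      norm_num
    · -- f is not adjacent to Bob
      have hx1' : π.symm (s + 1 + 1) ≠ 1 := by
        intro h; apply_fun π at h
        rw [π.apply_symm_apply, ← ht] at h
        exact hcase h.symm
      have hx0' : π.symm (s + 1 + 1) ≠ 0 := by
        intro h; apply_fun π at h
        rw [π.apply_symm_apply, ← hs] at h
        exact two_ne hn (by linear_combination h)
      have hy1f : π.symm (t + 1) ≠ f := by
        intro h; apply_fun π at h
        rw [π.apply_symm_apply, hpf] at h
        exact hts (by linear_combination h)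
      have hy2f : π.symm (t - 1) ≠ f := by
        intro h; apply_fun π at h
        rw [π.apply_symm_apply, hpf] at h
        exact hcase (by linear_combination h)
      rw [Equiv.swap_apply_of_ne_of_ne hy1f hq1', Equiv.swap_apply_of_ne_of_ne hy2f hq2',
        pref_friend n hf0 hf1 hx0' hx1', pref_friend n hf0 hf1 hq1 hq1',
        pref_friend n hf0 hf1 hq2 hq2']
      norm_num

end Unstable3


/-- for every `n ≥ 4` there is a three-class three-valued non-negative
profile on `n` agents with no stable arrangement on the cycle. -/
theorem unstable_three_class_three_valued_cycle (n : ℕ) (hn : 4 ≤ n) :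
    ∃ p : Fin n → Fin n → ℝ,
      hasClasses 3 p ∧ kValued 3 p ∧ (∀ a b : Fin n, a ≠ b → 0 ≤ p a b) ∧
      ∀ π : Fin n ≃ Fin n, ¬ stable (cycleG n) p π := by
  haveI : NeZero n := ⟨by omega⟩
  have h01 : (0 : Fin n) ≠ 1 := (Unstable3.one_ne hn).symm
  refine ⟨Unstable3.pref n, ?_, ?_, ?_, ?_⟩
  · refine ⟨fun a => if a = 0 then 0 else if a = 1 then 1 else 2,
      fun i j => if i = 0 then (if j = 1 then 0 else 1)
        else if i = 1 then (if j = 0 then 1 else 0)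
        else if j = 0 then 0 else if j = 1 then 2 else 1, ?_⟩
    intro a b hab
    by_cases ha0 : a = 0 <;> by_cases ha1 : a = 1 <;>
      by_cases hb0 : b = 0 <;> by_cases hb1 : b = 1 <;>
      simp_all [Unstable3.pref]
  · refine ⟨{0, 1, 2}, ?_, ?_⟩
    · exact le_trans (Finset.card_insert_le _ _)
        (Nat.succ_le_succ (le_trans (Finset.card_insert_le _ _) (by simp)))
    · intro a b _
      unfold Unstable3.pref
      split_ifs <;> simp
  · intro a b _
    exact Unstable3.pref_nonneg n a b
  · intro π
    by_cases hc1 : π.symm (π 0 + 1) = 1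
    · exact Unstable3.caseA hn π (Or.inl rfl) hc1
    by_cases hc2 : π.symm (π 0 - 1) = 1
    · apply Unstable3.caseA hn π (Or.inr rfl)
      have : π 0 + -1 = π 0 - 1 := by ring
      rw [this]; exact hc2
    · exact Unstable3.caseB hn π hc1 hc2
end

section
/- For every n ≥ 12, there exists a three-class, three-valued, non-negative preference profile on n agents such that every arrangement on a path of length n is unstable. -/
open Finset

/-- The preference profile: agent 0 is Alice, agents 1,2,3 are Bobs, the rest Friends. -/
def pf (n : ℕ) (i j : Fin n) : ℝ :=
  if i.val = 0 then (if 4 ≤ j.val then 1 else 0)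
  else if i.val ≤ 3 then (if j.val = 0 then 1 else 0)
  else (if j.val = 0 then 0 else if j.val ≤ 3 then 3 else 1)

section pfLemmas
variable {n : ℕ} {i j : Fin n}

lemma pf_nonneg (i j : Fin n) : 0 ≤ pf n i j := by
  unfold pf; split_ifs <;> norm_num

lemma pf_A_F (hi : i.val = 0) (hj : 4 ≤ j.val) : pf n i j = 1 := by
  simp [pf, hi, hj]

lemma pf_A_nF (hi : i.val = 0) (hj : j.val ≤ 3) : pf n i j = 0 := by
  rw [pf, if_pos hi, if_neg (by omega)]

lemma pf_B_A (hi1 : 1 ≤ i.val) (hi2 : i.val ≤ 3) (hj : j.val = 0) : pf n i j = 1 := by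
  rw [pf, if_neg (by omega), if_pos hi2, if_pos hj]

lemma pf_B_nA (hi1 : 1 ≤ i.val) (hi2 : i.val ≤ 3) (hj : j.val ≠ 0) : pf n i j = 0 := by
  rw [pf, if_neg (by omega), if_pos hi2, if_neg hj]

lemma pf_F_A (hi : 4 ≤ i.val) (hj : j.val = 0) : pf n i j = 0 := by
  rw [pf, if_neg (by omega), if_neg (by omega), if_pos hj]

lemma pf_F_B (hi : 4 ≤ i.val) (hj1 : 1 ≤ j.val) (hj2 : j.val ≤ 3) : pf n i j = 3 := by
  rw [pf, if_neg (by omega), if_neg (by omega), if_neg (by omega), if_pos hj2]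

lemma pf_F_F (hi : 4 ≤ i.val) (hj : 4 ≤ j.val) : pf n i j = 1 := by
  rw [pf, if_neg (by omega), if_neg (by omega), if_neg (by omega), if_neg (by omega)]

lemma pf_F_ge1 (hi : 4 ≤ i.val) (hj : j.val ≠ 0) : 1 ≤ pf n i j := by
  rcases le_or_gt j.val 3 with h | h
  · rw [pf_F_B hi (by omega) h]; norm_num
  · rw [pf_F_F hi (by omega)]

end pfLemmas

section graphLemmas
variable {n : ℕ}

lemma path_adj {v w : Fin n} :
    (pathG n).Adj v w ↔ v.val ≠ w.val ∧ (v.val + 1 = w.val ∨ w.val + 1 = v.val) := by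
  constructor
  · rintro ⟨h1, h2⟩; exact ⟨fun h => h1 (Fin.ext h), h2⟩
  · rintro ⟨h1, h2⟩; exact ⟨fun h => h1 (congrArg Fin.val h), h2⟩

lemma mem_N {v w : Fin n} :
    w ∈ (pathG n).neighborFinset v ↔
      v.val ≠ w.val ∧ (v.val + 1 = w.val ∨ w.val + 1 = v.val) := by
  rw [SimpleGraph.mem_neighborFinset, path_adj]

lemma N_zero (hn : 2 ≤ n) {v : Fin n} (hv : v.val = 0) :
    (pathG n).neighborFinset v = {⟨1, by omega⟩} := by
  ext w
  rw [mem_N, Finset.mem_singleton, Fin.ext_iff]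
  have := w.isLt
  simp only []
  omega

lemma N_last (hn : 2 ≤ n) {v : Fin n} (hv : v.val = n - 1) :
    (pathG n).neighborFinset v = {⟨n - 2, by omega⟩} := by
  ext w
  rw [mem_N, Finset.mem_singleton, Fin.ext_iff]
  have := w.isLt
  simp only []
  omega

lemma N_mid (hn : 2 ≤ n) {v : Fin n} (h1 : 1 ≤ v.val) (h2 : v.val ≤ n - 2) :
    (pathG n).neighborFinset v = {⟨v.val - 1, by omega⟩, ⟨v.val + 1, by omega⟩} := by
  ext w
  rw [mem_N, Finset.mem_insert, Finset.mem_singleton, Fin.ext_iff, Fin.ext_iff]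
  have := w.isLt
  simp only []
  omega

lemma no_triangle {x y z : Fin n} (h1 : (pathG n).Adj x y) (h2 : (pathG n).Adj y z)
    (h3 : (pathG n).Adj x z) : False := by
  rw [path_adj] at h1 h2 h3
  omega

lemma exists_nbr (hn : 2 ≤ n) (s : Fin n) : ∃ v, v ∈ (pathG n).neighborFinset s := by
  rcases Nat.eq_zero_or_pos s.val with h | h
  · exact ⟨⟨1, by omega⟩, by rw [mem_N]; simp only []; omega⟩
  · exact ⟨⟨s.val - 1, by omega⟩, by rw [mem_N]; have := s.isLt; simp only []; omega⟩

end graphLemmas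

section utilLemmas
variable {n : ℕ}

lemma utility_eq_s4 (π : Fin n ≃ Fin n) (x : Fin n) :
    utility (pathG n) (pf n) π x
      = ∑ v ∈ (pathG n).neighborFinset (π x), pf n x (π.symm v) := rfl

lemma utility_swap_s4 (π : Fin n ≃ Fin n) (a b : Fin n) :
    utility (pathG n) (pf n) (swapArr π a b) a
      = ∑ v ∈ (pathG n).neighborFinset (π b), pf n a (Equiv.swap a b (π.symm v)) := by
  unfold utility swapArr
  rw [show ((Equiv.swap a b).trans π) a = π b from by
    simp [Equiv.trans_apply, Equiv.swap_apply_left]]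
  exact Finset.sum_congr rfl fun v _ => by simp [Equiv.symm_trans_apply]

lemma symm_ne_exact {π : Fin n ≃ Fin n} {v : Fin n} {x : Fin n} (h : v ≠ π x) :
    π.symm v ≠ x := fun hc => h (by rw [← hc, Equiv.apply_symm_apply])

end utilLemmas
section helperLemmas
variable {n : ℕ}

lemma symm_ne {π : Fin n ≃ Fin n} {v x : Fin n} (h : v ≠ π x) : π.symm v ≠ x :=
  fun hc => h (by rw [← hc, Equiv.apply_symm_apply])

lemma occ_ne_zero {π : Fin n ≃ Fin n} {A0 v : Fin n} (hA0 : A0.val = 0)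
    (h : v ≠ π A0) : (π.symm v).val ≠ 0 := by
  intro h0
  exact symm_ne h (Fin.ext (by rw [h0, hA0]))

/-- any agent whose seat differs from Alice's and all three Bobs' seats is a Friend -/
lemma friend_of_ne (π : Fin n ≃ Fin n) {A0 b1 b2 b3 v : Fin n} (hA0 : A0.val = 0)
    (hb1 : 1 ≤ b1.val) (hb1' : b1.val ≤ 3) (hb2 : 1 ≤ b2.val) (hb2' : b2.val ≤ 3)
    (hb3 : 1 ≤ b3.val) (hb3' : b3.val ≤ 3)
    (h12 : b1 ≠ b2) (h13 : b1 ≠ b3) (h23 : b2 ≠ b3)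
    (hva : v ≠ π A0) (hv1 : v ≠ π b1) (hv2 : v ≠ π b2) (hv3 : v ≠ π b3) :
    4 ≤ (π.symm v).val := by
  have e12 : b1.val ≠ b2.val := fun h => h12 (Fin.ext h)
  have e13 : b1.val ≠ b3.val := fun h => h13 (Fin.ext h)
  have e23 : b2.val ≠ b3.val := fun h => h23 (Fin.ext h)
  have f0 : (π.symm v).val ≠ 0 := occ_ne_zero hA0 hva
  have f1 : (π.symm v).val ≠ b1.val := fun h => symm_ne hv1 (Fin.ext h)
  have f2 : (π.symm v).val ≠ b2.val := fun h => symm_ne hv2 (Fin.ext h)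
  have f3 : (π.symm v).val ≠ b3.val := fun h => symm_ne hv3 (Fin.ext h)
  omega

lemma exists_nonadj_bob (hn : 12 ≤ n) (π : Fin n ≃ Fin n) {A0 : Fin n} (hA0 : A0.val = 0) :
    ∃ β : Fin n, 1 ≤ β.val ∧ β.val ≤ 3 ∧ ¬ (pathG n).Adj (π β) (π A0) := by
  by_contra h
  push_neg at h
  have h1 := h ⟨1, by omega⟩ (by simp) (by simp)
  have h2 := h ⟨2, by omega⟩ (by simp) (by simp)
  have h3 := h ⟨3, by omega⟩ (by simp) (by simp)
  rw [path_adj] at h1 h2 h3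
  have hkey : (π ⟨1, by omega⟩).val = (π ⟨2, by omega⟩).val ∨
      (π ⟨1, by omega⟩).val = (π ⟨3, by omega⟩).val ∨
      (π ⟨2, by omega⟩).val = (π ⟨3, by omega⟩).val := by omega
  rcases hkey with hk | hk | hk <;>
  · have := π.injective (Fin.ext hk)
    simp [Fin.ext_iff] at this

lemma ph (hn : 12 ≤ n) (bad : Finset ℕ) (hb : bad.card ≤ 9) :
    ∃ c : ℕ, 1 ≤ c ∧ c ≤ n - 2 ∧ c ∉ bad := by
  by_contra h
  push_neg at h
  have hsub : Finset.Icc 1 (n - 2) ⊆ bad := by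
    intro c hc
    rw [Finset.mem_Icc] at hc
    exact h c hc.1 hc.2
  have := Finset.card_le_card hsub
  rw [Nat.card_Icc] at this
  omega

lemma rev_adj {v w : Fin n} :
    (pathG n).Adj (Fin.rev v) (Fin.rev w) ↔ (pathG n).Adj v w := by
  rw [path_adj, path_adj, Fin.val_rev, Fin.val_rev]
  have := v.isLt
  have := w.isLt
  omega

lemma N_rev (s : Fin n) :
    (pathG n).neighborFinset (Fin.rev s) = ((pathG n).neighborFinset s).image Fin.rev := by
  ext w
  constructor
  · intro hw
    rw [SimpleGraph.mem_neighborFinset] at hw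
    refine Finset.mem_image.2 ⟨Fin.rev w, ?_, Fin.rev_rev w⟩
    rw [SimpleGraph.mem_neighborFinset]
    exact rev_adj.mp (by rwa [Fin.rev_rev])
  · intro hw
    obtain ⟨v, hv, rfl⟩ := Finset.mem_image.1 hw
    rw [SimpleGraph.mem_neighborFinset] at hv ⊢
    exact rev_adj.mpr hv

lemma trans_rev_symm (π : Fin n ≃ Fin n) (v : Fin n) :
    (π.trans (Fin.revPerm)).symm v = π.symm (Fin.rev v) := by
  simp [Equiv.symm_trans_apply]

lemma utility_rev (π : Fin n ≃ Fin n) (x : Fin n) :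
    utility (pathG n) (pf n) (π.trans Fin.revPerm) x = utility (pathG n) (pf n) π x := by
  rw [utility_eq_s4, utility_eq_s4]
  have h1 : (π.trans Fin.revPerm) x = Fin.rev (π x) := rfl
  rw [h1, N_rev, Finset.sum_image (fun a _ b _ h => Fin.rev_injective h)]
  exact Finset.sum_congr rfl fun v _ => by rw [trans_rev_symm, Fin.rev_rev]

lemma swapArr_trans (π : Fin n ≃ Fin n) (a b : Fin n) (e : Fin n ≃ Fin n) :
    swapArr (π.trans e) a b = (swapArr π a b).trans e := by
  ext x; rfl

lemma blocking_rev (π : Fin n ≃ Fin n) {x y : Fin n}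
    (h : blocking (pathG n) (pf n) (π.trans Fin.revPerm) x y) :
    blocking (pathG n) (pf n) π x y := by
  obtain ⟨hne, h1, h2⟩ := h
  unfold envies at h1 h2
  rw [utility_rev, swapArr_trans, utility_rev] at h1 h2
  exact ⟨hne, h1, h2⟩

end helperLemmas
section nprime
variable {n : ℕ}

lemma N_zero' {v o : Fin n} (hv : v.val = 0) (ho : o.val = 1) :
    (pathG n).neighborFinset v = {o} := by
  ext w
  rw [mem_N, Finset.mem_singleton, Fin.ext_iff]
  have := w.isLt
  omega

lemma N_last' {v o : Fin n} (hv : v.val = n - 1) (ho : o.val + 1 = n - 1)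
    (hn : 2 ≤ n) :
    (pathG n).neighborFinset v = {o} := by
  ext w
  rw [mem_N, Finset.mem_singleton, Fin.ext_iff]
  have := w.isLt
  have := o.isLt
  omega

lemma N_mid' {v l r : Fin n} (h1 : 1 ≤ v.val) (h2 : v.val ≤ n - 2)
    (hl : l.val + 1 = v.val) (hr : r.val = v.val + 1) :
    (pathG n).neighborFinset v = {l, r} := by
  ext w
  rw [mem_N, Finset.mem_insert, Finset.mem_singleton, Fin.ext_iff, Fin.ext_iff]
  have := w.isLt
  have := v.isLt
  omega

lemma seat_ne {v w : Fin n} (h : v.val ≠ w.val) : v ≠ w :=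
  fun hc => h (congrArg Fin.val hc)

end nprime
section blockLemmas
variable {n : ℕ}

lemma swap_occ_ne_zero {π : Fin n ≃ Fin n} {A0 x β v : Fin n} (hA0 : A0.val = 0)
    (hx : x.val ≠ 0) (hβ : β.val ≠ 0) (hvA : v ≠ π A0) :
    (Equiv.swap x β (π.symm v)).val ≠ 0 := by
  rcases eq_or_ne (π.symm v) x with h | h
  · rw [h, Equiv.swap_apply_left]; exact hβ
  rcases eq_or_ne (π.symm v) β with h2 | h2
  · rw [h2, Equiv.swap_apply_right]; exact hx
  · rw [Equiv.swap_apply_of_ne_of_ne h h2]; exact occ_ne_zero hA0 hvA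

lemma bob_envies (π : Fin n ≃ Fin n) {A0 β x : Fin n}
    (hA0 : A0.val = 0) (hβ1 : 1 ≤ β.val) (hβ2 : β.val ≤ 3)
    (hnadj : ¬ (pathG n).Adj (π β) (π A0))
    (hadj : (pathG n).Adj (π x) (π A0))
    (hx0 : x.val ≠ 0) (hxβ : x ≠ β) :
    envies (pathG n) (pf n) π β x := by
  have hold : utility (pathG n) (pf n) π β = 0 := by
    rw [utility_eq_s4]
    apply Finset.sum_eq_zero
    intro v hv
    rw [SimpleGraph.mem_neighborFinset] at hv
    have hvne : v ≠ π A0 := fun h => hnadj (h ▸ hv)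
    exact pf_B_nA hβ1 hβ2 (occ_ne_zero hA0 hvne)
  have hmem : π A0 ∈ (pathG n).neighborFinset (π x) := by
    rw [SimpleGraph.mem_neighborFinset]; exact hadj
  have hterm : pf n β (Equiv.swap β x (π.symm (π A0))) = 1 := by
    rw [Equiv.symm_apply_apply]
    rw [Equiv.swap_apply_of_ne_of_ne
      (fun h => by rw [h] at hA0; omega)
      (fun h => hx0 (by rw [← h, hA0]))]
    exact pf_B_A hβ1 hβ2 hA0
  unfold envies
  rw [hold, utility_swap_s4]
  calc (0:ℝ) < 1 := one_pos
    _ = pf n β (Equiv.swap β x (π.symm (π A0))) := hterm.symm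
    _ ≤ _ := Finset.single_le_sum (f := fun v => pf n β (Equiv.swap β x (π.symm v)))
        (fun i _ => pf_nonneg _ _) hmem

/-- Case 1a: a Friend at an endpoint seat adjacent to Alice, with a Bob not adjacent
to Alice: they form a blocking pair. -/
lemma case1a (hn : 12 ≤ n) (π : Fin n ≃ Fin n) {A0 β t : Fin n}
    (hA0 : A0.val = 0) (hβ1 : 1 ≤ β.val) (hβ2 : β.val ≤ 3)
    (hnadj : ¬ (pathG n).Adj (π β) (π A0))
    (hNt : (pathG n).neighborFinset t = {π A0})
    (hF : 4 ≤ (π.symm t).val) :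
    blocking (pathG n) (pf n) π (π.symm t) β := by
  have hadj_t : (pathG n).Adj t (π A0) := by
    rw [← SimpleGraph.mem_neighborFinset, hNt]; exact Finset.mem_singleton_self _
  have hne : π.symm t ≠ β := fun h => by
    have : (π.symm t).val = β.val := congrArg Fin.val h; omega
  refine ⟨hne, ?_, ?_⟩
  · unfold envies
    have hold : utility (pathG n) (pf n) π (π.symm t) = 0 := by
      rw [utility_eq_s4, Equiv.apply_symm_apply, hNt, Finset.sum_singleton]
      exact pf_F_A hF (by rw [Equiv.symm_apply_apply]; exact hA0)
    rw [hold, utility_swap_s4]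
    obtain ⟨v0, hv0⟩ := exists_nbr (by omega) (π β)
    have hv0adj : (pathG n).Adj (π β) v0 := (SimpleGraph.mem_neighborFinset _ _ _).1 hv0
    have hv0a : v0 ≠ π A0 := fun h => hnadj (h ▸ hv0adj)
    calc (0:ℝ) < 1 := one_pos
      _ ≤ pf n (π.symm t) (Equiv.swap (π.symm t) β (π.symm v0)) :=
          pf_F_ge1 hF (swap_occ_ne_zero hA0 (by omega) (by omega) hv0a)
      _ ≤ _ := Finset.single_le_sum
          (f := fun v => pf n (π.symm t) (Equiv.swap (π.symm t) β (π.symm v)))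
          (fun i _ => pf_nonneg _ _) hv0
  · exact bob_envies π hA0 hβ1 hβ2 hnadj
      (by rw [Equiv.apply_symm_apply]; exact hadj_t) (by omega) hne

/-- Case 1b-i. -/
lemma caseBFB (hn : 12 ≤ n) (π : Fin n ≃ Fin n) {A0 t u w : Fin n} (hA0 : A0.val = 0)
    (hNt : (pathG n).neighborFinset t = {π A0, u})
    (hNu : (pathG n).neighborFinset u = {t, w}) (htw : t ≠ w)
    (hF : 4 ≤ (π.symm t).val)
    (hXb1 : 1 ≤ (π.symm u).val) (hXb2 : (π.symm u).val ≤ 3) :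
    blocking (pathG n) (pf n) π (π.symm t) (π.symm u) := by
  have hadj_ta : (pathG n).Adj t (π A0) := by
    rw [← SimpleGraph.mem_neighborFinset, hNt]; exact Finset.mem_insert_self _ _
  have hadj_tu : (pathG n).Adj t u := by
    rw [← SimpleGraph.mem_neighborFinset, hNt]
    exact Finset.mem_insert_of_mem (Finset.mem_singleton_self _)
  have hadj_uw : (pathG n).Adj u w := by
    rw [← SimpleGraph.mem_neighborFinset, hNu]
    exact Finset.mem_insert_of_mem (Finset.mem_singleton_self _)
  have hwa : w ≠ π A0 := fun h => no_triangle hadj_tu (h ▸ hadj_uw) hadj_ta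
  have hau : π A0 ≠ u := by
    intro h
    have : (π.symm u).val = 0 := by rw [← h, Equiv.symm_apply_apply, hA0]
    omega
  have hwne_t : π.symm w ≠ π.symm t := fun h => htw (π.symm.injective h).symm
  have hwne_u : π.symm w ≠ π.symm u := fun h => hadj_uw.ne (π.symm.injective h).symm
  have hA0nt : A0 ≠ π.symm t := fun h => by
    have : A0.val = (π.symm t).val := congrArg Fin.val h; omega
  have hA0nu : A0 ≠ π.symm u := fun h => by
    have : A0.val = (π.symm u).val := congrArg Fin.val h; omega
  have hne : π.symm t ≠ π.symm u := fun h => by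
    have : (π.symm t).val = (π.symm u).val := congrArg Fin.val h; omega
  refine ⟨hne, ?_, ?_⟩
  · -- Friend envies Bob
    unfold envies
    have hold : utility (pathG n) (pf n) π (π.symm t) = 3 := by
      rw [utility_eq_s4, Equiv.apply_symm_apply, hNt, Finset.sum_pair hau,
        Equiv.symm_apply_apply, pf_F_A hF hA0, pf_F_B hF hXb1 hXb2]
      norm_num
    rw [hold, utility_swap_s4, Equiv.apply_symm_apply, hNu, Finset.sum_pair htw,
      Equiv.swap_apply_left, Equiv.swap_apply_of_ne_of_ne hwne_t hwne_u,
      pf_F_B hF hXb1 hXb2]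
    have h2 : 1 ≤ pf n (π.symm t) (π.symm w) :=
      pf_F_ge1 hF (occ_ne_zero hA0 hwa)
    linarith
  · -- Bob envies Friend
    unfold envies
    have hold : utility (pathG n) (pf n) π (π.symm u) = 0 := by
      rw [utility_eq_s4, Equiv.apply_symm_apply, hNu, Finset.sum_pair htw,
        pf_B_nA hXb1 hXb2 (by omega), pf_B_nA hXb1 hXb2 (occ_ne_zero hA0 hwa)]
      norm_num
    rw [hold, utility_swap_s4, Equiv.apply_symm_apply, hNt, Finset.sum_pair hau,
      Equiv.symm_apply_apply, Equiv.swap_apply_of_ne_of_ne hA0nu hA0nt,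
      Equiv.swap_apply_left, pf_B_A hXb1 hXb2 hA0, pf_B_nA hXb1 hXb2 (by omega)]
    norm_num

/-- Case 1c: Friend next to Alice with a Friend behind, and a "strong" non-adjacent Bob. -/
lemma case1c (hn : 12 ≤ n) (π : Fin n ≃ Fin n) {A0 β t u : Fin n} (hA0 : A0.val = 0)
    (hβ1 : 1 ≤ β.val) (hβ2 : β.val ≤ 3)
    (hnadj : ¬ (pathG n).Adj (π β) (π A0))
    (hNt : (pathG n).neighborFinset t = {π A0, u}) (hau : π A0 ≠ u)
    (hF : 4 ≤ (π.symm t).val) (hFu : 4 ≤ (π.symm u).val)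
    (hstrong : (∃ v1 v2 : Fin n, v1 ≠ v2 ∧ (pathG n).neighborFinset (π β) = {v1, v2}) ∨
               (∃ e, (pathG n).neighborFinset (π β) = {e} ∧
                 1 ≤ (π.symm e).val ∧ (π.symm e).val ≤ 3)) :
    blocking (pathG n) (pf n) π (π.symm t) β := by
  have hadj_ta : (pathG n).Adj t (π A0) := by
    rw [← SimpleGraph.mem_neighborFinset, hNt]; exact Finset.mem_insert_self _ _
  have hne : π.symm t ≠ β := fun h => by
    have : (π.symm t).val = β.val := congrArg Fin.val h; omega
  refine ⟨hne, ?_, ?_⟩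
  · unfold envies
    have hold : utility (pathG n) (pf n) π (π.symm t) = 1 := by
      rw [utility_eq_s4, Equiv.apply_symm_apply, hNt, Finset.sum_pair hau,
        Equiv.symm_apply_apply, pf_F_A hF hA0, pf_F_F hF hFu]
      norm_num
    rw [hold, utility_swap_s4]
    rcases hstrong with ⟨v1, v2, hv12, hN⟩ | ⟨e, hN, he1, he2⟩
    · rw [hN, Finset.sum_pair hv12]
      have hv1m : v1 ∈ (pathG n).neighborFinset (π β) := by
        rw [hN]; exact Finset.mem_insert_self _ _
      have hv2m : v2 ∈ (pathG n).neighborFinset (π β) := by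
        rw [hN]; exact Finset.mem_insert_of_mem (Finset.mem_singleton_self _)
      have hv1a : v1 ≠ π A0 := fun h =>
        hnadj (h ▸ (SimpleGraph.mem_neighborFinset _ _ _).1 hv1m)
      have hv2a : v2 ≠ π A0 := fun h =>
        hnadj (h ▸ (SimpleGraph.mem_neighborFinset _ _ _).1 hv2m)
      have g1 : 1 ≤ pf n (π.symm t) (Equiv.swap (π.symm t) β (π.symm v1)) :=
        pf_F_ge1 hF (swap_occ_ne_zero hA0 (by omega) (by omega) hv1a)
      have g2 : 1 ≤ pf n (π.symm t) (Equiv.swap (π.symm t) β (π.symm v2)) :=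
        pf_F_ge1 hF (swap_occ_ne_zero hA0 (by omega) (by omega) hv2a)
      linarith
    · rw [hN, Finset.sum_singleton]
      have hem : e ∈ (pathG n).neighborFinset (π β) := by
        rw [hN]; exact Finset.mem_singleton_self _
      have headj : (pathG n).Adj (π β) e := (SimpleGraph.mem_neighborFinset _ _ _).1 hem
      have he_ne1 : π.symm e ≠ π.symm t := fun h => by
        have : (π.symm e).val = (π.symm t).val := congrArg Fin.val h; omega
      have he_ne2 : π.symm e ≠ β := symm_ne (headj.ne).symm
      rw [Equiv.swap_apply_of_ne_of_ne he_ne1 he_ne2, pf_F_B hF he1 he2]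
      norm_num
  · exact bob_envies π hA0 hβ1 hβ2 hnadj
      (by rw [Equiv.apply_symm_apply]; exact hadj_ta) (by omega) hne

/-- Alice blocks with a Friend having two Friend neighbours, when Alice has a Friend
neighbour (in front of a Bob) and a Bob neighbour. -/
lemma aliceFriend_mixed (π : Fin n ≃ Fin n) {A0 c l r t t' : Fin n} (hA0 : A0.val = 0)
    (hNc : (pathG n).neighborFinset c = {l, r}) (hlr : l ≠ r)
    (hFc : 4 ≤ (π.symm c).val) (hFl : 4 ≤ (π.symm l).val) (hFr : 4 ≤ (π.symm r).val)
    (hNa : (pathG n).neighborFinset (π A0) = {t, t'}) (htt' : t ≠ t')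
    (hFt : 4 ≤ (π.symm t).val)
    (hBt'1 : 1 ≤ (π.symm t').val) (hBt'2 : (π.symm t').val ≤ 3)
    (htc : t ≠ c) :
    blocking (pathG n) (pf n) π A0 (π.symm c) := by
  have hne : A0 ≠ π.symm c := fun h => by
    have : A0.val = (π.symm c).val := congrArg Fin.val h; omega
  have hlc : π.symm l ≠ π.symm c := fun h => by
    have hadj : (pathG n).Adj c l := by
      rw [← SimpleGraph.mem_neighborFinset, hNc]; exact Finset.mem_insert_self _ _
    exact hadj.ne.symm (π.symm.injective h)
  have hrc : π.symm r ≠ π.symm c := fun h => by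
    have hadj : (pathG n).Adj c r := by
      rw [← SimpleGraph.mem_neighborFinset, hNc]
      exact Finset.mem_insert_of_mem (Finset.mem_singleton_self _)
    exact hadj.ne.symm (π.symm.injective h)
  have hlA : π.symm l ≠ A0 := fun h => by
    have : (π.symm l).val = A0.val := congrArg Fin.val h; omega
  have hrA : π.symm r ≠ A0 := fun h => by
    have : (π.symm r).val = A0.val := congrArg Fin.val h; omega
  have hAold : utility (pathG n) (pf n) π A0 = 1 := by
    rw [utility_eq_s4, hNa, Finset.sum_pair htt',
      pf_A_F hA0 hFt, pf_A_nF hA0 (by omega)]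
    norm_num
  have hGold : utility (pathG n) (pf n) π (π.symm c) = 2 := by
    rw [utility_eq_s4, Equiv.apply_symm_apply, hNc, Finset.sum_pair hlr,
      pf_F_F hFc hFl, pf_F_F hFc hFr]
    norm_num
  refine ⟨hne, ?_, ?_⟩
  · unfold envies
    rw [hAold, utility_swap_s4, Equiv.apply_symm_apply, hNc, Finset.sum_pair hlr,
      Equiv.swap_apply_of_ne_of_ne hlA hlc, Equiv.swap_apply_of_ne_of_ne hrA hrc,
      pf_A_F hA0 hFl, pf_A_F hA0 hFr]
    norm_num
  · unfold envies
    rw [hGold, utility_swap_s4, hNa, Finset.sum_pair htt']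
    have htcc : π.symm t ≠ π.symm c := fun h => htc (π.symm.injective h)
    have htA : π.symm t ≠ A0 := fun h => by
      have : (π.symm t).val = A0.val := congrArg Fin.val h; omega
    have ht'c : π.symm t' ≠ π.symm c := fun h => by
      have : (π.symm t').val = (π.symm c).val := congrArg Fin.val h; omega
    have ht'A : π.symm t' ≠ A0 := fun h => by
      have : (π.symm t').val = A0.val := congrArg Fin.val h; omega
    rw [Equiv.swap_apply_of_ne_of_ne htcc htA, Equiv.swap_apply_of_ne_of_ne ht'c ht'A,
      pf_F_F hFc hFt, pf_F_B hFc hBt'1 hBt'2]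
    norm_num

/-- Alice blocks with a Friend having only Friend neighbours, when all of Alice's
neighbours are Bobs. -/
lemma aliceFriend_allBob (hn : 12 ≤ n) (π : Fin n ≃ Fin n) {A0 c l r : Fin n}
    (hA0 : A0.val = 0)
    (hNc : (pathG n).neighborFinset c = {l, r}) (hlr : l ≠ r)
    (hFc : 4 ≤ (π.symm c).val) (hFl : 4 ≤ (π.symm l).val) (hFr : 4 ≤ (π.symm r).val)
    (hallB : ∀ v ∈ (pathG n).neighborFinset (π A0),
      1 ≤ (π.symm v).val ∧ (π.symm v).val ≤ 3) :
    blocking (pathG n) (pf n) π A0 (π.symm c) := by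
  have hne : A0 ≠ π.symm c := fun h => by
    have : A0.val = (π.symm c).val := congrArg Fin.val h; omega
  have hlc : π.symm l ≠ π.symm c := fun h => by
    have hadj : (pathG n).Adj c l := by
      rw [← SimpleGraph.mem_neighborFinset, hNc]; exact Finset.mem_insert_self _ _
    exact hadj.ne.symm (π.symm.injective h)
  have hrc : π.symm r ≠ π.symm c := fun h => by
    have hadj : (pathG n).Adj c r := by
      rw [← SimpleGraph.mem_neighborFinset, hNc]
      exact Finset.mem_insert_of_mem (Finset.mem_singleton_self _)
    exact hadj.ne.symm (π.symm.injective h)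
  have hlA : π.symm l ≠ A0 := fun h => by
    have : (π.symm l).val = A0.val := congrArg Fin.val h; omega
  have hrA : π.symm r ≠ A0 := fun h => by
    have : (π.symm r).val = A0.val := congrArg Fin.val h; omega
  have hAold : utility (pathG n) (pf n) π A0 = 0 := by
    rw [utility_eq_s4]
    apply Finset.sum_eq_zero
    intro v hv
    exact pf_A_nF hA0 (hallB v hv).2
  have hGold : utility (pathG n) (pf n) π (π.symm c) = 2 := by
    rw [utility_eq_s4, Equiv.apply_symm_apply, hNc, Finset.sum_pair hlr,
      pf_F_F hFc hFl, pf_F_F hFc hFr]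
    norm_num
  refine ⟨hne, ?_, ?_⟩
  · unfold envies
    rw [hAold, utility_swap_s4, Equiv.apply_symm_apply, hNc, Finset.sum_pair hlr,
      Equiv.swap_apply_of_ne_of_ne hlA hlc, Equiv.swap_apply_of_ne_of_ne hrA hrc,
      pf_A_F hA0 hFl, pf_A_F hA0 hFr]
    norm_num
  · unfold envies
    rw [hGold, utility_swap_s4]
    obtain ⟨v0, hv0⟩ := exists_nbr (by omega) (π A0)
    have hb := hallB v0 hv0
    have h1 : π.symm v0 ≠ π.symm c := fun h => by
      have : (π.symm v0).val = (π.symm c).val := congrArg Fin.val h; omega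
    have h2 : π.symm v0 ≠ A0 := fun h => by
      have : (π.symm v0).val = A0.val := congrArg Fin.val h; omega
    calc (2:ℝ) < 3 := by norm_num
      _ = pf n (π.symm c) (Equiv.swap (π.symm c) A0 (π.symm v0)) := by
          rw [Equiv.swap_apply_of_ne_of_ne h1 h2]
          exact (pf_F_B hFc hb.1 hb.2).symm
      _ ≤ _ := Finset.single_le_sum
          (f := fun v => pf n (π.symm c) (Equiv.swap (π.symm c) A0 (π.symm v)))
          (fun i _ => pf_nonneg _ _) hv0
end blockLemmas
section coordLemmas
variable {n : ℕ}

lemma seat_val_ne {π : Fin n ≃ Fin n} {g v : Fin n}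
    (h : g ≠ π.symm v) : (π g).val ≠ v.val := fun hv => by
  have heq : π g = v := Fin.ext hv
  exact h (by rw [← heq, Equiv.symm_apply_apply])

lemma exists_seat (k : ℕ) (hk : k < n) : ∃ s : Fin n, s.val = k := ⟨⟨k, hk⟩, rfl⟩

lemma case1bii (hn : 12 ≤ n) (π : Fin n ≃ Fin n) {A0 s0 s1 : Fin n} (hA0 : A0.val = 0)
    (ha : (π A0).val = 2) (hs0 : s0.val = 0) (hs1 : s1.val = 1)
    (hB1 : 1 ≤ (π.symm s0).val) (hB2 : (π.symm s0).val ≤ 3)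
    (hF1 : 4 ≤ (π.symm s1).val) :
    ∃ x y, blocking (pathG n) (pf n) π x y := by
  obtain ⟨s3, hs3⟩ := exists_seat (n := n) 3 (by omega)
  obtain ⟨s4, hs4⟩ := exists_seat (n := n) 4 (by omega)
  obtain ⟨s5, hs5⟩ := exists_seat (n := n) 5 (by omega)
  have hz0 : (π.symm s3).val ≠ 0 :=
    occ_ne_zero hA0 (seat_ne (by omega))
  have hy0 : (π.symm s4).val ≠ 0 :=
    occ_ne_zero hA0 (seat_ne (by omega))
  have hne03 : π.symm s0 ≠ π.symm s3 := fun h => by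
    have := congrArg Fin.val (π.symm.injective h)
    omega
  rcases le_or_gt (π.symm s3).val 3 with hzb | hzf
  · -- z (occupant of seat 3) is a Bob; find the third bob g
    have hv12 : (π.symm s0).val ≠ (π.symm s3).val := fun h => hne03 (Fin.ext h)
    obtain ⟨g, hg⟩ :=
      exists_seat (n := n) (6 - (π.symm s0).val - (π.symm s3).val) (by omega)
    have hg0 : g ≠ π.symm s0 := fun h => by
      have := congrArg Fin.val h; omega
    have hg3 : g ≠ π.symm s3 := fun h => by
      have := congrArg Fin.val h; omega
    have hgA : g ≠ A0 := fun h => by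
      have := congrArg Fin.val h; omega
    have hg1 : g ≠ π.symm s1 := fun h => by
      have := congrArg Fin.val h; omega
    have hsg0 : (π g).val ≠ 0 := by
      have := seat_val_ne hg0; omega
    have hsg3 : (π g).val ≠ 3 := by
      have := seat_val_ne hg3; omega
    have hsg2 : (π g).val ≠ 2 := fun h => by
      have heq : π g = π A0 := Fin.ext (by omega)
      have := congrArg Fin.val (π.injective heq)
      omega
    obtain ⟨c, hc5, hcn, hcs⟩ :
        ∃ c : ℕ, 5 ≤ c ∧ c + 1 ≤ n - 2 ∧ ((π g).val + 1 < c ∨ c + 1 < (π g).val) := by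
      by_cases h7 : 7 ≤ (π g).val
      · exact ⟨5, le_refl _, by omega, Or.inr (by omega)⟩
      · exact ⟨8, by omega, by omega, Or.inl (by omega)⟩
    obtain ⟨cs, hcsv⟩ := exists_seat (n := n) c (by omega)
    obtain ⟨cl, hclv⟩ := exists_seat (n := n) (c - 1) (by omega)
    obtain ⟨cr, hcrv⟩ := exists_seat (n := n) (c + 1) (by omega)
    have hfr : ∀ v : Fin n, v.val ≠ 2 → v.val ≠ 0 → v.val ≠ 3 → v.val ≠ (π g).val →
        4 ≤ (π.symm v).val := by
      intro v k2 k0 k3 kg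
      refine friend_of_ne π hA0 hB1 hB2 (by omega) hzb (by omega)
        (by omega) hne03 (Ne.symm hg0) (Ne.symm hg3)
        (seat_ne (by omega)) ?_ ?_ (seat_ne (by omega))
      · rw [Equiv.apply_symm_apply]; exact seat_ne (by omega)
      · rw [Equiv.apply_symm_apply]; exact seat_ne (by omega)
    have hNc : (pathG n).neighborFinset cs = {cl, cr} :=
      N_mid' (by omega) (by omega) (by omega) (by omega)
    have hNa : (pathG n).neighborFinset (π A0) = {s1, s3} :=
      N_mid' (by omega) (by omega) (by omega) (by omega)
    exact ⟨A0, π.symm cs,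
      aliceFriend_mixed π hA0 hNc (seat_ne (by omega))
        (hfr cs (by omega) (by omega) (by omega) (by omega))
        (hfr cl (by omega) (by omega) (by omega) (by omega))
        (hfr cr (by omega) (by omega) (by omega) (by omega))
        hNa (seat_ne (by omega)) hF1 (by omega) hzb (seat_ne (by omega))⟩
  · -- z is a Friend
    rcases le_or_gt (π.symm s4).val 3 with hyb | hyf
    · -- y (occupant of seat 4) is a Bob : caseBFB at seats (2,3,4,5)
      have hNt : (pathG n).neighborFinset s3 = {π A0, s4} :=
        N_mid' (by omega) (by omega) (by omega) (by omega)
      have hNu : (pathG n).neighborFinset s4 = {s3, s5} :=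
        N_mid' (by omega) (by omega) (by omega) (by omega)
      exact ⟨_, _, caseBFB hn π hA0 hNt hNu (seat_ne (by omega))
        (by omega) (by omega) hyb⟩
    · -- y is a Friend: find an interior non-adjacent Bob
      obtain ⟨k1, k2, hk1a, hk1b, hk2a, hk2b, hk12, hk1v, hk2v⟩ :
          ∃ k1 k2 : ℕ, 1 ≤ k1 ∧ k1 ≤ 3 ∧ 1 ≤ k2 ∧ k2 ≤ 3 ∧ k1 ≠ k2 ∧
            k1 ≠ (π.symm s0).val ∧ k2 ≠ (π.symm s0).val := by
        refine ⟨if (π.symm s0).val = 1 then 2 else 1,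
          if (π.symm s0).val = 3 then 2 else 3, ?_, ?_, ?_, ?_, ?_, ?_, ?_⟩ <;>
          split_ifs <;> omega
      obtain ⟨g1, hg1v⟩ := exists_seat (n := n) k1 (by omega)
      obtain ⟨g2, hg2v⟩ := exists_seat (n := n) k2 (by omega)
      have hseat5 : ∀ g : Fin n, 1 ≤ g.val → g.val ≤ 3 →
          g.val ≠ (π.symm s0).val → 5 ≤ (π g).val := by
        intro g hka hkb hkv
        have h0 : (π g).val ≠ s0.val := seat_val_ne (fun h => hkv (congrArg Fin.val h))
        have h1 : (π g).val ≠ s1.val := seat_val_ne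
          (fun h => by have := congrArg Fin.val h; omega)
        have h3 : (π g).val ≠ s3.val := seat_val_ne
          (fun h => by have := congrArg Fin.val h; omega)
        have h4 : (π g).val ≠ s4.val := seat_val_ne
          (fun h => by have := congrArg Fin.val h; omega)
        have h2 : (π g).val ≠ 2 := fun h => by
          have heq : π g = π A0 := Fin.ext (by omega)
          have := congrArg Fin.val (π.injective heq)
          omega
        omega
      have hsg1 : 5 ≤ (π g1).val := hseat5 g1 (by omega) (by omega) (by omega)
      have hsg2 : 5 ≤ (π g2).val := hseat5 g2 (by omega) (by omega) (by omega)
      obtain ⟨β, hβ1, hβ3, hb5, hbn⟩ :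
          ∃ β : Fin n, 1 ≤ β.val ∧ β.val ≤ 3 ∧ 5 ≤ (π β).val ∧ (π β).val ≤ n - 2 := by
        by_cases hc1 : (π g1).val ≤ n - 2
        · exact ⟨g1, by omega, by omega, hsg1, hc1⟩
        · refine ⟨g2, by omega, by omega, hsg2, ?_⟩
          have hnev : (π g1).val ≠ (π g2).val := fun h => by
            have := congrArg Fin.val (π.injective (Fin.ext h))
            omega
          have := (π g1).isLt
          have := (π g2).isLt
          omega
      have hnadj : ¬ (pathG n).Adj (π β) (π A0) := by
        rw [path_adj]
        omega
      have hNt : (pathG n).neighborFinset s3 = {π A0, s4} :=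
        N_mid' (by omega) (by omega) (by omega) (by omega)
      obtain ⟨bl, hblv⟩ := exists_seat (n := n) ((π β).val - 1) (by omega)
      obtain ⟨br, hbrv⟩ := exists_seat (n := n) ((π β).val + 1)
        (by have := (π β).isLt; omega)
      have hNβ : (pathG n).neighborFinset (π β) = {bl, br} :=
        N_mid' (by omega) (by omega) (by omega) (by omega)
      exact ⟨_, β, case1c hn π hA0 hβ1 hβ3 hnadj hNt (seat_ne (by omega))
        (by omega) (by omega) (Or.inl ⟨_, _, seat_ne (by omega), hNβ⟩)⟩

end coordLemmas
section step2
variable {n : ℕ}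

lemma step2_int (hn : 12 ≤ n) (π : Fin n ≃ Fin n) {A0 l r : Fin n} (hA0 : A0.val = 0)
    (h1 : 1 ≤ (π A0).val) (h2 : (π A0).val ≤ n - 2)
    (hl : l.val + 1 = (π A0).val) (hr : r.val = (π A0).val + 1)
    (hBl1 : 1 ≤ (π.symm l).val) (hBl2 : (π.symm l).val ≤ 3)
    (hBr1 : 1 ≤ (π.symm r).val) (hBr2 : (π.symm r).val ≤ 3) :
    ∃ x y, blocking (pathG n) (pf n) π x y := by
  have hNa : (pathG n).neighborFinset (π A0) = {l, r} := N_mid' h1 h2 hl hr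
  have hlr : l ≠ r := seat_ne (by omega)
  have hnelr : π.symm l ≠ π.symm r := fun h => hlr (π.symm.injective h)
  have hvlr : (π.symm l).val ≠ (π.symm r).val := fun h => hnelr (Fin.ext h)
  obtain ⟨g, hg⟩ :=
    exists_seat (n := n) (6 - (π.symm l).val - (π.symm r).val) (by omega)
  have hgl : g ≠ π.symm l := fun h => by have := congrArg Fin.val h; omega
  have hgr : g ≠ π.symm r := fun h => by have := congrArg Fin.val h; omega
  have hgA : g ≠ A0 := fun h => by have := congrArg Fin.val h; omega
  have hsgl : (π g).val ≠ l.val := seat_val_ne hgl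
  have hsgr : (π g).val ≠ r.val := seat_val_ne hgr
  have hsga : (π g).val ≠ (π A0).val := fun h => by
    have := congrArg Fin.val (π.injective (Fin.ext h)); omega
  set bad : Finset ℕ := Finset.Icc ((π A0).val - 2) ((π A0).val + 2) ∪
    Finset.Icc ((π g).val - 1) ((π g).val + 1) with hbaddef
  have hbad : bad.card ≤ 9 := by
    refine le_trans (Finset.card_union_le _ _) ?_
    rw [Nat.card_Icc, Nat.card_Icc]
    omega
  obtain ⟨c, hc1, hc2, hc3⟩ := ph hn bad hbad
  have hcA : c < (π A0).val - 2 ∨ (π A0).val + 2 < c := by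
    by_contra hcon
    push_neg at hcon
    exact hc3 (Finset.mem_union_left _ (Finset.mem_Icc.2 ⟨by omega, by omega⟩))
  have hcG : c < (π g).val - 1 ∨ (π g).val + 1 < c := by
    by_contra hcon
    push_neg at hcon
    exact hc3 (Finset.mem_union_right _ (Finset.mem_Icc.2 ⟨by omega, by omega⟩))
  have hga1 : 1 ≤ (π g).val ∨ True := Or.inr trivial
  obtain ⟨cs, hcsv⟩ := exists_seat (n := n) c (by omega)
  obtain ⟨cl, hclv⟩ := exists_seat (n := n) (c - 1) (by omega)
  obtain ⟨cr, hcrv⟩ := exists_seat (n := n) (c + 1) (by omega)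
  have hNc : (pathG n).neighborFinset cs = {cl, cr} :=
    N_mid' (by omega) (by omega) (by omega) (by omega)
  have hfr : ∀ v : Fin n, v.val ≠ (π A0).val → v.val ≠ l.val → v.val ≠ r.val →
      v.val ≠ (π g).val → 4 ≤ (π.symm v).val := by
    intro v k2 kl kr kg
    refine friend_of_ne π hA0 hBl1 hBl2 hBr1 hBr2 (by omega) (by omega)
      hnelr (Ne.symm hgl) (Ne.symm hgr)
      (seat_ne (by omega)) ?_ ?_ (seat_ne (by omega))
    · rw [Equiv.apply_symm_apply]; exact seat_ne (by omega)
    · rw [Equiv.apply_symm_apply]; exact seat_ne (by omega)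
  refine ⟨A0, π.symm cs,
    aliceFriend_allBob hn π hA0 hNc (seat_ne (by omega))
      (hfr cs (by omega) (by omega) (by omega) (by omega))
      (hfr cl (by omega) (by omega) (by omega) (by omega))
      (hfr cr (by omega) (by omega) (by omega) (by omega)) ?_⟩
  intro v hv
  rw [hNa, Finset.mem_insert, Finset.mem_singleton] at hv
  rcases hv with rfl | rfl
  · exact ⟨hBl1, hBl2⟩
  · exact ⟨hBr1, hBr2⟩

lemma step2_end0 (hn : 12 ≤ n) (π : Fin n ≃ Fin n) {A0 s1 : Fin n} (hA0 : A0.val = 0)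
    (ha : (π A0).val = 0) (hs1 : s1.val = 1)
    (hB1 : 1 ≤ (π.symm s1).val) (hB2 : (π.symm s1).val ≤ 3) :
    ∃ x y, blocking (pathG n) (pf n) π x y := by
  have hNa : (pathG n).neighborFinset (π A0) = {s1} := N_zero' ha (by omega)
  obtain ⟨k1, k2, hk1a, hk1b, hk2a, hk2b, hk12, hk1v, hk2v⟩ :
      ∃ k1 k2 : ℕ, 1 ≤ k1 ∧ k1 ≤ 3 ∧ 1 ≤ k2 ∧ k2 ≤ 3 ∧ k1 ≠ k2 ∧
        k1 ≠ (π.symm s1).val ∧ k2 ≠ (π.symm s1).val := by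
    refine ⟨if (π.symm s1).val = 1 then 2 else 1,
      if (π.symm s1).val = 3 then 2 else 3, ?_, ?_, ?_, ?_, ?_, ?_, ?_⟩ <;>
      split_ifs <;> omega
  obtain ⟨g1, hg1⟩ := exists_seat (n := n) k1 (by omega)
  obtain ⟨g2, hg2⟩ := exists_seat (n := n) k2 (by omega)
  have hg1s : g1 ≠ π.symm s1 := fun h => by have := congrArg Fin.val h; omega
  have hg2s : g2 ≠ π.symm s1 := fun h => by have := congrArg Fin.val h; omega
  have hg1A : g1 ≠ A0 := fun h => by have := congrArg Fin.val h; omega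
  have hg2A : g2 ≠ A0 := fun h => by have := congrArg Fin.val h; omega
  have hg12 : g1 ≠ g2 := fun h => by have := congrArg Fin.val h; omega
  have hs1g1 : (π g1).val ≠ 1 := by have := seat_val_ne hg1s; omega
  have hs1g2 : (π g2).val ≠ 1 := by have := seat_val_ne hg2s; omega
  have hs0g1 : (π g1).val ≠ 0 := fun h => by
    have heq : π g1 = π A0 := Fin.ext (by omega)
    have := congrArg Fin.val (π.injective heq); omega
  have hs0g2 : (π g2).val ≠ 0 := fun h => by
    have heq : π g2 = π A0 := Fin.ext (by omega)
    have := congrArg Fin.val (π.injective heq); omega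
  set bad : Finset ℕ := (Finset.Icc 0 2 ∪
    Finset.Icc ((π g1).val - 1) ((π g1).val + 1)) ∪
    Finset.Icc ((π g2).val - 1) ((π g2).val + 1) with hbaddef
  have hbad : bad.card ≤ 9 := by
    refine le_trans (Finset.card_union_le _ _)
      (le_trans (Nat.add_le_add_right (Finset.card_union_le _ _) _) ?_)
    rw [Nat.card_Icc, Nat.card_Icc, Nat.card_Icc]
    omega
  obtain ⟨c, hc1, hc2, hc3⟩ := ph hn bad hbad
  have hc0 : ¬ (c ≤ 2) := fun hcc =>
    hc3 (Finset.mem_union_left _ (Finset.mem_union_left _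
      (Finset.mem_Icc.2 ⟨by omega, hcc⟩)))
  have hcG1 : c < (π g1).val - 1 ∨ (π g1).val + 1 < c := by
    by_contra hcon
    push_neg at hcon
    exact hc3 (Finset.mem_union_left _ (Finset.mem_union_right _
      (Finset.mem_Icc.2 ⟨by omega, by omega⟩)))
  have hcG2 : c < (π g2).val - 1 ∨ (π g2).val + 1 < c := by
    by_contra hcon
    push_neg at hcon
    exact hc3 (Finset.mem_union_right _ (Finset.mem_Icc.2 ⟨by omega, by omega⟩))
  obtain ⟨cs, hcsv⟩ := exists_seat (n := n) c (by omega)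
  obtain ⟨cl, hclv⟩ := exists_seat (n := n) (c - 1) (by omega)
  obtain ⟨cr, hcrv⟩ := exists_seat (n := n) (c + 1) (by omega)
  have hNc : (pathG n).neighborFinset cs = {cl, cr} :=
    N_mid' (by omega) (by omega) (by omega) (by omega)
  have hfr : ∀ v : Fin n, v.val ≠ 0 → v.val ≠ 1 →
      v.val ≠ (π g1).val → v.val ≠ (π g2).val → 4 ≤ (π.symm v).val := by
    intro v k0 k1' kg1 kg2
    refine friend_of_ne π hA0 hB1 hB2 (by omega) (by omega) (by omega) (by omega)
      (Ne.symm hg1s) (Ne.symm hg2s) hg12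
      (seat_ne (by omega)) ?_ (seat_ne (by omega)) (seat_ne (by omega))
    rw [Equiv.apply_symm_apply]
    exact seat_ne (by omega)
  refine ⟨A0, π.symm cs,
    aliceFriend_allBob hn π hA0 hNc (seat_ne (by omega))
      (hfr cs (by omega) (by omega) (by omega) (by omega))
      (hfr cl (by omega) (by omega) (by omega) (by omega))
      (hfr cr (by omega) (by omega) (by omega) (by omega)) ?_⟩
  intro v hv
  rw [hNa, Finset.mem_singleton] at hv
  subst hv
  exact ⟨hB1, hB2⟩

lemma residualCase (hn : 12 ≤ n) (π : Fin n ≃ Fin n) {A0 t t' β2 β3 : Fin n}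
    (hA0 : A0.val = 0)
    (h1 : 1 ≤ (π A0).val) (h2 : (π A0).val ≤ n - 2)
    (hNa : (pathG n).neighborFinset (π A0) = {t, t'}) (htt' : t ≠ t')
    (hFt : 4 ≤ (π.symm t).val)
    (hBt1 : 1 ≤ (π.symm t').val) (hBt2 : (π.symm t').val ≤ 3)
    (hβ2a : 1 ≤ β2.val) (hβ2b : β2.val ≤ 3) (hβ3a : 1 ≤ β3.val) (hβ3b : β3.val ≤ 3)
    (hs2 : (π β2).val = 0) (hs3 : (π β3).val = n - 1)
    (hd2 : π.symm t' ≠ β2) (hd3 : π.symm t' ≠ β3) (hd23 : β2 ≠ β3) :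
    ∃ x y, blocking (pathG n) (pf n) π x y := by
  have hadj_t : (pathG n).Adj (π A0) t := by
    rw [← SimpleGraph.mem_neighborFinset, hNa]; exact Finset.mem_insert_self _ _
  have hadj_t' : (pathG n).Adj (π A0) t' := by
    rw [← SimpleGraph.mem_neighborFinset, hNa]
    exact Finset.mem_insert_of_mem (Finset.mem_singleton_self _)
  rw [path_adj] at hadj_t hadj_t'
  set bad : Finset ℕ := (Finset.Icc ((π A0).val - 2) ((π A0).val + 2) ∪ {1}) ∪
    {n - 2} with hbaddef
  have hbad : bad.card ≤ 9 := by
    refine le_trans (Finset.card_union_le _ _)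
      (le_trans (Nat.add_le_add_right (Finset.card_union_le _ _) _) ?_)
    rw [Nat.card_Icc, Finset.card_singleton, Finset.card_singleton]
    omega
  obtain ⟨c, hc1, hc2, hc3⟩ := ph hn bad hbad
  have hcA : c < (π A0).val - 2 ∨ (π A0).val + 2 < c := by
    by_contra hcon
    push_neg at hcon
    exact hc3 (Finset.mem_union_left _ (Finset.mem_union_left _
      (Finset.mem_Icc.2 ⟨by omega, by omega⟩)))
  have hcn1 : c ≠ 1 := fun h =>
    hc3 (Finset.mem_union_left _ (Finset.mem_union_right _
      (Finset.mem_singleton.2 h)))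
  have hcn2 : c ≠ n - 2 := fun h =>
    hc3 (Finset.mem_union_right _ (Finset.mem_singleton.2 h))
  obtain ⟨cs, hcsv⟩ := exists_seat (n := n) c (by omega)
  obtain ⟨cl, hclv⟩ := exists_seat (n := n) (c - 1) (by omega)
  obtain ⟨cr, hcrv⟩ := exists_seat (n := n) (c + 1) (by omega)
  have hNc : (pathG n).neighborFinset cs = {cl, cr} :=
    N_mid' (by omega) (by omega) (by omega) (by omega)
  have hfr : ∀ v : Fin n, v.val ≠ (π A0).val → v.val ≠ t'.val → v.val ≠ 0 →
      v.val ≠ n - 1 → 4 ≤ (π.symm v).val := by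
    intro v ka kt k0 kn
    refine friend_of_ne π hA0 hBt1 hBt2 hβ2a hβ2b hβ3a hβ3b hd2 hd3 hd23
      (seat_ne (by omega)) ?_ (seat_ne (by omega)) (seat_ne (by omega))
    rw [Equiv.apply_symm_apply]
    exact seat_ne (by omega)
  exact ⟨A0, π.symm cs,
    aliceFriend_mixed π hA0 hNc (seat_ne (by omega))
      (hfr cs (by omega) (by omega) (by omega) (by omega))
      (hfr cl (by omega) (by omega) (by omega) (by omega))
      (hfr cr (by omega) (by omega) (by omega) (by omega))
      hNa htt' hFt hBt1 hBt2 (seat_ne (by omega))⟩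

end step2
section driver
set_option maxHeartbeats 1000000
variable {n : ℕ}

lemma residualApply (hn : 12 ≤ n) (π : Fin n ≃ Fin n) {A0 t t' ga gb gc : Fin n}
    (hA0 : A0.val = 0)
    (h1a : 1 ≤ (π A0).val) (h2a : (π A0).val ≤ n - 2)
    (hNa : (pathG n).neighborFinset (π A0) = {t, t'}) (htt' : t ≠ t')
    (hFt : 4 ≤ (π.symm t).val)
    (ha1 : 1 ≤ ga.val) (ha2 : ga.val ≤ 3)
    (hb1' : 1 ≤ gb.val) (hb2' : gb.val ≤ 3) (hc1 : 1 ≤ gc.val) (hc2 : gc.val ≤ 3)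
    (nab : ga.val ≠ gb.val) (nac : ga.val ≠ gc.val) (nbc : gb.val ≠ gc.val)
    (hat : (π ga).val = t'.val) (hb0 : (π gb).val = 0) (hcn : (π gc).val = n - 1) :
    ∃ x y, blocking (pathG n) (pf n) π x y := by
  have hst' : π.symm t' = ga := by
    have heq : π ga = t' := Fin.ext hat
    rw [← heq, Equiv.symm_apply_apply]
  refine residualCase hn π hA0 h1a h2a hNa htt' hFt
    ?_ ?_ hb1' hb2' hc1 hc2 hb0 hcn ?_ ?_ (seat_ne (by omega))
  · rw [hst']; omega
  · rw [hst']; omega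
  · rw [hst']; exact seat_ne (by omega)
  · rw [hst']; exact seat_ne (by omega)

lemma residualSelect (hn : 12 ≤ n) (π : Fin n ≃ Fin n) {A0 t t' g1 g2 g3 : Fin n}
    (hA0 : A0.val = 0)
    (h1a : 1 ≤ (π A0).val) (h2a : (π A0).val ≤ n - 2)
    (hNa : (pathG n).neighborFinset (π A0) = {t, t'}) (htt' : t ≠ t')
    (hFt : 4 ≤ (π.symm t).val)
    (hg1 : g1.val = 1) (hg2 : g2.val = 2) (hg3 : g3.val = 3)
    (h1 : (π g1).val = t'.val ∨ (π g1).val = 0 ∨ (π g1).val = n - 1)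
    (h2 : (π g2).val = t'.val ∨ (π g2).val = 0 ∨ (π g2).val = n - 1)
    (h3 : (π g3).val = t'.val ∨ (π g3).val = 0 ∨ (π g3).val = n - 1)
    (d12 : (π g1).val ≠ (π g2).val) (d13 : (π g1).val ≠ (π g3).val)
    (d23 : (π g2).val ≠ (π g3).val) :
    ∃ x y, blocking (pathG n) (pf n) π x y := by
  rcases h1 with e1 | e1 | e1 <;> rcases h2 with e2 | e2 | e2 <;>
    rcases h3 with e3 | e3 | e3 <;>
    first
      | exact residualApply hn π hA0 h1a h2a hNa htt' hFt (by omega) (by omega)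
          (by omega) (by omega) (by omega) (by omega) (by omega) (by omega)
          (by omega) e1 e2 e3
      | exact residualApply hn π hA0 h1a h2a hNa htt' hFt (by omega) (by omega)
          (by omega) (by omega) (by omega) (by omega) (by omega) (by omega)
          (by omega) e1 e3 e2
      | exact residualApply hn π hA0 h1a h2a hNa htt' hFt (by omega) (by omega)
          (by omega) (by omega) (by omega) (by omega) (by omega) (by omega)
          (by omega) e2 e1 e3
      | exact residualApply hn π hA0 h1a h2a hNa htt' hFt (by omega) (by omega)
          (by omega) (by omega) (by omega) (by omega) (by omega) (by omega)
          (by omega) e2 e3 e1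
      | exact residualApply hn π hA0 h1a h2a hNa htt' hFt (by omega) (by omega)
          (by omega) (by omega) (by omega) (by omega) (by omega) (by omega)
          (by omega) e3 e1 e2
      | exact residualApply hn π hA0 h1a h2a hNa htt' hFt (by omega) (by omega)
          (by omega) (by omega) (by omega) (by omega) (by omega) (by omega)
          (by omega) e3 e2 e1
      | (exfalso; omega)

lemma case1 (hn : 12 ≤ n) (π : Fin n ≃ Fin n) {A0 t : Fin n} (hA0 : A0.val = 0)
    (hadj : (pathG n).Adj (π A0) t) (hF : 4 ≤ (π.symm t).val) :
    ∃ x y, blocking (pathG n) (pf n) π x y := by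
  obtain ⟨β, hβ1, hβ2, hβn⟩ := exists_nonadj_bob hn π hA0
  have hadjv := path_adj.1 hadj
  have htlt := t.isLt
  have halt := (π A0).isLt
  by_cases ht0 : t.val = 0
  · have hNt : (pathG n).neighborFinset t = {π A0} := N_zero' ht0 (by omega)
    exact ⟨_, β, case1a hn π hA0 hβ1 hβ2 hβn hNt hF⟩
  by_cases htl : t.val = n - 1
  · have hNt : (pathG n).neighborFinset t = {π A0} := N_last' htl (by omega) (by omega)
    exact ⟨_, β, case1a hn π hA0 hβ1 hβ2 hβn hNt hF⟩
  -- t is interior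
  obtain ⟨u, hNt, huv, hau⟩ :
      ∃ u : Fin n, (pathG n).neighborFinset t = {π A0, u} ∧
        (u.val = t.val + 1 ∨ u.val + 1 = t.val) ∧ (π A0).val ≠ u.val := by
    rcases hadjv.2 with hd | hd
    · obtain ⟨u, hu⟩ := exists_seat (n := n) (t.val + 1) (by omega)
      exact ⟨u, N_mid' (by omega) (by omega) (by omega) (by omega),
        Or.inl hu, by omega⟩
    · obtain ⟨u, hu⟩ := exists_seat (n := n) (t.val - 1) (by omega)
      refine ⟨u, ?_, Or.inr (by omega), by omega⟩
      rw [Finset.pair_comm]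
      exact N_mid' (by omega) (by omega) (by omega) (by omega)
  have hauu : π A0 ≠ u := seat_ne hau
  have hXne0 : (π.symm u).val ≠ 0 := occ_ne_zero hA0 (Ne.symm hauu)
  have hult := u.isLt
  rcases le_or_gt (π.symm u).val 3 with hXb | hXf
  · -- occupant of u is a Bob
    by_cases hu0 : u.val = 0
    · exact case1bii hn π hA0 (by omega) hu0 (by omega) (by omega) hXb hF
    by_cases hul : u.val = n - 1
    · -- mirror image of the previous case
      have hrevA : ((π.trans Fin.revPerm) A0).val = 2 := by
        show (Fin.rev (π A0)).val = 2
        rw [Fin.val_rev]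
        omega
      have h1 : (π.trans Fin.revPerm).symm (Fin.rev u) = π.symm u := by
        rw [trans_rev_symm, Fin.rev_rev]
      have h2 : (π.trans Fin.revPerm).symm (Fin.rev t) = π.symm t := by
        rw [trans_rev_symm, Fin.rev_rev]
      obtain ⟨x, y, hb⟩ := case1bii hn (π.trans Fin.revPerm) hA0 hrevA
        (s0 := Fin.rev u) (s1 := Fin.rev t)
        (by rw [Fin.val_rev]; omega) (by rw [Fin.val_rev]; omega)
        (by rw [h1]; omega) (by rw [h1]; exact hXb) (by rw [h2]; exact hF)
      exact ⟨x, y, blocking_rev π hb⟩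
    · -- u interior : caseBFB
      obtain ⟨w, hNu, htw⟩ :
          ∃ w : Fin n, (pathG n).neighborFinset u = {t, w} ∧ t ≠ w := by
        rcases huv with hd | hd
        · obtain ⟨w, hw⟩ := exists_seat (n := n) (u.val + 1) (by omega)
          exact ⟨w, N_mid' (by omega) (by omega) (by omega) (by omega),
            seat_ne (by omega)⟩
        · obtain ⟨w, hw⟩ := exists_seat (n := n) (u.val - 1) (by omega)
          refine ⟨w, ?_, seat_ne (by omega)⟩
          rw [Finset.pair_comm]
          exact N_mid' (by omega) (by omega) (by omega) (by omega)
      exact ⟨_, _, caseBFB hn π hA0 hNt hNu htw hF (by omega) hXb⟩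
  · -- occupant of u is a Friend : case 1c
    by_cases hstrong : ∃ β' : Fin n, (1 ≤ β'.val ∧ β'.val ≤ 3) ∧
        ¬ (pathG n).Adj (π β') (π A0) ∧ 1 ≤ (π β').val ∧ (π β').val ≤ n - 2
    · obtain ⟨β', ⟨hb1, hb2⟩, hnadj', hm1, hm2⟩ := hstrong
      obtain ⟨bl, hbl⟩ := exists_seat (n := n) ((π β').val - 1) (by omega)
      obtain ⟨br, hbr⟩ := exists_seat (n := n) ((π β').val + 1)
        (by have := (π β').isLt; omega)
      have hNβ : (pathG n).neighborFinset (π β') = {bl, br} :=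
        N_mid' (by omega) (by omega) (by omega) (by omega)
      exact ⟨_, β', case1c hn π hA0 hb1 hb2 hnadj' hNt hauu hF hXf
        (Or.inl ⟨bl, br, seat_ne (by omega), hNβ⟩)⟩
    · push_neg at hstrong
      have hclass : ∀ g : Fin n, 1 ≤ g.val → g.val ≤ 3 →
          ((pathG n).Adj (π g) (π A0)) ∨ (π g).val = 0 ∨ (π g).val = n - 1 := by
        intro g hga hgb
        by_cases hadjg : (pathG n).Adj (π g) (π A0)
        · exact Or.inl hadjg
        · have hs := hstrong g ⟨hga, hgb⟩ hadjg
          have := (π g).isLt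
          omega
      obtain ⟨g1, hg1⟩ := exists_seat (n := n) 1 (by omega)
      obtain ⟨g2, hg2⟩ := exists_seat (n := n) 2 (by omega)
      obtain ⟨g3, hg3⟩ := exists_seat (n := n) 3 (by omega)
      have d12 : (π g1).val ≠ (π g2).val := fun h => by
        have := congrArg Fin.val (π.injective (Fin.ext h)); omega
      have d13 : (π g1).val ≠ (π g3).val := fun h => by
        have := congrArg Fin.val (π.injective (Fin.ext h)); omega
      have d23 : (π g2).val ≠ (π g3).val := fun h => by
        have := congrArg Fin.val (π.injective (Fin.ext h)); omega
      by_cases ha0 : (π A0).val = 0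
      · -- Alice at the left end: no Bob can be adjacent to her
        have hNa : (pathG n).neighborFinset (π A0) = {t} := N_zero' ha0 (by omega)
        have hforce : ∀ g : Fin n, 1 ≤ g.val → g.val ≤ 3 →
            (π g).val = 0 ∨ (π g).val = n - 1 := by
          intro g hga hgb
          rcases hclass g hga hgb with hadjg | h | h
          · exfalso
            have hm : π g ∈ (pathG n).neighborFinset (π A0) :=
              (SimpleGraph.mem_neighborFinset _ _ _).2 hadjg.symm
            rw [hNa, Finset.mem_singleton] at hm
            have hg : g = π.symm t := by rw [← hm, Equiv.symm_apply_apply]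
            have := congrArg Fin.val hg
            omega
          exacts [Or.inl h, Or.inr h]
        have h1 := hforce g1 (by omega) (by omega)
        have h2 := hforce g2 (by omega) (by omega)
        have h3 := hforce g3 (by omega) (by omega)
        omega
      by_cases hal : (π A0).val = n - 1
      · have hNa : (pathG n).neighborFinset (π A0) = {t} := N_last' hal (by omega) (by omega)
        have hforce : ∀ g : Fin n, 1 ≤ g.val → g.val ≤ 3 →
            (π g).val = 0 ∨ (π g).val = n - 1 := by
          intro g hga hgb
          rcases hclass g hga hgb with hadjg | h | h
          · exfalso
            have hm : π g ∈ (pathG n).neighborFinset (π A0) :=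
              (SimpleGraph.mem_neighborFinset _ _ _).2 hadjg.symm
            rw [hNa, Finset.mem_singleton] at hm
            have hg : g = π.symm t := by rw [← hm, Equiv.symm_apply_apply]
            have := congrArg Fin.val hg
            omega
          exacts [Or.inl h, Or.inr h]
        have h1 := hforce g1 (by omega) (by omega)
        have h2 := hforce g2 (by omega) (by omega)
        have h3 := hforce g3 (by omega) (by omega)
        omega
      · -- Alice interior
        obtain ⟨t', hNa, ht'v, htt'⟩ :
            ∃ t' : Fin n, (pathG n).neighborFinset (π A0) = {t, t'} ∧
              (t'.val + 1 = (π A0).val ∨ t'.val = (π A0).val + 1) ∧ t ≠ t' := by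
          rcases hadjv.2 with hd | hd
          · obtain ⟨t', ht'⟩ := exists_seat (n := n) ((π A0).val - 1) (by omega)
            refine ⟨t', ?_, Or.inl (by omega), seat_ne (by omega)⟩
            rw [Finset.pair_comm]
            exact N_mid' (by omega) (by omega) (by omega) (by omega)
          · obtain ⟨t', ht'⟩ := exists_seat (n := n) ((π A0).val + 1) (by omega)
            exact ⟨t', N_mid' (by omega) (by omega) (by omega) (by omega),
              Or.inr (by omega), seat_ne (by omega)⟩
        have hforce : ∀ g : Fin n, 1 ≤ g.val → g.val ≤ 3 →
            (π g).val = t'.val ∨ (π g).val = 0 ∨ (π g).val = n - 1 := by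
          intro g hga hgb
          rcases hclass g hga hgb with hadjg | h | h
          · left
            have hm : π g ∈ (pathG n).neighborFinset (π A0) :=
              (SimpleGraph.mem_neighborFinset _ _ _).2 hadjg.symm
            rw [hNa, Finset.mem_insert, Finset.mem_singleton] at hm
            rcases hm with hm | hm
            · exfalso
              have hg : g = π.symm t := by rw [← hm, Equiv.symm_apply_apply]
              have := congrArg Fin.val hg
              omega
            · exact congrArg Fin.val hm
          exacts [Or.inr (Or.inl h), Or.inr (Or.inr h)]
        have h1 := hforce g1 (by omega) (by omega)
        have h2 := hforce g2 (by omega) (by omega)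
        have h3 := hforce g3 (by omega) (by omega)
        exact residualSelect hn π hA0 (by omega) (by omega) hNa htt' hF
          hg1 hg2 hg3 h1 h2 h3 d12 d13 d23

lemma master (hn : 12 ≤ n) (π : Fin n ≃ Fin n) :
    ∃ x y, blocking (pathG n) (pf n) π x y := by
  obtain ⟨A0, hA0⟩ := exists_seat (n := n) 0 (by omega)
  have halt := (π A0).isLt
  by_cases hfr : ∃ t : Fin n, (pathG n).Adj (π A0) t ∧ 4 ≤ (π.symm t).val
  · obtain ⟨t, h1', h2'⟩ := hfr
    exact case1 hn π hA0 h1' h2'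
  · push_neg at hfr
    have hbob : ∀ t : Fin n, (pathG n).Adj (π A0) t →
        1 ≤ (π.symm t).val ∧ (π.symm t).val ≤ 3 := by
      intro t ht
      have h4 := hfr t ht
      have h0 : (π.symm t).val ≠ 0 := occ_ne_zero hA0 (Ne.symm ht.ne)
      omega
    by_cases ha0 : (π A0).val = 0
    · obtain ⟨s1, hs1⟩ := exists_seat (n := n) 1 (by omega)
      have hadj : (pathG n).Adj (π A0) s1 := path_adj.2 ⟨by omega, Or.inl (by omega)⟩
      exact step2_end0 hn π hA0 ha0 hs1 (hbob s1 hadj).1 (hbob s1 hadj).2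
    by_cases hal : (π A0).val = n - 1
    · have hA0' : ((π.trans Fin.revPerm) A0).val = 0 := by
        show (Fin.rev (π A0)).val = 0
        rw [Fin.val_rev]
        omega
      obtain ⟨s1, hs1⟩ := exists_seat (n := n) 1 (by omega)
      have hrev1 : (π.trans Fin.revPerm).symm s1 = π.symm (Fin.rev s1) :=
        trans_rev_symm π s1
      have hrevval : (Fin.rev s1).val = n - 2 := by rw [Fin.val_rev]; omega
      have hadjrev : (pathG n).Adj (π A0) (Fin.rev s1) :=
        path_adj.2 ⟨by omega, Or.inr (by omega)⟩
      obtain ⟨x, y, hbl⟩ := step2_end0 hn (π.trans Fin.revPerm) hA0 hA0' hs1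
        (by rw [hrev1]; exact (hbob _ hadjrev).1)
        (by rw [hrev1]; exact (hbob _ hadjrev).2)
      exact ⟨x, y, blocking_rev π hbl⟩
    · obtain ⟨l, hlv⟩ := exists_seat (n := n) ((π A0).val - 1) (by omega)
      obtain ⟨r, hrv⟩ := exists_seat (n := n) ((π A0).val + 1) (by omega)
      have hadjl : (pathG n).Adj (π A0) l := path_adj.2 ⟨by omega, Or.inr (by omega)⟩
      have hadjr : (pathG n).Adj (π A0) r := path_adj.2 ⟨by omega, Or.inl (by omega)⟩
      exact step2_int hn π hA0 (by omega) (by omega) (by omega) (by omega)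
        (hbob l hadjl).1 (hbob l hadjl).2 (hbob r hadjr).1 (hbob r hadjr).2

end driver
def cls (n : ℕ) (i : Fin n) : Fin 3 :=
  if i.val = 0 then 0 else if i.val ≤ 3 then 1 else 2

def qm : Fin 3 → Fin 3 → ℝ := fun x y =>
  if x = 0 then (if y = 2 then 1 else 0)
  else if x = 1 then (if y = 0 then 1 else 0)
  else (if y = 0 then 0 else if y = 1 then 3 else 1)

section finals
variable {n : ℕ}

lemma cls_eq_0 {i : Fin n} (h : i.val = 0) : cls n i = 0 := by
  rw [cls, if_pos h]

lemma cls_eq_1 {i : Fin n} (h1 : 1 ≤ i.val) (h2 : i.val ≤ 3) : cls n i = 1 := by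
  rw [cls, if_neg (by omega), if_pos h2]

lemma cls_eq_2 {i : Fin n} (h : 4 ≤ i.val) : cls n i = 2 := by
  rw [cls, if_neg (by omega), if_neg (by omega)]

lemma pf_eq_q (a b : Fin n) : pf n a b = qm (cls n a) (cls n b) := by
  rcases (by omega : a.val = 0 ∨ (1 ≤ a.val ∧ a.val ≤ 3) ∨ 4 ≤ a.val) with ha | ha | ha <;>
    rcases (by omega : b.val = 0 ∨ (1 ≤ b.val ∧ b.val ≤ 3) ∨ 4 ≤ b.val) with hb | hb | hb
  · rw [pf_A_nF ha (by omega), cls_eq_0 ha, cls_eq_0 hb]; simp [qm]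
  · rw [pf_A_nF ha (by omega), cls_eq_0 ha, cls_eq_1 hb.1 hb.2]; simp [qm]
  · rw [pf_A_F ha hb, cls_eq_0 ha, cls_eq_2 hb]; simp [qm]
  · rw [pf_B_A ha.1 ha.2 hb, cls_eq_1 ha.1 ha.2, cls_eq_0 hb]; simp [qm]
  · rw [pf_B_nA ha.1 ha.2 (by omega), cls_eq_1 ha.1 ha.2, cls_eq_1 hb.1 hb.2]
    simp [qm]
  · rw [pf_B_nA ha.1 ha.2 (by omega), cls_eq_1 ha.1 ha.2, cls_eq_2 hb]; simp [qm]
  · rw [pf_F_A ha hb, cls_eq_2 ha, cls_eq_0 hb]; simp [qm]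
  · rw [pf_F_B ha hb.1 hb.2, cls_eq_2 ha, cls_eq_1 hb.1 hb.2]; simp [qm]
  · rw [pf_F_F ha hb, cls_eq_2 ha, cls_eq_2 hb]; simp [qm]

end finals

/-- for every `n ≥ 12` there is a three-class three-valued non-negative
profile on `n` agents with no stable arrangement on the path. -/
theorem unstable_three_class_three_valued_path (n : ℕ) (hn : 12 ≤ n) :
    ∃ p : Fin n → Fin n → ℝ,
      hasClasses 3 p ∧ kValued 3 p ∧ (∀ a b : Fin n, a ≠ b → 0 ≤ p a b) ∧
      ∀ π : Fin n ≃ Fin n, ¬ stable (pathG n) p π := by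
  refine ⟨pf n, ⟨cls n, qm, fun a b _ => pf_eq_q a b⟩, ⟨{0, 1, 3}, ?_, ?_⟩,
    fun a b _ => pf_nonneg a b, ?_⟩
  · calc ({0, 1, 3} : Finset ℝ).card ≤ ({1, 3} : Finset ℝ).card + 1 :=
        Finset.card_insert_le _ _
      _ ≤ (({3} : Finset ℝ).card + 1) + 1 :=
        Nat.add_le_add_right (Finset.card_insert_le _ _) 1
      _ = 3 := by rw [Finset.card_singleton]
  · intro a b _
    rw [pf]
    split_ifs <;> simp
  · intro π hst
    obtain ⟨x, y, hb⟩ := master hn π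
    exact hst x y hb
end

section
/- For every n ≥ 3, there exists a three-class two-valued preference profile (using values 1 and −1) on n agents such that every arrangement on a path of length n is unstable. -/
open Finset

lemma utility_formula {n : ℕ} (p : Fin n → Fin n → ℝ) (π : Fin n ≃ Fin n) (a : Fin n) :
    utility (pathG n) p π a =
      (if h : (π a).val + 1 < n then p a (π.symm ⟨(π a).val + 1, h⟩) else 0) +
      (if 0 < (π a).val then
        p a (π.symm ⟨(π a).val - 1, Nat.lt_of_le_of_lt (Nat.sub_le _ _) (π a).isLt⟩) else 0) := by
  unfold utility
  by_cases hu : (π a).val + 1 < n <;> by_cases hd : 0 < (π a).val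
  · rw [dif_pos hu, if_pos hd]
    have hset : (pathG n).neighborFinset (π a) =
        {(⟨(π a).val + 1, hu⟩ : Fin n),
         ⟨(π a).val - 1, Nat.lt_of_le_of_lt (Nat.sub_le _ _) (π a).isLt⟩} := by
      ext v
      rw [SimpleGraph.mem_neighborFinset]
      simp only [SimpleGraph.mem_neighborFinset, pathG, ne_eq, Finset.mem_insert,
        Finset.mem_singleton, Fin.ext_iff]
      have hv := v.isLt
      constructor
      · rintro ⟨h1, h2⟩; omega
      · rintro (h | h) <;> constructor <;> omega
    rw [hset, Finset.sum_pair (by simp [Fin.ext_iff]; omega)]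
  · rw [dif_pos hu, if_neg hd]
    have hset : (pathG n).neighborFinset (π a) = {(⟨(π a).val + 1, hu⟩ : Fin n)} := by
      ext v
      rw [SimpleGraph.mem_neighborFinset]
      simp only [SimpleGraph.mem_neighborFinset, pathG, ne_eq, Finset.mem_singleton, Fin.ext_iff]
      have hv := v.isLt
      constructor
      · rintro ⟨h1, h2⟩; omega
      · rintro h; constructor <;> omega
    rw [hset, Finset.sum_singleton]; ring
  · rw [dif_neg hu, if_pos hd]
    have hset : (pathG n).neighborFinset (π a) =
        {(⟨(π a).val - 1, Nat.lt_of_le_of_lt (Nat.sub_le _ _) (π a).isLt⟩ : Fin n)} := by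
      ext v
      rw [SimpleGraph.mem_neighborFinset]
      simp only [SimpleGraph.mem_neighborFinset, pathG, ne_eq, Finset.mem_singleton, Fin.ext_iff]
      have hv := v.isLt
      constructor
      · rintro ⟨h1, h2⟩; omega
      · rintro h; constructor <;> omega
    rw [hset, Finset.sum_singleton]; ring
  · rw [dif_neg hu, if_neg hd]
    have hset : (pathG n).neighborFinset (π a) = ∅ := by
      ext v
      rw [SimpleGraph.mem_neighborFinset]
      simp only [SimpleGraph.mem_neighborFinset, pathG, ne_eq, Finset.notMem_empty, iff_false]
      have hv := v.isLt
      rintro ⟨h1, h2⟩; omega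
    rw [hset, Finset.sum_empty]; ring

def q3 : Fin 3 → Fin 3 → ℝ := fun x y =>
  if (x = 0 ∧ y = 1) ∨ (x = 1 ∧ y = 2) ∨ (x = 2 ∧ y = 0) then -1 else 1

def cl (n : ℕ) : Fin n → Fin 3 := fun i => if i.val = 0 then 0 else if i.val = 1 then 1 else 2

def pref (n : ℕ) : Fin n → Fin n → ℝ := fun a b => q3 (cl n a) (cl n b)

lemma pref_vals {n : ℕ} (a b : Fin n) : pref n a b = 1 ∨ pref n a b = -1 := by
  unfold pref q3; split_ifs <;> simp

lemma pAF {n : ℕ} {a b : Fin n} (ha : a.val = 0) (hb : b.val ≠ 1) : pref n a b = 1 := by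
  unfold pref cl q3
  by_cases h : b.val = 0 <;> simp [ha, hb, h]

lemma pAB {n : ℕ} {a b : Fin n} (ha : a.val = 0) (hb : b.val = 1) : pref n a b = -1 := by
  unfold pref cl q3; simp [ha, hb]

lemma pBA {n : ℕ} {a b : Fin n} (ha : a.val = 1) (hb : b.val = 0) : pref n a b = 1 := by
  unfold pref cl q3; simp [ha, hb]

lemma pBF {n : ℕ} {a b : Fin n} (ha : a.val = 1) (hb0 : b.val ≠ 0) (hb1 : b.val ≠ 1) :
    pref n a b = -1 := by
  unfold pref cl q3; simp [ha, hb0, hb1]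

lemma pFA {n : ℕ} {a b : Fin n} (ha0 : a.val ≠ 0) (ha1 : a.val ≠ 1) (hb : b.val = 0) :
    pref n a b = -1 := by
  unfold pref cl q3; simp [ha0, ha1, hb]

lemma pFX {n : ℕ} {a b : Fin n} (ha0 : a.val ≠ 0) (ha1 : a.val ≠ 1) (hb : b.val ≠ 0) :
    pref n a b = 1 := by
  unfold pref cl q3
  by_cases h : b.val = 1 <;> simp [ha0, ha1, hb, h]

lemma occ_val_ne {k : ℕ} (σ : Fin k ≃ Fin k) {y z : Fin k} (h : y ≠ σ z) :
    (σ.symm y).val ≠ z.val := by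
  intro hh
  exact h (by rw [← σ.apply_symm_apply y, Fin.ext hh])

lemma occ_val_eq {k : ℕ} (σ : Fin k ≃ Fin k) {y z : Fin k} (h : y = σ z) :
    (σ.symm y).val = z.val := by rw [h, Equiv.symm_apply_apply]

lemma swapArr_app {A V : Type} [DecidableEq A] (π : A ≃ V) (u w z : A) :
    (swapArr π u w) z = π (Equiv.swap u w z) := rfl

lemma pref_no_stable (m : ℕ) (π : Fin (m+3) ≃ Fin (m+3)) :
    ¬ stable (pathG (m+3)) (pref (m+3)) π := by
  intro hst
  have hv0 : ((0 : Fin (m+3))).val = 0 := by simp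
  have hv1 : ((1 : Fin (m+3))).val = 1 := by simp
  have h01 : (0 : Fin (m+3)) ≠ 1 := by
    intro h; have := congrArg Fin.val h; rw [hv0, hv1] at this; omega
  have hab : (π 0).val ≠ (π 1).val := by
    intro h
    exact h01 (π.injective (Fin.ext h))
  have haN := (π 0).isLt
  have hbN := (π 1).isLt
  -- helpers
  have occ0 : ∀ (σ : Fin (m+3) ≃ Fin (m+3)) (y : Fin (m+3)), y ≠ σ 0 → (σ.symm y).val ≠ 0 := by
    intro σ y h; have := occ_val_ne σ h; rwa [hv0] at this
  have occ1 : ∀ (σ : Fin (m+3) ≃ Fin (m+3)) (y : Fin (m+3)), y ≠ σ 1 → (σ.symm y).val ≠ 1 := by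
    intro σ y h; have := occ_val_ne σ h; rwa [hv1] at this
  have oce0 : ∀ (σ : Fin (m+3) ≃ Fin (m+3)) (y : Fin (m+3)), y = σ 0 → (σ.symm y).val = 0 := by
    intro σ y h; have := occ_val_eq σ h; rwa [hv0] at this
  have oce1 : ∀ (σ : Fin (m+3) ≃ Fin (m+3)) (y : Fin (m+3)), y = σ 1 → (σ.symm y).val = 1 := by
    intro σ y h; have := occ_val_eq σ h; rwa [hv1] at this
  have mkNe : ∀ (σ : Fin (m+3) ≃ Fin (m+3)) (z : Fin (m+3)) (c : ℕ) (h : c < m+3),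
      c ≠ (σ z).val → (⟨c, h⟩ : Fin (m+3)) ≠ σ z :=
    fun σ z c h hc hh => hc (congrArg Fin.val hh)
  have mkEq : ∀ (σ : Fin (m+3) ≃ Fin (m+3)) (z : Fin (m+3)) (c : ℕ) (h : c < m+3),
      c = (σ z).val → (⟨c, h⟩ : Fin (m+3)) = σ z :=
    fun σ z c h hc => Fin.ext hc
  by_cases hadj : (π 0).val + 1 = (π 1).val ∨ (π 1).val + 1 = (π 0).val
  case neg =>
    -- Case A : Bob not adjacent to Alice
    push_neg at hadj
    obtain ⟨hadj1, hadj2⟩ := hadj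
    obtain ⟨x, hx⟩ : ∃ x : Fin (m+3), x.val = (π 0).val + 1 ∨ x.val + 1 = (π 0).val := by
      by_cases h : (π 0).val + 1 < m + 3
      · exact ⟨⟨(π 0).val + 1, h⟩, Or.inl rfl⟩
      · exact ⟨⟨(π 0).val - 1, by omega⟩, Or.inr (by
          show (π 0).val - 1 + 1 = (π 0).val; omega)⟩
    have hxN := x.isLt
    have hxA : x ≠ π 0 := by intro h; have := congrArg Fin.val h; omega
    have hxB : x ≠ π 1 := by intro h; have := congrArg Fin.val h; omega
    have hfA : (π.symm x).val ≠ 0 := occ0 π x hxA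
    have hfB : (π.symm x).val ≠ 1 := occ1 π x hxB
    have hπf : π (π.symm x) = x := π.apply_symm_apply x
    set f := π.symm x with hfdef
    have h1f : (1 : Fin (m+3)) ≠ f := by
      intro h; exact hfB (by rw [← h, hv1])
    have h0f : (0 : Fin (m+3)) ≠ f := by
      intro h; exact hfA (by rw [← h, hv0])
    -- swapArr facts for σ = swapArr π 1 f
    have hσ1 : swapArr π 1 f 1 = x := by
      rw [swapArr_app, Equiv.swap_apply_left, hπf]
    have hσf : swapArr π 1 f f = π 1 := by
      rw [swapArr_app, Equiv.swap_apply_right]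
    have hσ0 : swapArr π 1 f 0 = π 0 := by
      rw [swapArr_app, Equiv.swap_apply_of_ne_of_ne h01 h0f]
    -- swapArr facts for σ' = swapArr π f 1
    have hτf : swapArr π f 1 f = π 1 := by
      rw [swapArr_app, Equiv.swap_apply_left]
    have hτ1 : swapArr π f 1 1 = x := by
      rw [swapArr_app, Equiv.swap_apply_right, hπf]
    have hτ0 : swapArr π f 1 0 = π 0 := by
      rw [swapArr_app, Equiv.swap_apply_of_ne_of_ne h0f h01]
    have hσ0v : (swapArr π 1 f 0).val = (π 0).val := congrArg Fin.val hσ0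
    have hτ0v : (swapArr π f 1 0).val = (π 0).val := congrArg Fin.val hτ0
    have hτ1v : (swapArr π f 1 1).val = x.val := congrArg Fin.val hτ1
    refine hst 1 f ⟨h1f, ?_, ?_⟩
    · -- Bob envies f
      show utility (pathG (m+3)) (pref (m+3)) π 1 <
        utility (pathG (m+3)) (pref (m+3)) (swapArr π 1 f) 1
      have hold : utility (pathG (m+3)) (pref (m+3)) π 1 ≤ -1 := by
        rw [utility_formula]
        by_cases hu : (π 1).val + 1 < m+3 <;> by_cases hd : 0 < (π 1).val
        · rw [dif_pos hu, if_pos hd,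
            pBF hv1 (occ0 π _ (mkNe π 0 _ _ (by omega))) (occ1 π _ (mkNe π 1 _ _ (by omega))),
            pBF hv1 (occ0 π _ (mkNe π 0 _ _ (by omega))) (occ1 π _ (mkNe π 1 _ _ (by omega)))]
          norm_num
        · rw [dif_pos hu, if_neg hd,
            pBF hv1 (occ0 π _ (mkNe π 0 _ _ (by omega))) (occ1 π _ (mkNe π 1 _ _ (by omega)))]
          norm_num
        · rw [dif_neg hu, if_pos hd,
            pBF hv1 (occ0 π _ (mkNe π 0 _ _ (by omega))) (occ1 π _ (mkNe π 1 _ _ (by omega)))]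
          norm_num
        · omega
      have hnew : (0:ℝ) ≤ utility (pathG (m+3)) (pref (m+3)) (swapArr π 1 f) 1 := by
        rw [utility_formula]
        simp only [hσ1]
        rcases hx with hx | hx
        · -- x.val = a + 1 : Alice is at seat x.val - 1
          rw [if_pos (show 0 < x.val by omega),
            pBA hv1 (oce0 _ _ (mkEq _ 0 _ _ (by omega)))]
          split_ifs with h
          · rcases pref_vals (n := m+3) 1 ((swapArr π 1 f).symm ⟨x.val + 1, h⟩) with hv | hv <;>
              rw [hv] <;> norm_num
          · norm_num
        · -- x.val + 1 = a : Alice is at seat x.val + 1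
          rw [dif_pos (show x.val + 1 < m+3 by omega),
            pBA hv1 (oce0 _ _ (mkEq _ 0 _ _ (by omega)))]
          split_ifs with h
          · rcases pref_vals (n := m+3) 1
              ((swapArr π 1 f).symm ⟨x.val - 1,
                Nat.lt_of_le_of_lt (Nat.sub_le _ _) (Fin.isLt _)⟩) with hv | hv <;>
              rw [hv] <;> norm_num
          · norm_num
      linarith
    · -- f envies Bob
      show utility (pathG (m+3)) (pref (m+3)) π f <
        utility (pathG (m+3)) (pref (m+3)) (swapArr π f 1) f
      have hold : utility (pathG (m+3)) (pref (m+3)) π f ≤ 0 := by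
        rw [utility_formula]
        simp only [hπf]
        rcases hx with hx | hx
        · rw [if_pos (show 0 < x.val by omega),
            pFA hfA hfB (oce0 π _ (mkEq π 0 _ _ (by omega)))]
          split_ifs with h
          · rw [pFX hfA hfB (occ0 π _ (mkNe π 0 _ _ (by omega)))]; norm_num
          · norm_num
        · rw [dif_pos (show x.val + 1 < m+3 by omega),
            pFA hfA hfB (oce0 π _ (mkEq π 0 _ _ (by omega)))]
          split_ifs with h
          · rw [pFX hfA hfB (occ0 π _ (mkNe π 0 _ _ (by omega)))]; norm_num
          · norm_num
      have hnew : (1:ℝ) ≤ utility (pathG (m+3)) (pref (m+3)) (swapArr π f 1) f := by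
        rw [utility_formula]
        simp only [hτf]
        by_cases hu : (π 1).val + 1 < m+3 <;> by_cases hd : 0 < (π 1).val
        · rw [dif_pos hu, if_pos hd,
            pFX hfA hfB (occ0 _ _ (mkNe _ 0 _ _ (by omega))),
            pFX hfA hfB (occ0 _ _ (mkNe _ 0 _ _ (by omega)))]
          norm_num
        · rw [dif_pos hu, if_neg hd,
            pFX hfA hfB (occ0 _ _ (mkNe _ 0 _ _ (by omega)))]
          norm_num
        · rw [dif_neg hu, if_pos hd,
            pFX hfA hfB (occ0 _ _ (mkNe _ 0 _ _ (by omega)))]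
          norm_num
        · omega
      linarith
  case pos =>
    -- Case B : Bob adjacent to Alice
    by_cases hend : (π 0).val = 0 ∨ (π 0).val + 1 = m + 3
    · -- B1 : Alice at an endpoint ; blocking pair (Alice, Bob)
      have hpos : ((π 0).val = 0 ∧ (π 1).val = 1) ∨
          ((π 0).val = m+2 ∧ (π 1).val = m+1) := by
        rcases hend with h | h <;> rcases hadj with h2 | h2 <;> omega
      have hσ0 : swapArr π 0 1 0 = π 1 := by
        rw [swapArr_app, Equiv.swap_apply_left]
      have hσ1 : swapArr π 0 1 1 = π 0 := by
        rw [swapArr_app, Equiv.swap_apply_right]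
      have hσ1v : (swapArr π 0 1 1).val = (π 0).val := congrArg Fin.val hσ1
      have hτ1 : swapArr π 1 0 1 = π 0 := by
        rw [swapArr_app, Equiv.swap_apply_left]
      have hτ0 : swapArr π 1 0 0 = π 1 := by
        rw [swapArr_app, Equiv.swap_apply_right]
      have hτ0v : (swapArr π 1 0 0).val = (π 1).val := congrArg Fin.val hτ0
      refine hst 0 1 ⟨h01, ?_, ?_⟩
      · show utility (pathG (m+3)) (pref (m+3)) π 0 <
          utility (pathG (m+3)) (pref (m+3)) (swapArr π 0 1) 0
        have hold : utility (pathG (m+3)) (pref (m+3)) π 0 ≤ -1 := by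
          rw [utility_formula]
          rcases hpos with ⟨h1, h2⟩ | ⟨h1, h2⟩
          · rw [dif_pos (by omega), if_neg (by omega),
              pAB hv0 (oce1 π _ (mkEq π 1 _ _ (by omega)))]
            norm_num
          · rw [dif_neg (by omega), if_pos (by omega),
              pAB hv0 (oce1 π _ (mkEq π 1 _ _ (by omega)))]
            norm_num
        have hnew : (0:ℝ) ≤ utility (pathG (m+3)) (pref (m+3)) (swapArr π 0 1) 0 := by
          rw [utility_formula]
          simp only [hσ0]
          rcases hpos with ⟨h1, h2⟩ | ⟨h1, h2⟩
          · rw [dif_pos (by omega), if_pos (by omega),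
              pAF hv0 (occ1 _ _ (mkNe _ 1 _ _ (by omega))),
              pAB hv0 (oce1 _ _ (mkEq _ 1 _ _ (by omega)))]
            norm_num
          · rw [dif_pos (by omega), if_pos (by omega),
              pAB hv0 (oce1 _ _ (mkEq _ 1 _ _ (by omega))),
              pAF hv0 (occ1 _ _ (mkNe _ 1 _ _ (by omega)))]
            norm_num
        linarith
      · show utility (pathG (m+3)) (pref (m+3)) π 1 <
          utility (pathG (m+3)) (pref (m+3)) (swapArr π 1 0) 1
        have hold : utility (pathG (m+3)) (pref (m+3)) π 1 ≤ 0 := by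
          rw [utility_formula]
          rcases hpos with ⟨h1, h2⟩ | ⟨h1, h2⟩
          · rw [dif_pos (by omega), if_pos (by omega),
              pBF hv1 (occ0 π _ (mkNe π 0 _ _ (by omega))) (occ1 π _ (mkNe π 1 _ _ (by omega))),
              pBA hv1 (oce0 π _ (mkEq π 0 _ _ (by omega)))]
            norm_num
          · rw [dif_pos (by omega), if_pos (by omega),
              pBA hv1 (oce0 π _ (mkEq π 0 _ _ (by omega))),
              pBF hv1 (occ0 π _ (mkNe π 0 _ _ (by omega))) (occ1 π _ (mkNe π 1 _ _ (by omega)))]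
            norm_num
        have hnew : (1:ℝ) ≤ utility (pathG (m+3)) (pref (m+3)) (swapArr π 1 0) 1 := by
          rw [utility_formula]
          simp only [hτ1]
          rcases hpos with ⟨h1, h2⟩ | ⟨h1, h2⟩
          · rw [dif_pos (by omega), if_neg (by omega),
              pBA hv1 (oce0 _ _ (mkEq _ 0 _ _ (by omega)))]
            norm_num
          · rw [dif_neg (by omega), if_pos (by omega),
              pBA hv1 (oce0 _ _ (mkEq _ 0 _ _ (by omega)))]
            norm_num
        linarith
    · -- B2 : Alice interior ; blocking pair (Alice, occupant of a far endpoint)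
      push_neg at hend
      obtain ⟨hend1, hend2⟩ := hend
      have ha1 : 0 < (π 0).val := by omega
      have ha2 : (π 0).val + 1 < m + 3 := by omega
      obtain ⟨e, he1, heb, hea, hebp, hebm⟩ :
          ∃ e : Fin (m+3), (e.val = 0 ∨ e.val = m+2) ∧ e.val ≠ (π 1).val ∧
            e.val ≠ (π 0).val ∧ e.val + 1 ≠ (π 1).val ∧ (π 1).val + 1 ≠ e.val := by
        rcases le_or_gt (π 1).val 1 with h | h
        · refine ⟨⟨m+2, by omega⟩, ?_, ?_, ?_, ?_, ?_⟩
          · exact Or.inr rfl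
          · show m + 2 ≠ (π 1).val; omega
          · show m + 2 ≠ (π 0).val; omega
          · show m + 2 + 1 ≠ (π 1).val; omega
          · show (π 1).val + 1 ≠ m + 2; omega
        · refine ⟨⟨0, by omega⟩, ?_, ?_, ?_, ?_, ?_⟩
          · exact Or.inl rfl
          · show (0:ℕ) ≠ (π 1).val; omega
          · show (0:ℕ) ≠ (π 0).val; omega
          · show 0 + 1 ≠ (π 1).val; omega
          · show (π 1).val + 1 ≠ 0; omega
      have heN := e.isLt
      have heA : e ≠ π 0 := fun hh => hea (congrArg Fin.val hh)
      have heB : e ≠ π 1 := fun hh => heb (congrArg Fin.val hh)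
      have hfA : (π.symm e).val ≠ 0 := occ0 π e heA
      have hfB : (π.symm e).val ≠ 1 := occ1 π e heB
      have hπf : π (π.symm e) = e := π.apply_symm_apply e
      set f := π.symm e with hfdef
      have h0f : (0 : Fin (m+3)) ≠ f := by
        intro h; exact hfA (by rw [← h, hv0])
      have h1f : (1 : Fin (m+3)) ≠ f := by
        intro h; exact hfB (by rw [← h, hv1])
      have hσ0 : swapArr π 0 f 0 = e := by
        rw [swapArr_app, Equiv.swap_apply_left, hπf]
      have hσf : swapArr π 0 f f = π 0 := by
        rw [swapArr_app, Equiv.swap_apply_right]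
      have hσ1 : swapArr π 0 f 1 = π 1 := by
        rw [swapArr_app, Equiv.swap_apply_of_ne_of_ne h01.symm h1f]
      have hσ1v : (swapArr π 0 f 1).val = (π 1).val := congrArg Fin.val hσ1
      have hτf : swapArr π f 0 f = π 0 := by
        rw [swapArr_app, Equiv.swap_apply_left]
      have hτ0 : swapArr π f 0 0 = e := by
        rw [swapArr_app, Equiv.swap_apply_right, hπf]
      have hτ1 : swapArr π f 0 1 = π 1 := by
        rw [swapArr_app, Equiv.swap_apply_of_ne_of_ne h1f h01.symm]
      have hτ0v : (swapArr π f 0 0).val = e.val := congrArg Fin.val hτ0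
      have hτ1v : (swapArr π f 0 1).val = (π 1).val := congrArg Fin.val hτ1
      have occ1ne0 : ∀ (σ : Fin (m+3) ≃ Fin (m+3)) (y : Fin (m+3)),
          y = σ 1 → (σ.symm y).val ≠ 0 := by
        intro σ y h; rw [oce1 σ y h]; omega
      refine hst 0 f ⟨h0f, ?_, ?_⟩
      · show utility (pathG (m+3)) (pref (m+3)) π 0 <
          utility (pathG (m+3)) (pref (m+3)) (swapArr π 0 f) 0
        have hold : utility (pathG (m+3)) (pref (m+3)) π 0 ≤ 0 := by
          rw [utility_formula, dif_pos ha2, if_pos ha1]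
          rcases hadj with h2 | h2
          · rw [pAB hv0 (oce1 π _ (mkEq π 1 _ _ (by omega))),
              pAF hv0 (occ1 π _ (mkNe π 1 _ _ (by omega)))]
            norm_num
          · rw [pAF hv0 (occ1 π _ (mkNe π 1 _ _ (by omega))),
              pAB hv0 (oce1 π _ (mkEq π 1 _ _ (by omega)))]
            norm_num
        have hnew : (1:ℝ) ≤ utility (pathG (m+3)) (pref (m+3)) (swapArr π 0 f) 0 := by
          rw [utility_formula]
          simp only [hσ0]
          rcases he1 with h2 | h2
          · rw [dif_pos (by omega), if_neg (by omega),
              pAF hv0 (occ1 _ _ (mkNe _ 1 _ _ (by omega)))]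
            norm_num
          · rw [dif_neg (by omega), if_pos (by omega),
              pAF hv0 (occ1 _ _ (mkNe _ 1 _ _ (by omega)))]
            norm_num
        linarith
      · show utility (pathG (m+3)) (pref (m+3)) π f <
          utility (pathG (m+3)) (pref (m+3)) (swapArr π f 0) f
        rcases he1 with h2 | h2
        · -- e = 0
          by_cases hE : e.val + 1 = (π 0).val
          · -- e adjacent to Alice's seat
            rcases hadj with h3 | h3
            · have hold : utility (pathG (m+3)) (pref (m+3)) π f = -1 := by
                rw [utility_formula]
                simp only [hπf]
                rw [dif_pos (by omega), if_neg (by omega),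
                  pFA hfA hfB (oce0 π _ (mkEq π 0 _ _ (by omega)))]
                norm_num
              have hnew : utility (pathG (m+3)) (pref (m+3)) (swapArr π f 0) f = 0 := by
                rw [utility_formula]
                simp only [hτf]
                rw [dif_pos ha2, if_pos ha1,
                  pFX hfA hfB (occ1ne0 _ _ (mkEq _ 1 _ _ (by omega))),
                  pFA hfA hfB (oce0 _ _ (mkEq _ 0 _ _ (by omega)))]
                norm_num
              rw [hold, hnew]; norm_num
            · omega
          · have hold : utility (pathG (m+3)) (pref (m+3)) π f = 1 := by
              rw [utility_formula]
              simp only [hπf]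
              rw [dif_pos (by omega), if_neg (by omega),
                pFX hfA hfB (occ0 π _ (mkNe π 0 _ _ (by omega)))]
              norm_num
            have hnew : utility (pathG (m+3)) (pref (m+3)) (swapArr π f 0) f = 2 := by
              rw [utility_formula]
              simp only [hτf]
              rcases hadj with h3 | h3
              · rw [dif_pos ha2, if_pos ha1,
                  pFX hfA hfB (occ1ne0 _ _ (mkEq _ 1 _ _ (by omega))),
                  pFX hfA hfB (occ0 _ _ (mkNe _ 0 _ _ (by omega)))]
                norm_num
              · rw [dif_pos ha2, if_pos ha1,
                  pFX hfA hfB (occ0 _ _ (mkNe _ 0 _ _ (by omega))),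
                  pFX hfA hfB (occ1ne0 _ _ (mkEq _ 1 _ _ (by omega)))]
                norm_num
            rw [hold, hnew]; norm_num
        · -- e = m + 2
          by_cases hE : (π 0).val + 1 = e.val
          · rcases hadj with h3 | h3
            · omega
            · have hold : utility (pathG (m+3)) (pref (m+3)) π f = -1 := by
                rw [utility_formula]
                simp only [hπf]
                rw [dif_neg (by omega), if_pos (by omega),
                  pFA hfA hfB (oce0 π _ (mkEq π 0 _ _ (by omega)))]
                norm_num
              have hnew : utility (pathG (m+3)) (pref (m+3)) (swapArr π f 0) f = 0 := by
                rw [utility_formula]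
                simp only [hτf]
                rw [dif_pos ha2, if_pos ha1,
                  pFA hfA hfB (oce0 _ _ (mkEq _ 0 _ _ (by omega))),
                  pFX hfA hfB (occ1ne0 _ _ (mkEq _ 1 _ _ (by omega)))]
                norm_num
              rw [hold, hnew]; norm_num
          · have hold : utility (pathG (m+3)) (pref (m+3)) π f = 1 := by
              rw [utility_formula]
              simp only [hπf]
              rw [dif_neg (by omega), if_pos (by omega),
                pFX hfA hfB (occ0 π _ (mkNe π 0 _ _ (by omega)))]
              norm_num
            have hnew : utility (pathG (m+3)) (pref (m+3)) (swapArr π f 0) f = 2 := by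
              rw [utility_formula]
              simp only [hτf]
              rcases hadj with h3 | h3
              · rw [dif_pos ha2, if_pos ha1,
                  pFX hfA hfB (occ1ne0 _ _ (mkEq _ 1 _ _ (by omega))),
                  pFX hfA hfB (occ0 _ _ (mkNe _ 0 _ _ (by omega)))]
                norm_num
              · rw [dif_pos ha2, if_pos ha1,
                  pFX hfA hfB (occ0 _ _ (mkNe _ 0 _ _ (by omega))),
                  pFX hfA hfB (occ1ne0 _ _ (mkEq _ 1 _ _ (by omega)))]
                norm_num
            rw [hold, hnew]; norm_num

/-- for every `n ≥ 3` there is a three-class profile with values in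
`{1, -1}` on `n` agents with no stable arrangement on the path. -/
theorem unstable_three_class_two_valued_path (n : ℕ) (hn : 3 ≤ n) :
    ∃ p : Fin n → Fin n → ℝ,
      hasClasses 3 p ∧ (∀ a b : Fin n, a ≠ b → p a b = 1 ∨ p a b = -1) ∧
      ∀ π : Fin n ≃ Fin n, ¬ stable (pathG n) p π := by
  obtain ⟨m, rfl⟩ : ∃ m, n = m + 3 := ⟨n - 3, by omega⟩
  exact ⟨pref (m+3), ⟨cl (m+3), q3, fun a b _ => rfl⟩, fun a b _ => pref_vals a b,
    fun π => pref_no_stable m π⟩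
end

section
/- Consider binary preferences on a path. If (a,b) is a blocking pair of agents sitting exactly two seats apart in arrangement π, and π' is π with their seats swapped, then Φ(π') > Φ(π), where Φ(π) = (W(π), S(π)) ordered lexicographically. -/
open Finset

/-- The type of the edge between seats `i` and `i+1` on the path under arrangement
`π`: `0` = mutual dislike, `1` = only the left agent likes the right one,
`2` = only the right likes the left, `3` = mutual like (for binary preferences). -/
noncomputable def edgeType {n : ℕ} (p : Fin n → Fin n → ℝ) (π : Fin n ≃ Fin n)
    (i : ℕ) : ℕ :=
  if h : i + 1 < n then
    (if p (π.symm ⟨i, Nat.lt_of_succ_lt h⟩) (π.symm ⟨i + 1, h⟩) = 1 then 1 else 0) +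
      2 * (if p (π.symm ⟨i + 1, h⟩) (π.symm ⟨i, Nat.lt_of_succ_lt h⟩) = 1 then 1 else 0)
  else 0

/-- Strict lexicographic order on sequences. -/
def lexLt (s t : ℕ → ℕ) : Prop :=
  ∃ m : ℕ, (∀ j < m, s j = t j) ∧ s m < t m

/-- `Φ(π) < Φ(π')` where `Φ(π) = (W(π), S(π))` is ordered lexicographically:
first by social welfare, then by the edge-type sequence. -/
noncomputable def PhiLt {n : ℕ} (p : Fin n → Fin n → ℝ) (π π' : Fin n ≃ Fin n) : Prop :=
  welfare (pathG n) p π < welfare (pathG n) p π' ∨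
    (welfare (pathG n) p π = welfare (pathG n) p π' ∧
      lexLt (edgeType p π) (edgeType p π'))

lemma sum_nbhd {n : ℕ} (v : Fin n) (f : Fin n → ℝ) :
    ∑ w ∈ (pathG n).neighborFinset v, f w =
      (if h : (v : ℕ) + 1 < n then f ⟨(v : ℕ) + 1, h⟩ else 0) +
      (if h : 0 < (v : ℕ) then f ⟨(v : ℕ) - 1, Nat.lt_of_le_of_lt (Nat.sub_le _ _) v.2⟩ else 0) := by
  rw [SimpleGraph.neighborFinset_eq_filter]
  by_cases h1 : (v : ℕ) + 1 < n <;> by_cases h2 : 0 < (v : ℕ)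
  · have he : Finset.univ.filter ((pathG n).Adj v) =
        {⟨(v : ℕ) + 1, h1⟩, ⟨(v : ℕ) - 1, Nat.lt_of_le_of_lt (Nat.sub_le _ _) v.2⟩} := by
      ext w
      simp only [Finset.mem_filter, Finset.mem_univ, true_and, pathG, ne_eq,
        Finset.mem_insert, Finset.mem_singleton, Fin.ext_iff]
      omega
    rw [he, Finset.sum_pair (by simp only [ne_eq, Fin.ext_iff]; omega)]
    simp [h1, h2]
  · have he : Finset.univ.filter ((pathG n).Adj v) = {⟨(v : ℕ) + 1, h1⟩} := by
      ext w
      simp only [Finset.mem_filter, Finset.mem_univ, true_and, pathG, ne_eq,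
        Finset.mem_singleton, Fin.ext_iff]
      omega
    rw [he, Finset.sum_singleton]
    simp [h1, h2]
  · have he : Finset.univ.filter ((pathG n).Adj v) =
        {⟨(v : ℕ) - 1, Nat.lt_of_le_of_lt (Nat.sub_le _ _) v.2⟩} := by
      ext w
      simp only [Finset.mem_filter, Finset.mem_univ, true_and, pathG, ne_eq,
        Finset.mem_singleton, Fin.ext_iff]
      omega
    rw [he, Finset.sum_singleton]
    simp [h1, h2]
  · have he : Finset.univ.filter ((pathG n).Adj v) = ∅ := by
      ext w
      simp only [Finset.mem_filter, Finset.mem_univ, true_and, pathG, ne_eq,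
        Finset.notMem_empty, iff_false, not_and, Fin.ext_iff]
      omega
    rw [he, Finset.sum_empty]
    simp [h1, h2]

noncomputable def eV {n : ℕ} (p : Fin n → Fin n → ℝ) (π : Fin n ≃ Fin n) (j : ℕ) : ℝ :=
  if h : j + 1 < n then
    p (π.symm ⟨j, Nat.lt_of_succ_lt h⟩) (π.symm ⟨j + 1, h⟩) +
    p (π.symm ⟨j + 1, h⟩) (π.symm ⟨j, Nat.lt_of_succ_lt h⟩)
  else 0

lemma welfare_eq {n : ℕ} (p : Fin n → Fin n → ℝ) (π : Fin n ≃ Fin n) :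
    welfare (pathG n) p π = ∑ j ∈ Finset.range n, eV p π j := by
  classical
  set A : ℕ → ℝ := fun j =>
    if h : j + 1 < n then p (π.symm ⟨j, Nat.lt_of_succ_lt h⟩) (π.symm ⟨j + 1, h⟩) else 0
    with hA
  set A' : ℕ → ℝ := fun j =>
    if h : j + 1 < n then p (π.symm ⟨j + 1, h⟩) (π.symm ⟨j, Nat.lt_of_succ_lt h⟩) else 0
    with hA'
  set B : ℕ → ℝ := fun j =>
    if h : 0 < j ∧ j < n then
      p (π.symm ⟨j, h.2⟩) (π.symm ⟨j - 1, Nat.lt_of_le_of_lt (Nat.sub_le _ _) h.2⟩) else 0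
    with hB
  have key : welfare (pathG n) p π
      = ∑ u : Fin n, ∑ w ∈ (pathG n).neighborFinset u, p (π.symm u) (π.symm w) := by
    unfold welfare utility
    rw [← Equiv.sum_comp π (fun u : Fin n =>
      ∑ w ∈ (pathG n).neighborFinset u, p (π.symm u) (π.symm w))]
    exact Finset.sum_congr rfl fun a _ => by rw [Equiv.symm_apply_apply]
  have step1 : welfare (pathG n) p π = ∑ u : Fin n, (A (u : ℕ) + B (u : ℕ)) := by
    rw [key]
    refine Finset.sum_congr rfl fun u _ => ?_
    rw [sum_nbhd]
    rw [hA, hB]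
    congr 1
    beta_reduce
    by_cases h2 : 0 < ((u : ℕ))
    · rw [dif_pos h2, dif_pos (⟨h2, u.2⟩ : 0 < (u : ℕ) ∧ (u : ℕ) < n)]
    · rw [dif_neg h2, dif_neg (fun hc : 0 < (u : ℕ) ∧ (u : ℕ) < n => h2 hc.1)]
  have step2 : ∑ u : Fin n, (A (u : ℕ) + B (u : ℕ))
      = (∑ j ∈ Finset.range n, A j) + ∑ j ∈ Finset.range n, B j := by
    rw [← Finset.sum_add_distrib]
    exact Fin.sum_univ_eq_sum_range (fun j => A j + B j) n
  have step3 : ∑ j ∈ Finset.range n, B j = ∑ j ∈ Finset.range n, A' j := by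
    cases n with
    | zero => simp
    | succ m =>
      rw [Finset.sum_range_succ' B m, Finset.sum_range_succ A' m]
      have hB0 : B 0 = 0 := by simp [hB]
      have hA'm : A' m = 0 := by simp [hA']
      rw [hB0, hA'm, add_zero, add_zero]
      refine Finset.sum_congr rfl fun j hj => ?_
      rw [Finset.mem_range] at hj
      have h1 : 0 < j + 1 ∧ j + 1 < m + 1 := ⟨Nat.succ_pos _, by omega⟩
      have h2 : j + 1 < m + 1 := by omega
      simp only [hB, hA', h1, h2, dif_pos]
      congr 1
  rw [step1, step2, step3, ← Finset.sum_add_distrib]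
  refine Finset.sum_congr rfl fun j _ => ?_
  by_cases h : j + 1 < n
  · simp only [hA, hA', eV, h, dif_pos]
  · simp only [hA, hA', eV, h, dif_neg, not_false_iff, add_zero]
lemma hswap_symm {n : ℕ} (π : Fin n ≃ Fin n) (a b : Fin n) (w : Fin n) :
    (swapArr π a b).symm w = Equiv.swap a b (π.symm w) := by
  simp [swapArr]

set_option maxHeartbeats 1000000 in
lemma main_lemma {n : ℕ} (p : Fin n → Fin n → ℝ)
    (hbin : ∀ a b : Fin n, a ≠ b → p a b = 0 ∨ p a b = 1)
    (π : Fin n ≃ Fin n) (a b : Fin n)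
    (hblock : blocking (pathG n) p π a b)
    (h2 : (π a : ℕ) + 2 = (π b : ℕ)) :
    PhiLt p π (swapArr π a b) := by
  classical
  have hge : ∀ u v : Fin n, u ≠ v → 0 ≤ p u v := by
    intro u v h; rcases hbin u v h with h' | h' <;> rw [h'] <;> norm_num
  have hagen : ∀ (j1 j2 : ℕ) (hj1 : j1 < n) (hj2 : j2 < n), j1 ≠ j2 →
      π.symm ⟨j1, hj1⟩ ≠ π.symm ⟨j2, hj2⟩ := by
    intro j1 j2 hj1 hj2 hne heq
    exact hne (by simpa [Fin.ext_iff] using π.symm.injective heq)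
  have hi2 : (π a : ℕ) + 2 < n := by have := (π b).isLt; omega
  have hn0 : 0 < n := by omega
  have hsi1 : (π a : ℕ) + 1 < n := by omega
  have pfx : (π a : ℕ) - 1 < n := by omega
  have pfy : ((π a : ℕ) + 3) % n < n := Nat.mod_lt _ hn0
  obtain ⟨c₀, hc₀⟩ : ∃ z, π.symm ⟨(π a : ℕ) + 1, hsi1⟩ = z := ⟨_, rfl⟩
  obtain ⟨x₀, hx₀⟩ : ∃ z, π.symm ⟨(π a : ℕ) - 1, pfx⟩ = z := ⟨_, rfl⟩
  obtain ⟨y₀, hy₀⟩ : ∃ z, π.symm ⟨((π a : ℕ) + 3) % n, pfy⟩ = z := ⟨_, rfl⟩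
  set π' := swapArr π a b with hπ'def
  have hfixI : ∀ w : Fin n, (w : ℕ) ≠ (π a : ℕ) → (w : ℕ) ≠ (π a : ℕ) + 2 →
      π'.symm w = π.symm w := by
    intro w hw1 hw2
    rw [hπ'def, hswap_symm]
    apply Equiv.swap_apply_of_ne_of_ne
    · intro heq
      exact hw1 (by simpa using congrArg Fin.val (congrArg π heq))
    · intro heq
      apply hw2
      have := congrArg Fin.val (congrArg π heq)
      simpa [h2] using this
  -- utility formulas
  have HuA : utility (pathG n) p π a
      = p a c₀ + (if 0 < (π a : ℕ) then p a x₀ else 0) := by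
    rw [utility, sum_nbhd, dif_pos hsi1, dite_eq_ite]
    rw [hc₀, hx₀]
  have hπ'a : π' a = π b := by simp [hπ'def, swapArr]
  have hπ'b : π' b = π a := by simp [hπ'def, swapArr]
  have HuA' : utility (pathG n) p π' a
      = (if (π a : ℕ) + 3 < n then p a y₀ else 0) + p a c₀ := by
    rw [utility, hπ'a, sum_nbhd]
    congr 1
    · by_cases hn : (π a : ℕ) + 3 < n
      · rw [dif_pos (show (π b : ℕ) + 1 < n by omega), if_pos hn]
        rw [hfixI ⟨(π b : ℕ) + 1, by omega⟩ (show (π b : ℕ) + 1 ≠ (π a : ℕ) by omega)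
          (show (π b : ℕ) + 1 ≠ (π a : ℕ) + 2 by omega)]
        rw [show (⟨(π b : ℕ) + 1, by omega⟩ : Fin n) = ⟨((π a : ℕ) + 3) % n, pfy⟩ from
          Fin.ext (by simp [Nat.mod_eq_of_lt hn]; omega), hy₀]
      · rw [dif_neg (show ¬((π b : ℕ) + 1 < n) by omega), if_neg hn]
    · rw [dif_pos (show 0 < (π b : ℕ) by omega)]
      rw [hfixI ⟨(π b : ℕ) - 1, by omega⟩ (show (π b : ℕ) - 1 ≠ (π a : ℕ) by omega)
        (show (π b : ℕ) - 1 ≠ (π a : ℕ) + 2 by omega)]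
      rw [show (⟨(π b : ℕ) - 1, by omega⟩ : Fin n) = ⟨(π a : ℕ) + 1, hsi1⟩ from
        Fin.ext (by simp; omega), hc₀]
  have HuB : utility (pathG n) p π b
      = (if (π a : ℕ) + 3 < n then p b y₀ else 0) + p b c₀ := by
    rw [utility, sum_nbhd]
    congr 1
    · by_cases hn : (π a : ℕ) + 3 < n
      · rw [dif_pos (show (π b : ℕ) + 1 < n by omega), if_pos hn]
        rw [show (⟨(π b : ℕ) + 1, by omega⟩ : Fin n) = ⟨((π a : ℕ) + 3) % n, pfy⟩ from
          Fin.ext (by simp [Nat.mod_eq_of_lt hn]; omega), hy₀]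
      · rw [dif_neg (show ¬((π b : ℕ) + 1 < n) by omega), if_neg hn]
    · rw [dif_pos (show 0 < (π b : ℕ) by omega)]
      rw [show (⟨(π b : ℕ) - 1, by omega⟩ : Fin n) = ⟨(π a : ℕ) + 1, hsi1⟩ from
        Fin.ext (by simp; omega), hc₀]
  have HuB' : utility (pathG n) p π' b
      = p b c₀ + (if 0 < (π a : ℕ) then p b x₀ else 0) := by
    rw [utility, hπ'b, sum_nbhd]
    congr 1
    · rw [dif_pos hsi1]
      rw [hfixI ⟨(π a : ℕ) + 1, hsi1⟩ (show (π a : ℕ) + 1 ≠ (π a : ℕ) by omega)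
        (show (π a : ℕ) + 1 ≠ (π a : ℕ) + 2 by omega), hc₀]
    · by_cases hi : 0 < (π a : ℕ)
      · rw [dif_pos hi, if_pos hi]
        rw [hfixI ⟨(π a : ℕ) - 1, pfx⟩ (show (π a : ℕ) - 1 ≠ (π a : ℕ) by omega)
          (show (π a : ℕ) - 1 ≠ (π a : ℕ) + 2 by omega), hx₀]
      · rw [dif_neg hi, if_neg hi]
  -- extract the envy inequalities
  have hswBA : swapArr π b a = π' := by rw [hπ'def, swapArr, swapArr, Equiv.swap_comm]
  have envA0 : utility (pathG n) p π a < utility (pathG n) p π' a := hblock.2.1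
  have envB0 : utility (pathG n) p π b < utility (pathG n) p π' b := by
    have h := hblock.2.2
    rw [envies, hswBA] at h
    exact h
  have envA : (if 0 < (π a : ℕ) then p a x₀ else 0)
      < (if (π a : ℕ) + 3 < n then p a y₀ else 0) := by
    rw [HuA, HuA'] at envA0; linarith
  have envB : (if (π a : ℕ) + 3 < n then p b y₀ else 0)
      < (if 0 < (π a : ℕ) then p b x₀ else 0) := by
    rw [HuB, HuB'] at envB0; linarith
  have hn3 : (π a : ℕ) + 3 < n := by
    by_contra hcon
    rw [if_neg hcon] at envA
    have h0le : (0:ℝ) ≤ (if 0 < (π a : ℕ) then p a x₀ else 0) := by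
      split_ifs with h
      · refine hge a x₀ fun heq => ?_
        have hinj := π.symm.injective
          ((Equiv.symm_apply_apply π a).trans (heq.trans hx₀.symm))
        have := congrArg Fin.val hinj
        simp only [Fin.val_mk] at this
        omega
      · exact le_refl 0
    linarith
  have hi0 : 0 < (π a : ℕ) := by
    by_contra hcon
    rw [if_neg hcon] at envB
    have h0le : (0:ℝ) ≤ p b y₀ := by
      refine hge b y₀ fun heq => ?_
      have hinj := π.symm.injective
        ((Equiv.symm_apply_apply π b).trans (heq.trans hy₀.symm))
      have := congrArg Fin.val hinj
      simp only [Fin.val_mk] at this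
      rw [Nat.mod_eq_of_lt hn3] at this
      omega
    rw [if_pos hn3] at envB
    linarith
  rw [if_pos hi0, if_pos hn3] at envA envB
  -- phase 2
  obtain ⟨k, hk⟩ : ∃ k, (π a : ℕ) = k + 1 := ⟨(π a : ℕ) - 1, by omega⟩
  have h0 : k < n := by omega
  have h1 : k + 1 < n := by omega
  have h2' : k + 2 < n := by omega
  have h3 : k + 3 < n := by omega
  have h4 : k + 4 < n := by omega
  have hπa' : π a = ⟨k + 1, h1⟩ := Fin.ext hk
  have hπb' : π b = ⟨k + 3, h3⟩ := Fin.ext (show (π b : ℕ) = k + 3 by omega)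
  have hsa : π.symm ⟨k + 1, h1⟩ = a := by rw [← hπa', Equiv.symm_apply_apply]
  have hsb : π.symm ⟨k + 3, h3⟩ = b := by rw [← hπb', Equiv.symm_apply_apply]
  obtain ⟨x, hxe⟩ : ∃ z, π.symm ⟨k, h0⟩ = z := ⟨_, rfl⟩
  obtain ⟨c, hce⟩ : ∃ z, π.symm ⟨k + 2, h2'⟩ = z := ⟨_, rfl⟩
  obtain ⟨y, hye⟩ : ∃ z, π.symm ⟨k + 4, h4⟩ = z := ⟨_, rfl⟩
  have hxx : x₀ = x := by
    rw [← hxe, ← hx₀]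
    exact congrArg π.symm (Fin.ext (show (π a : ℕ) - 1 = k by omega))
  have hcc : c₀ = c := by
    rw [← hce, ← hc₀]
    exact congrArg π.symm (Fin.ext (show (π a : ℕ) + 1 = k + 2 by omega))
  have hyy : y₀ = y := by
    rw [← hye, ← hy₀]
    exact congrArg π.symm (Fin.ext
      (show ((π a : ℕ) + 3) % n = k + 4 by rw [Nat.mod_eq_of_lt hn3]; omega))
  rw [hxx, hyy] at envA envB
  -- distinctness
  have hax : a ≠ x := by rw [← hsa, ← hxe]; exact hagen _ _ _ _ (by omega)
  have hay : a ≠ y := by rw [← hsa, ← hye]; exact hagen _ _ _ _ (by omega)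
  have hbx : b ≠ x := by rw [← hsb, ← hxe]; exact hagen _ _ _ _ (by omega)
  have hby : b ≠ y := by rw [← hsb, ← hye]; exact hagen _ _ _ _ (by omega)
  have hxa : x ≠ a := by rw [← hsa, ← hxe]; exact hagen _ _ _ _ (by omega)
  have hxb : x ≠ b := by rw [← hsb, ← hxe]; exact hagen _ _ _ _ (by omega)
  have hya : y ≠ a := by rw [← hsa, ← hye]; exact hagen _ _ _ _ (by omega)
  have hyb : y ≠ b := by rw [← hsb, ← hye]; exact hagen _ _ _ _ (by omega)
  -- binary values
  have hvals1 : p a x = 0 ∧ p a y = 1 := by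
    rcases hbin a x hax with h | h <;> rcases hbin a y hay with h' | h' <;>
      exact ⟨by linarith, by linarith⟩
  have hvals2 : p b y = 0 ∧ p b x = 1 := by
    rcases hbin b y hby with h | h <;> rcases hbin b x hbx with h' | h' <;>
      exact ⟨by linarith, by linarith⟩
  -- fixed seats after the swap (k-form)
  have hfix : ∀ w : Fin n, (w : ℕ) ≠ k + 1 → (w : ℕ) ≠ k + 3 →
      π'.symm w = π.symm w := by
    intro w hw1 hw3
    exact hfixI w (by omega) (by omega)
  have hX' : π'.symm ⟨k, h0⟩ = x := by
    rw [hfix ⟨k, h0⟩ (show k ≠ k + 1 by omega) (show k ≠ k + 3 by omega)]; exact hxe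
  have hC' : π'.symm ⟨k + 2, h2'⟩ = c := by
    rw [hfix ⟨k + 2, h2'⟩ (show k + 2 ≠ k + 1 by omega) (show k + 2 ≠ k + 3 by omega)]
    exact hce
  have hY' : π'.symm ⟨k + 4, h4⟩ = y := by
    rw [hfix ⟨k + 4, h4⟩ (show k + 4 ≠ k + 1 by omega) (show k + 4 ≠ k + 3 by omega)]
    exact hye
  have hB1 : π'.symm ⟨k + 1, h1⟩ = b := by
    rw [hπ'def, hswap_symm, hsa, Equiv.swap_apply_left]
  have hA3 : π'.symm ⟨k + 3, h3⟩ = a := by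
    rw [hπ'def, hswap_symm, hsb, Equiv.swap_apply_right]
  -- edge values
  have e0 : eV p π k = p x a + p a x := by
    simp only [eV]; rw [dif_pos h1, hxe, hsa]
  have e0' : eV p π' k = p x b + p b x := by
    simp only [eV]; rw [dif_pos h1, hX', hB1]
  have e1 : eV p π (k + 1) = p a c + p c a := by
    simp only [eV]; rw [dif_pos h2', hsa, hce]
  have e1' : eV p π' (k + 1) = p b c + p c b := by
    simp only [eV]; rw [dif_pos h2', hB1, hC']
  have e2 : eV p π (k + 2) = p c b + p b c := by
    simp only [eV]; rw [dif_pos h3, hce, hsb]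
  have e2' : eV p π' (k + 2) = p c a + p a c := by
    simp only [eV]; rw [dif_pos h3, hC', hA3]
  have e3 : eV p π (k + 3) = p b y + p y b := by
    simp only [eV]; rw [dif_pos h4, hsb, hye]
  have e3' : eV p π' (k + 3) = p a y + p y a := by
    simp only [eV]; rw [dif_pos h4, hA3, hY']
  -- welfare difference
  have hW : welfare (pathG n) p π' - welfare (pathG n) p π
      = (p x b + p b x - (p x a + p a x)) + (p a y + p y a - (p b y + p y b)) := by
    rw [welfare_eq, welfare_eq, ← Finset.sum_sub_distrib]
    have hsub : ({k, k + 1, k + 2, k + 3} : Finset ℕ) ⊆ Finset.range n := by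
      intro j hj
      simp only [Finset.mem_insert, Finset.mem_singleton] at hj
      rw [Finset.mem_range]; omega
    have hz : ∀ j ∈ Finset.range n, j ∉ ({k, k + 1, k + 2, k + 3} : Finset ℕ) →
        eV p π' j - eV p π j = 0 := by
      intro j _ hjs
      simp only [Finset.mem_insert, Finset.mem_singleton] at hjs
      push_neg at hjs
      simp only [eV]
      by_cases hc : j + 1 < n
      · rw [dif_pos hc, dif_pos hc,
          hfix ⟨j, Nat.lt_of_succ_lt hc⟩ (show j ≠ k + 1 by omega) (show j ≠ k + 3 by omega),
          hfix ⟨j + 1, hc⟩ (show j + 1 ≠ k + 1 by omega) (show j + 1 ≠ k + 3 by omega),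
          sub_self]
      · rw [dif_neg hc, dif_neg hc, sub_self]
    rw [← Finset.sum_subset hsub hz]
    rw [Finset.sum_insert (by simp only [Finset.mem_insert, Finset.mem_singleton]; omega),
      Finset.sum_insert (by simp only [Finset.mem_insert, Finset.mem_singleton]; omega),
      Finset.sum_insert (by simp only [Finset.mem_singleton]; omega),
      Finset.sum_singleton]
    rw [e0, e0', e1, e1', e2, e2', e3, e3']
    ring
  rw [hvals1.1, hvals1.2, hvals2.1, hvals2.2] at hW
  -- case analysis on the remaining four values
  have hcase : welfare (pathG n) p π < welfare (pathG n) p π' ∨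
      (p x a = 1 ∧ p x b = 0 ∧ p y a = 0 ∧ p y b = 1) := by
    rcases hbin x a hxa with v1 | v1 <;> rcases hbin x b hxb with v2 | v2 <;>
      rcases hbin y a hya with v3 | v3 <;> rcases hbin y b hyb with v4 | v4 <;>
      first
        | (left; linarith)
        | (right; exact ⟨v1, v2, v3, v4⟩)
  rw [PhiLt]
  rcases hcase with hlt | ⟨v1, v2, v3, v4⟩
  · left; exact hlt
  · right
    constructor
    · linarith
    · refine ⟨k, ?_, ?_⟩
      · intro j hj
        simp only [edgeType]
        by_cases hc : j + 1 < n
        · rw [dif_pos hc, dif_pos hc,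
            hfix ⟨j, Nat.lt_of_succ_lt hc⟩ (show j ≠ k + 1 by omega)
              (show j ≠ k + 3 by omega),
            hfix ⟨j + 1, hc⟩ (show j + 1 ≠ k + 1 by omega) (show j + 1 ≠ k + 3 by omega)]
        · rw [dif_neg hc, dif_neg hc]
      · have etk : edgeType p π k = 1 := by
          simp only [edgeType]
          rw [dif_pos h1, hxe, hsa, v1, hvals1.1]
          norm_num
        have etk' : edgeType p π' k = 2 := by
          simp only [edgeType]
          rw [dif_pos h1, hX', hB1, v2, hvals2.2]
          norm_num
        rw [etk, etk']
        norm_num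

/-- for binary preferences on a path, swapping a blocking pair seated
exactly two seats apart strictly increases the potential `Φ = (W, S)`. -/
theorem distance_two_swap_increases_potential (n : ℕ) (p : Fin n → Fin n → ℝ)
    (hbin : ∀ a b : Fin n, a ≠ b → p a b = 0 ∨ p a b = 1)
    (π : Fin n ≃ Fin n) (a b : Fin n)
    (hblock : blocking (pathG n) p π a b)
    (hdist : Nat.dist ((π a : ℕ)) ((π b : ℕ)) = 2) :
    PhiLt p π (swapArr π a b) := by
  have hcases : (π a : ℕ) + 2 = (π b : ℕ) ∨ (π b : ℕ) + 2 = (π a : ℕ) := by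
    simp [Nat.dist] at hdist; omega
  rcases hcases with h | h
  · exact main_lemma p hbin π a b hblock h
  · have hblock' : blocking (pathG n) p π b a := ⟨hblock.1.symm, hblock.2.2, hblock.2.1⟩
    have := main_lemma p hbin π b a hblock' h
    rwa [show swapArr π b a = swapArr π a b by
      rw [swapArr, swapArr, Equiv.swap_comm]] at this
end

section
/- Let P_path be a one-component binary preference profile on ℓ agents with no stable arrangement on a path. Then the blockwise-diagonal profile P consisting of k = 2ℓ+1 disjoint copies of P_path admits a stable arrangement on a cycle of length ℓ(2ℓ+1). -/
open Finset

namespace S17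

def triS : ℕ → ℕ
  | 0 => 0
  | (j+1) => triS j + (j+1)

lemma two_triS (j : ℕ) : 2 * triS j = j * (j + 1) := by
  induction j with
  | zero => rfl
  | succ j ih => simp only [triS]; ring_nf; ring_nf at ih; omega

lemma cop (ℓ : ℕ) : Nat.Coprime (triS ℓ) (2*ℓ+1) := by
  have hd : triS ℓ ∣ ℓ * (ℓ+1) := ⟨2, by have := two_triS ℓ; omega⟩
  refine Nat.Coprime.coprime_dvd_left hd (Nat.Coprime.mul ?_ ?_)
  · simp [Nat.Coprime]
  · have h : (2*ℓ+1) = ℓ + (ℓ+1)*1 := by ring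
    rw [h, Nat.coprime_add_mul_left_right]
    have : Nat.Coprime (1+ℓ) ℓ := Nat.coprime_add_self_left.2 (Nat.coprime_one_left ℓ)
    simpa [Nat.add_comm] using this

variable (ℓ : ℕ)

def cseq (t : ℕ) : ZMod (2*ℓ+1) := ((t / ℓ) * triS ℓ + triS (t % ℓ) : ℕ)

def nxt {n : ℕ} (t : Fin n) : Fin n := ⟨((t:ℕ)+1) % n, Nat.mod_lt _ t.pos⟩

lemma natCast_inj {a b : ℕ} (ha : a < 2*ℓ+1) (hb : b < 2*ℓ+1)
    (h : (a : ZMod (2*ℓ+1)) = b) : a = b := by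
  rw [← ZMod.val_cast_of_lt ha, ← ZMod.val_cast_of_lt hb, h]

lemma hT_unit : IsUnit ((triS ℓ : ZMod (2*ℓ+1))) :=
  (ZMod.isUnit_iff_coprime _ _).2 (cop ℓ)

lemma div_eval (hℓ : 0 < ℓ) (q j : ℕ) (hj : j < ℓ) : (q*ℓ+j) / ℓ = q := by
  rw [Nat.mul_comm, Nat.mul_add_div hℓ, Nat.div_eq_of_lt hj]; omega

lemma mod_eval (hℓ : 0 < ℓ) (q j : ℕ) (hj : j < ℓ) : (q*ℓ+j) % ℓ = j := by
  rw [Nat.mul_comm, Nat.mul_add_mod, Nat.mod_eq_of_lt hj]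

lemma cseq_eval (hℓ : 0 < ℓ) (q j : ℕ) (hj : j < ℓ) :
    cseq ℓ (q*ℓ+j) = ((q * triS ℓ + triS j : ℕ) : ZMod (2*ℓ+1)) := by
  unfold cseq; rw [div_eval ℓ hℓ q j hj, mod_eval ℓ hℓ q j hj]

lemma decomp (hℓ : 0 < ℓ) (t : Fin ((2*ℓ+1)*ℓ)) :
    ∃ q j, q < 2*ℓ+1 ∧ j < ℓ ∧ (t:ℕ) = q*ℓ+j := by
  refine ⟨(t:ℕ)/ℓ, (t:ℕ)%ℓ, ?_, Nat.mod_lt _ hℓ, ?_⟩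
  · exact Nat.div_lt_of_lt_mul (by rw [Nat.mul_comm ℓ (2*ℓ+1)]; exact t.isLt)
  · have h := (Nat.div_add_mod (t:ℕ) ℓ).symm
    rw [Nat.mul_comm ℓ ((t:ℕ)/ℓ)] at h
    exact h

lemma cseq_next (hℓ : 0 < ℓ) (t : Fin ((2*ℓ+1)*ℓ)) :
    cseq ℓ (nxt t : Fin _) = cseq ℓ t + ((t:ℕ) % ℓ + 1 : ℕ) := by
  obtain ⟨q, j, hq, hj, ht⟩ := decomp ℓ hℓ t
  have hmod : (t:ℕ) % ℓ = j := by rw [ht, mod_eval ℓ hℓ q j hj]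
  have hct : cseq ℓ (t:ℕ) = ((q * triS ℓ + triS j : ℕ) : ZMod (2*ℓ+1)) := by
    rw [ht, cseq_eval ℓ hℓ q j hj]
  have hnv : ((nxt t : Fin _) : ℕ) = ((q*ℓ+j)+1) % ((2*ℓ+1)*ℓ) := by
    show ((t:ℕ)+1) % _ = _
    rw [ht]
  rw [hmod, hct]
  by_cases h2 : j+1 < ℓ
  · have hlt : q*ℓ+j+1 < (2*ℓ+1)*ℓ := by
      calc q*ℓ+j+1 < q*ℓ+ℓ := by omega
        _ = (q+1)*ℓ := by ring
        _ ≤ (2*ℓ+1)*ℓ := Nat.mul_le_mul_right _ (by omega)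
    have hnv' : ((nxt t : Fin _) : ℕ) = q*ℓ+(j+1) := by
      rw [hnv, Nat.mod_eq_of_lt hlt]; ring
    rw [hnv', cseq_eval ℓ hℓ q (j+1) h2]
    show ((q * triS ℓ + (triS j + (j+1)) : ℕ) : ZMod (2*ℓ+1)) = _
    push_cast; ring
  · have hje : j + 1 = ℓ := by omega
    have hT : triS ℓ = triS j + (j+1) := by rw [← hje]; rfl
    by_cases h3 : q+1 < 2*ℓ+1
    · have hlt : (q+1)*ℓ+0 < (2*ℓ+1)*ℓ := by
        simpa using (Nat.mul_lt_mul_right hℓ).2 h3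
      have hnv' : ((nxt t : Fin _) : ℕ) = (q+1)*ℓ+0 := by
        have he : (q*ℓ+j)+1 = (q+1)*ℓ+0 := by rw [← hje]; ring
        rw [hnv, he, Nat.mod_eq_of_lt hlt]
      rw [hnv', cseq_eval ℓ hℓ (q+1) 0 hℓ]
      have : (q+1) * triS ℓ + triS 0 = q * triS ℓ + triS j + (j+1) := by
        simp only [triS]; rw [hT]; ring
      rw [this]; push_cast; ring
    · have hq1 : q + 1 = 2*ℓ+1 := by omega
      have hte : (q*ℓ+j)+1 = (2*ℓ+1)*ℓ := by
        have : (q*ℓ+j)+1 = (q+1)*ℓ := by rw [← hje]; ring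
        rw [this, hq1]
      have hnv' : ((nxt t : Fin _) : ℕ) = 0 := by rw [hnv, hte, Nat.mod_self]
      have h0 : cseq ℓ 0 = 0 := by
        have : (0:ℕ) = 0*ℓ+0 := by ring
        rw [this, cseq_eval ℓ hℓ 0 0 hℓ]; simp [triS]
      rw [hnv', h0]
      have key : q * triS ℓ + triS j + (j+1) = (2*ℓ+1) * triS ℓ := by
        calc q * triS ℓ + triS j + (j+1) = q * triS ℓ + (triS j + (j+1)) := by ring
          _ = q * triS ℓ + triS ℓ := by rw [← hT]
          _ = (q+1) * triS ℓ := by ring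
          _ = (2*ℓ+1) * triS ℓ := by rw [hq1]
      have keyc : ((q * triS ℓ + triS j : ℕ) : ZMod (2*ℓ+1)) + ((j+1 : ℕ) : ZMod (2*ℓ+1))
          = (((2*ℓ+1) * triS ℓ : ℕ) : ZMod (2*ℓ+1)) := by
        rw [← Nat.cast_add, key]
      rw [keyc, Nat.cast_mul, ZMod.natCast_self, zero_mul]

end S17

namespace S17X
open S17

variable (ℓ : ℕ)

lemma dbound (hℓ : 0 < ℓ) (t : Fin ((2*ℓ+1)*ℓ)) : (t:ℕ) % ℓ + 1 ≤ ℓ :=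
  Nat.mod_lt _ hℓ

lemma cseq_next_ne (hℓ : 0 < ℓ) (t : Fin ((2*ℓ+1)*ℓ)) :
    cseq ℓ (nxt t : Fin _) ≠ cseq ℓ t := by
  rw [cseq_next ℓ hℓ t]
  intro h
  have h0 : (((t:ℕ) % ℓ + 1 : ℕ) : ZMod (2*ℓ+1)) = ((0 : ℕ) : ZMod (2*ℓ+1)) := by
    push_cast at h ⊢
    linear_combination h
  have := natCast_inj ℓ (by have := dbound ℓ hℓ t; omega) (by omega) h0
  omega

lemma cseq_inj (hℓ : 0 < ℓ) (t w : Fin ((2*ℓ+1)*ℓ))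
    (h1 : cseq ℓ t = cseq ℓ w)
    (h2 : cseq ℓ (nxt t : Fin _) = cseq ℓ (nxt w : Fin _)) : t = w := by
  rw [cseq_next ℓ hℓ t, cseq_next ℓ hℓ w, h1] at h2
  have hd := add_left_cancel h2
  have hdn : (t:ℕ) % ℓ + 1 = (w:ℕ) % ℓ + 1 :=
    natCast_inj ℓ (by have := dbound ℓ hℓ t; omega) (by have := dbound ℓ hℓ w; omega) hd
  obtain ⟨q1, j1, hq1, hj1, ht1⟩ := decomp ℓ hℓ t
  obtain ⟨q2, j2, hq2, hj2, ht2⟩ := decomp ℓ hℓ w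
  have hj12 : j1 = j2 := by
    have e1 : (t:ℕ) % ℓ = j1 := by rw [ht1, mod_eval ℓ hℓ _ _ hj1]
    have e2 : (w:ℕ) % ℓ = j2 := by rw [ht2, mod_eval ℓ hℓ _ _ hj2]
    omega
  subst hj12
  have hc1 : cseq ℓ (t:ℕ) = ((q1 * triS ℓ + triS j1 : ℕ) : ZMod (2*ℓ+1)) := by
    rw [ht1, cseq_eval ℓ hℓ _ _ hj1]
  have hc2 : cseq ℓ (w:ℕ) = ((q2 * triS ℓ + triS j1 : ℕ) : ZMod (2*ℓ+1)) := by
    rw [ht2, cseq_eval ℓ hℓ _ _ hj1]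
  rw [hc1, hc2] at h1
  push_cast at h1
  have hmul : (q1 : ZMod (2*ℓ+1)) * (triS ℓ : ZMod (2*ℓ+1))
      = (q2 : ZMod (2*ℓ+1)) * (triS ℓ : ZMod (2*ℓ+1)) := by
    linear_combination h1
  have hq : (q1 : ZMod (2*ℓ+1)) = (q2 : ZMod (2*ℓ+1)) := by
    have hU := hT_unit ℓ
    exact hU.mul_left_cancel (by rw [mul_comm (triS ℓ : ZMod (2*ℓ+1)) _,
      mul_comm (triS ℓ : ZMod (2*ℓ+1)) _]; exact hmul)
  have := natCast_inj ℓ hq1 hq2 hq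
  exact Fin.ext (by rw [ht1, ht2, this])

lemma cseq_cross (hℓ : 0 < ℓ) (t w : Fin ((2*ℓ+1)*ℓ))
    (h1 : cseq ℓ t = cseq ℓ (nxt w : Fin _))
    (h2 : cseq ℓ (nxt t : Fin _) = cseq ℓ w) : False := by
  rw [cseq_next ℓ hℓ t, h1, cseq_next ℓ hℓ w] at h2
  have h0 : (((w:ℕ) % ℓ + 1 + ((t:ℕ) % ℓ + 1) : ℕ) : ZMod (2*ℓ+1))
      = ((0 : ℕ) : ZMod (2*ℓ+1)) := by
    push_cast at h2 ⊢
    linear_combination h2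
  have := natCast_inj ℓ
    (by have := dbound ℓ hℓ t; have := dbound ℓ hℓ w; omega) (by omega) h0
  omega

end S17X

namespace S17E
open S17 S17X

variable (ℓ : ℕ)

noncomputable def Tinv : ZMod (2*ℓ+1) := (((hT_unit ℓ).unit⁻¹ : (ZMod (2*ℓ+1))ˣ) : ZMod (2*ℓ+1))

lemma hTU : (triS ℓ : ZMod (2*ℓ+1)) * Tinv ℓ = 1 := by
  have h := (hT_unit ℓ).unit.mul_inv
  rwa [(hT_unit ℓ).unit_spec] at h

noncomputable def seatOf (v : Fin (2*ℓ+1)) (j : Fin ℓ) : ℕ :=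
  ((((v:ℕ) : ZMod (2*ℓ+1)) - (triS (j:ℕ) : ZMod (2*ℓ+1))) * Tinv ℓ).val * ℓ + (j:ℕ)

lemma seatOf_lt (v : Fin (2*ℓ+1)) (j : Fin ℓ) : seatOf ℓ v j < (2*ℓ+1)*ℓ := by
  unfold seatOf
  set R := ((((v:ℕ) : ZMod (2*ℓ+1)) - (triS (j:ℕ) : ZMod (2*ℓ+1))) * Tinv ℓ).val with hR
  have h1 : R < 2*ℓ+1 := ZMod.val_lt _
  have h2 : (j:ℕ) < ℓ := j.isLt
  calc R * ℓ + (j:ℕ) < R * ℓ + ℓ := Nat.add_lt_add_left h2 _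
    _ = (R + 1) * ℓ := by ring
    _ ≤ (2*ℓ+1) * ℓ := Nat.mul_le_mul_right _ (by omega)

noncomputable def eqv (hℓ : 0 < ℓ) : Fin ((2*ℓ+1)*ℓ) ≃ (Fin (2*ℓ+1) × Fin ℓ) where
  toFun t := (⟨(cseq ℓ t).val, ZMod.val_lt _⟩, ⟨(t:ℕ) % ℓ, Nat.mod_lt _ hℓ⟩)
  invFun vj := ⟨seatOf ℓ vj.1 vj.2, seatOf_lt ℓ vj.1 vj.2⟩
  left_inv := by
    intro t
    obtain ⟨q, j, hq, hj, ht⟩ := decomp ℓ hℓ t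
    have hmod : (t:ℕ) % ℓ = j := by rw [ht, mod_eval ℓ hℓ _ _ hj]
    have hc : cseq ℓ (t:ℕ) = ((q * triS ℓ + triS j : ℕ) : ZMod (2*ℓ+1)) := by
      rw [ht, cseq_eval ℓ hℓ _ _ hj]
    apply Fin.ext
    show seatOf ℓ ⟨(cseq ℓ t).val, _⟩ ⟨(t:ℕ) % ℓ, _⟩ = (t:ℕ)
    unfold seatOf
    dsimp only
    have hval : (((cseq ℓ (t:ℕ)).val : ℕ) : ZMod (2*ℓ+1)) = cseq ℓ (t:ℕ) := by
      rw [ZMod.natCast_val, ZMod.cast_id]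
    have hsub : (((cseq ℓ (t:ℕ)).val : ℕ) : ZMod (2*ℓ+1)) - (triS ((t:ℕ) % ℓ) : ZMod (2*ℓ+1))
        = (q : ZMod (2*ℓ+1)) * (triS ℓ : ZMod (2*ℓ+1)) := by
      rw [hval, hc, hmod]; push_cast; ring
    rw [hsub, mul_assoc, hTU, mul_one, ZMod.val_cast_of_lt hq, hmod, ht]
  right_inv := by
    intro vj
    obtain ⟨v, j⟩ := vj
    set R := ((((v:ℕ) : ZMod (2*ℓ+1)) - (triS (j:ℕ) : ZMod (2*ℓ+1))) * Tinv ℓ).val with hR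
    have hseat : seatOf ℓ v j = R * ℓ + (j:ℕ) := rfl
    have hmod : (R * ℓ + (j:ℕ)) % ℓ = (j:ℕ) := mod_eval ℓ hℓ _ _ j.isLt
    have hcs : cseq ℓ (R * ℓ + (j:ℕ)) = ((R * triS ℓ + triS (j:ℕ) : ℕ) : ZMod (2*ℓ+1)) :=
      cseq_eval ℓ hℓ _ _ j.isLt
    have hRv : ((R : ℕ) : ZMod (2*ℓ+1))
        = (((v:ℕ) : ZMod (2*ℓ+1)) - (triS (j:ℕ) : ZMod (2*ℓ+1))) * Tinv ℓ := by
      rw [hR, ZMod.natCast_val, ZMod.cast_id]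
    have hcv : cseq ℓ (R * ℓ + (j:ℕ)) = ((v:ℕ) : ZMod (2*ℓ+1)) := by
      rw [hcs]; push_cast
      rw [hRv]
      have : (((v:ℕ) : ZMod (2*ℓ+1)) - (triS (j:ℕ) : ZMod (2*ℓ+1))) * Tinv ℓ
          * (triS ℓ : ZMod (2*ℓ+1))
          = (((v:ℕ) : ZMod (2*ℓ+1)) - (triS (j:ℕ) : ZMod (2*ℓ+1)))
            * ((triS ℓ : ZMod (2*ℓ+1)) * Tinv ℓ) := by ring
      rw [this, hTU]; ring
    refine Prod.ext (Fin.ext ?_) (Fin.ext ?_)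
    · show (cseq ℓ ((seatOf ℓ v j : ℕ))).val = (v:ℕ)
      rw [hseat, hcv, ZMod.val_cast_of_lt v.isLt]
    · show ((seatOf ℓ v j : ℕ)) % ℓ = (j:ℕ)
      rw [hseat, hmod]

end S17E

namespace S17G
open S17 S17X S17E

lemma nxt_ne {n : ℕ} (hn : 2 ≤ n) (t : Fin n) : nxt t ≠ t := by
  intro h
  have hv : ((t:ℕ)+1) % n = (t:ℕ) := congrArg Fin.val h
  have htl : (t:ℕ) < n := t.isLt
  by_cases h1 : (t:ℕ)+1 < n
  · rw [Nat.mod_eq_of_lt h1] at hv; omega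
  · have h2 : (t:ℕ)+1 = n := by omega
    rw [h2, Nat.mod_self] at hv
    omega

lemma adj_iff {n : ℕ} (hn : 2 ≤ n) (s v : Fin n) :
    (cycleG n).Adj s v ↔ v = nxt s ∨ s = nxt v := by
  constructor
  · rintro ⟨hne, h | h⟩
    · left; exact (Fin.ext h).symm
    · right; exact (Fin.ext h).symm
  · rintro (h | h)
    · exact ⟨fun hh => nxt_ne hn s (h ▸ hh.symm), Or.inl (congrArg Fin.val h).symm⟩
    · exact ⟨fun hh => nxt_ne hn v (h ▸ hh), Or.inr (congrArg Fin.val h).symm⟩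

lemma cseq_of_adj_ne (ℓ : ℕ) (hℓ : 0 < ℓ) (s v : Fin ((2*ℓ+1)*ℓ))
    (h : (cycleG ((2*ℓ+1)*ℓ)).Adj s v) : cseq ℓ s ≠ cseq ℓ v := by
  have hn : 2 ≤ (2*ℓ+1)*ℓ := by have := Nat.mul_le_mul (show 2 ≤ 2*ℓ+1 by omega) hℓ; omega
  rcases (adj_iff hn s v).1 h with h1 | h1
  · rw [h1]; exact (cseq_next_ne ℓ hℓ s).symm
  · rw [h1]; exact cseq_next_ne ℓ hℓ v

theorem stable_cycle (ℓ : ℕ) (hℓ : 0 < ℓ) (Pp : Fin ℓ → Fin ℓ → ℝ) :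
    stable (cycleG ((2*ℓ+1)*ℓ))
      (fun x y : Fin (2*ℓ+1) × Fin ℓ => if x.1 = y.1 then Pp x.2 y.2 else 0)
      (eqv ℓ hℓ).symm := by
  set n := (2*ℓ+1)*ℓ with hn0
  have hn : 2 ≤ n := by have := Nat.mul_le_mul (show 2 ≤ 2*ℓ+1 by omega) hℓ; omega
  set p : (Fin (2*ℓ+1) × Fin ℓ) → (Fin (2*ℓ+1) × Fin ℓ) → ℝ :=
    fun x y => if x.1 = y.1 then Pp x.2 y.2 else 0 with hp
  set π := (eqv ℓ hℓ).symm with hπ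
  have hG : ∀ v : Fin n, ((eqv ℓ hℓ) v).1 = (⟨(cseq ℓ v).val, ZMod.val_lt _⟩ : Fin (2*ℓ+1)) :=
    fun v => rfl
  have hsymm : ∀ v : Fin n, π.symm v = (eqv ℓ hℓ) v := fun v => rfl
  -- copy of the agent sitting at seat v, as a cseq equation
  have hfst : ∀ a : Fin (2*ℓ+1) × Fin ℓ, ((a.1 : ℕ) : ZMod (2*ℓ+1)) = cseq ℓ (π a) := by
    intro a
    have h1 : (eqv ℓ hℓ) (π a) = a := (eqv ℓ hℓ).apply_symm_apply a
    have h2 : ((eqv ℓ hℓ) (π a)).1 = a.1 := by rw [h1]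
    rw [hG] at h2
    have h3 : (cseq ℓ (π a)).val = (a.1 : ℕ) := congrArg Fin.val h2
    rw [← h3, ZMod.natCast_val, ZMod.cast_id]
  have hseat : ∀ (a : Fin (2*ℓ+1) × Fin ℓ) (v : Fin n),
      a.1 = ((eqv ℓ hℓ) v).1 ↔ cseq ℓ (π a) = cseq ℓ v := by
    intro a v
    rw [hG]
    constructor
    · intro h
      have h3 : (a.1 : ℕ) = (cseq ℓ v).val := congrArg Fin.val h
      rw [← hfst a, h3, ZMod.natCast_val, ZMod.cast_id]
    · intro h
      apply Fin.ext
      show (a.1 : ℕ) = (cseq ℓ v).val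
      have := hfst a
      rw [h] at this
      rw [← this, ZMod.val_cast_of_lt (a.1.isLt)]
  have hutil : ∀ a, utility (cycleG n) p π a = 0 := by
    intro a
    unfold utility
    apply Finset.sum_eq_zero
    intro v hv
    rw [SimpleGraph.mem_neighborFinset] at hv
    have hne : ¬ (a.1 = (π.symm v).1) := by
      rw [hsymm v, hseat a v]
      intro h
      exact cseq_of_adj_ne ℓ hℓ (π a) v hv (by rw [h])
    simp only [hp]
    rw [if_neg hne]
  -- extraction from envy
  have key : ∀ a b, a ≠ b → envies (cycleG n) p π a b →
      ∃ v : Fin n, (cycleG n).Adj (π b) v ∧ v ≠ π a ∧ cseq ℓ v = cseq ℓ (π a) := by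
    intro a b hab he
    unfold envies at he
    rw [hutil a] at he
    have h1 : (swapArr π a b) a = π b := by
      simp [swapArr, Equiv.trans_apply, Equiv.swap_apply_left]
    have h2 : ∀ v, (swapArr π a b).symm v = Equiv.swap a b (π.symm v) := by
      intro v
      simp [swapArr, Equiv.symm_trans_apply, Equiv.symm_swap]
    unfold utility at he
    rw [h1] at he
    simp only [h2] at he
    have he' : ∑ v ∈ (cycleG n).neighborFinset (π b), (0:ℝ)
        < ∑ v ∈ (cycleG n).neighborFinset (π b), p a (Equiv.swap a b (π.symm v)) := by
      simpa using he
    obtain ⟨v, hv, hpos⟩ := Finset.exists_lt_of_sum_lt he'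
    rw [SimpleGraph.mem_neighborFinset] at hv
    have hxb : π.symm v ≠ b := by
      intro h
      have : v = π b := by rw [← (Equiv.symm_apply_eq π).1 h]
      exact (cycleG n).loopless.irrefl (π b) (this ▸ hv)
    by_cases hxa : π.symm v = a
    · exfalso
      have hvpa : v = π a := by rw [← (Equiv.symm_apply_eq π).1 hxa]
      rw [hxa, Equiv.swap_apply_left] at hpos
      have hcab : a.1 = b.1 := by
        by_contra hne
        simp only [hp] at hpos
        rw [if_neg hne] at hpos
        exact lt_irrefl _ hpos
      have := cseq_of_adj_ne ℓ hℓ (π b) v hv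
      rw [hvpa] at this
      apply this
      rw [← hfst b, ← hfst a, hcab]
    · have hsw : Equiv.swap a b (π.symm v) = π.symm v :=
        Equiv.swap_apply_of_ne_of_ne hxa hxb
      rw [hsw] at hpos
      have hfstv : a.1 = (π.symm v).1 := by
        by_contra hne
        simp only [hp] at hpos
        rw [if_neg hne] at hpos
        exact lt_irrefl _ hpos
      have hcv : cseq ℓ v = cseq ℓ (π a) := by
        rw [hsymm v] at hfstv
        exact ((hseat a v).1 hfstv).symm
      refine ⟨v, hv, ?_, hcv⟩
      intro h
      exact hxa (by rw [h, Equiv.symm_apply_apply])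
  rintro a b ⟨hab, hea, heb⟩
  obtain ⟨v, hvb, hvna, hcv⟩ := key a b hab hea
  obtain ⟨u, hua, hunb, hcu⟩ := key b a (Ne.symm hab) heb
  rcases (adj_iff hn (π b) v).1 hvb with h1 | h1 <;>
    rcases (adj_iff hn (π a) u).1 hua with h2 | h2
  · -- v = nxt (π b), u = nxt (π a)
    refine cseq_cross ℓ hℓ (π b) (π a) ?_ ?_
    · rw [← h2, hcu]
    · rw [← h1, hcv]
  · -- v = nxt (π b), π a = nxt u
    refine hunb ?_
    refine cseq_inj ℓ hℓ u (π b) hcu ?_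
    rw [← h2, ← h1, hcv]
  · -- π b = nxt v, u = nxt (π a)
    refine hvna (cseq_inj ℓ hℓ v (π a) hcv ?_)
    rw [← h1, ← h2, hcu]
  · -- π b = nxt v, π a = nxt u
    refine cseq_cross ℓ hℓ v u ?_ ?_
    · rw [← h2, hcv]
    · rw [← h1, hcu]

end S17G

/-- if `Pp` is a one-component binary profile on `ℓ` agents with no
stable arrangement on a path, then the blockwise-diagonal profile made of
`2ℓ + 1` disjoint copies of `Pp` admits a stable arrangement on a cycle of
`(2ℓ + 1)·ℓ` seats. -/
theorem blockwise_diagonal_cycle_stable (ℓ : ℕ) (Pp : Fin ℓ → Fin ℓ → ℝ)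
    (hbin : ∀ a b : Fin ℓ, a ≠ b → Pp a b = 0 ∨ Pp a b = 1)
    (hconn : (SimpleGraph.fromRel (fun a b : Fin ℓ => Pp a b ≠ 0)).Connected)
    (hunst : ∀ π : Fin ℓ ≃ Fin ℓ, ¬ stable (pathG ℓ) Pp π) :
    ∃ π : (Fin (2 * ℓ + 1) × Fin ℓ) ≃ Fin ((2 * ℓ + 1) * ℓ),
      stable (cycleG ((2 * ℓ + 1) * ℓ))
        (fun x y : Fin (2 * ℓ + 1) × Fin ℓ =>
          if x.1 = y.1 then Pp x.2 y.2 else 0) π := by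
  rcases Nat.eq_zero_or_pos ℓ with h0 | hℓ
  · subst h0
    exfalso
    refine hunst (Equiv.refl _) (fun a b hb => ?_)
    exact a.elim0
  · exact ⟨(S17E.eqv ℓ hℓ).symm, S17G.stable_cycle ℓ hℓ Pp⟩
end
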